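/- arXiv:2507.13026 — 9 statements merged into one kernel-verified Lean document; each statement's English description precedes it below -/
import Mathlib

section
/- Let H be a Hamiltonian path from 1 to n on {1,...,n}, and let i be such that the three consecutive segments (i,i+1), (i+1,i+2), (i+2,i+3) have total depth 3 with respect to H. Then the pair {i+1, i+2} is an edge of H. -/
/-- A Hamiltonian path on the vertex set `{1,…,n}` from vertex `1` to vertex `n`,
given as the sequence `p 0, p 1, …, p (n-1)` of visited vertices. -/
def IsHamPath (n : ℕ) (p : ℕ → ℕ) : Prop :=
  2 ≤ n ∧ p 0 = 1 ∧ p (n - 1) = n ∧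
  (∀ i, i < n → 1 ≤ p i ∧ p i ≤ n) ∧
  (∀ i j, i < n → j < n → p i = p j → i = j)

/-- The depth of the segment between `s` and `s+1` with respect to the path `p`:
the number of edges `{j,k}` (with `j < k`) of `p` such that `j ≤ s < k`. -/
def segDepth (n : ℕ) (p : ℕ → ℕ) (s : ℕ) : ℕ :=
  ((Finset.range (n - 1)).filter
    (fun i => min (p i) (p (i + 1)) ≤ s ∧ s < max (p i) (p (i + 1)))).card

/-- `{a, b}` is an (unordered) edge of the path `p`. -/
def IsEdgeOf (n : ℕ) (p : ℕ → ℕ) (a b : ℕ) : Prop :=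
  ∃ i, i < n - 1 ∧ ((p i = a ∧ p (i + 1) = b) ∨ (p i = b ∧ p (i + 1) = a))

/-- Two paths are edge-disjoint: they share no unordered edge. -/
def PathsEdgeDisjoint (n : ℕ) (p q : ℕ → ℕ) : Prop :=
  ∀ i, i < n - 1 → ¬ IsEdgeOf n q (p i) (p (i + 1))

/-- The cost of a path, where the edge `{j,k}` costs `|j - k|`. -/
def pathCost (n : ℕ) (p : ℕ → ℕ) : ℕ :=
  ∑ i ∈ Finset.range (n - 1), (max (p i) (p (i + 1)) - min (p i) (p (i + 1)))

/-- The vertex `v` is covered by the path `p`: some edge `{j,k}` of `p` has `j < v < k`. -/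
def CoversVertex (n : ℕ) (p : ℕ → ℕ) (v : ℕ) : Prop :=
  ∃ i, i < n - 1 ∧ min (p i) (p (i + 1)) < v ∧ v < max (p i) (p (i + 1))

lemma depth_pos (n : ℕ) (p : ℕ → ℕ) (hp : IsHamPath n p) (s : ℕ)
    (hs1 : 1 ≤ s) (hs2 : s + 1 ≤ n) : 1 ≤ segDepth n p s := by
  obtain ⟨hn, h0, hlast, hrange, hinj⟩ := hp
  have hex : ∃ k, k < n - 1 ∧ p k ≤ s ∧ s < p (k + 1) := by
    by_contra h
    push_neg at h
    have key : ∀ j, j ≤ n - 1 → p j ≤ s := by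
      intro j
      induction j with
      | zero => intro _; rw [h0]; exact hs1
      | succ j ih =>
        intro hj
        exact h j (by omega) (ih (by omega))
    have := key (n - 1) le_rfl
    rw [hlast] at this; omega
  obtain ⟨k, hk1, hk2, hk3⟩ := hex
  have : k ∈ (Finset.range (n - 1)).filter
      (fun i => min (p i) (p (i + 1)) ≤ s ∧ s < max (p i) (p (i + 1))) := by
    simp only [Finset.mem_filter, Finset.mem_range, min_le_iff, lt_max_iff]
    exact ⟨hk1, Or.inl hk2, Or.inr hk3⟩
  have := Finset.card_pos.mpr ⟨k, this⟩
  simpa [segDepth] using this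

lemma seg_uniq (n : ℕ) (p : ℕ → ℕ) (s : ℕ) (h : segDepth n p s = 1) :
    ∀ a b, (a < n - 1 ∧ min (p a) (p (a + 1)) ≤ s ∧ s < max (p a) (p (a + 1))) →
      (b < n - 1 ∧ min (p b) (p (b + 1)) ≤ s ∧ s < max (p b) (p (b + 1))) → a = b := by
  intro a b ha hb
  have h1 : ((Finset.range (n - 1)).filter
      (fun i => min (p i) (p (i + 1)) ≤ s ∧ s < max (p i) (p (i + 1)))).card ≤ 1 := by
    simpa [segDepth] using h.le
  have := Finset.card_le_one.mp h1
  exact this a (by simp only [Finset.mem_filter, Finset.mem_range]; exact ⟨ha.1, ha.2⟩)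
    b (by simp only [Finset.mem_filter, Finset.mem_range]; exact ⟨hb.1, hb.2⟩)

lemma ham_surj (n : ℕ) (p : ℕ → ℕ) (hp : IsHamPath n p) (v : ℕ)
    (h1 : 1 ≤ v) (h2 : v ≤ n) : ∃ t, t < n ∧ p t = v := by
  obtain ⟨hn, h0, hlast, hrange, hinj⟩ := hp
  have himage : (Finset.range n).image p = Finset.Icc 1 n := by
    apply Finset.eq_of_subset_of_card_le
    · intro x hx
      simp only [Finset.mem_image, Finset.mem_range] at hx
      obtain ⟨j, hj, rfl⟩ := hx
      simpa [Finset.mem_Icc] using hrange j hj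
    · rw [Finset.card_image_of_injOn, Finset.card_range, Nat.card_Icc]
      · omega
      · intro a ha b hb hab
        exact hinj a b (Finset.mem_range.mp ha) (Finset.mem_range.mp hb) hab
  have hv : v ∈ (Finset.range n).image p := by
    rw [himage]; simp only [Finset.mem_Icc]; omega
  simp only [Finset.mem_image, Finset.mem_range] at hv
  obtain ⟨t, ht, htv⟩ := hv
  exact ⟨t, ht, htv⟩

/-- if a 3-piece has total depth 3, its middle segment is an edge. -/
theorem stmt_2 (n : ℕ) (p : ℕ → ℕ) (hp : IsHamPath n p)
    (i : ℕ) (hi1 : 1 ≤ i) (hi2 : i ≤ n - 3)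
    (hd : segDepth n p i + segDepth n p (i + 1) + segDepth n p (i + 2) = 3) :
    IsEdgeOf n p (i + 1) (i + 2) := by
  obtain ⟨hn, h0, hlast, hrange, hinj⟩ := hp
  have hp' : IsHamPath n p := ⟨hn, h0, hlast, hrange, hinj⟩
  have hn4 : 4 ≤ n := by omega
  have d1 : 1 ≤ segDepth n p i := depth_pos n p hp' i hi1 (by omega)
  have d2 : 1 ≤ segDepth n p (i + 1) := depth_pos n p hp' (i + 1) (by omega) (by omega)
  have d3 : 1 ≤ segDepth n p (i + 2) := depth_pos n p hp' (i + 2) (by omega) (by omega)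
  have e1 : segDepth n p i = 1 := by omega
  have e2 : segDepth n p (i + 1) = 1 := by omega
  have e3 : segDepth n p (i + 2) = 1 := by omega
  -- vertex i+1
  obtain ⟨t, ht, hpt⟩ := ham_surj n p hp' (i + 1) (by omega) (by omega)
  have ht0 : t ≠ 0 := by intro h; rw [h, h0] at hpt; omega
  have htn : t ≠ n - 1 := by intro h; rw [h, hlast] at hpt; omega
  have htsub : t - 1 + 1 = t := by omega
  have htlt : t < n - 1 := by omega
  have hta : p (t - 1) ≠ i + 1 := by
    intro h
    have := hinj (t - 1) t (by omega) (by omega) (by rw [h, hpt])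
    omega
  have htb : p (t + 1) ≠ i + 1 := by
    intro h
    have := hinj (t + 1) t (by omega) (by omega) (by rw [h, hpt])
    omega
  -- some neighbor of i+1 is > i+1
  have hE : ∃ e, e < n - 1 ∧ ((p e = i + 1 ∧ i + 1 < p (e + 1)) ∨
      (p (e + 1) = i + 1 ∧ i + 1 < p e)) := by
    by_cases hc : i + 1 < p (t + 1)
    · exact ⟨t, htlt, Or.inl ⟨hpt, hc⟩⟩
    by_cases hc' : i + 1 < p (t - 1)
    · refine ⟨t - 1, by omega, Or.inr ?_⟩
      rw [htsub, hpt]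
      exact ⟨rfl, hc'⟩
    -- both neighbors ≤ i : contradiction with segDepth i = 1
    exfalso
    have hb1 : p (t + 1) ≤ i := by omega
    have hb2 : p (t - 1) ≤ i := by omega
    have := seg_uniq n p i e1 (t - 1) t
      (by rw [htsub]
          refine ⟨by omega, ?_, ?_⟩
          · exact min_le_of_left_le hb2
          · rw [hpt]; exact lt_max_of_lt_right (by omega))
      (by refine ⟨htlt, ?_, ?_⟩
          · exact min_le_of_right_le hb1
          · rw [hpt]; exact lt_max_of_lt_left (by omega))
    omega
  -- vertex i+2
  obtain ⟨u, hu, hpu⟩ := ham_surj n p hp' (i + 2) (by omega) (by omega)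
  have hu0 : u ≠ 0 := by intro h; rw [h, h0] at hpu; omega
  have hun : u ≠ n - 1 := by intro h; rw [h, hlast] at hpu; omega
  have husub : u - 1 + 1 = u := by omega
  have hult : u < n - 1 := by omega
  have hua : p (u - 1) ≠ i + 2 := by
    intro h
    have := hinj (u - 1) u (by omega) (by omega) (by rw [h, hpu])
    omega
  have hub : p (u + 1) ≠ i + 2 := by
    intro h
    have := hinj (u + 1) u (by omega) (by omega) (by rw [h, hpu])
    omega
  have hF : ∃ f, f < n - 1 ∧ ((p f = i + 2 ∧ p (f + 1) < i + 2) ∨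
      (p (f + 1) = i + 2 ∧ p f < i + 2)) := by
    by_cases hc : p (u + 1) < i + 2
    · exact ⟨u, hult, Or.inl ⟨hpu, hc⟩⟩
    by_cases hc' : p (u - 1) < i + 2
    · refine ⟨u - 1, by omega, Or.inr ?_⟩
      rw [husub, hpu]
      exact ⟨rfl, hc'⟩
    exfalso
    have hb1 : i + 2 < p (u + 1) := by omega
    have hb2 : i + 2 < p (u - 1) := by omega
    have := seg_uniq n p (i + 2) e3 (u - 1) u
      (by rw [husub]
          refine ⟨by omega, ?_, ?_⟩
          · rw [hpu]; exact min_le_of_right_le le_rfl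
          · exact lt_max_of_lt_left hb2)
      (by refine ⟨hult, ?_, ?_⟩
          · rw [hpu]; exact min_le_of_left_le le_rfl
          · exact lt_max_of_lt_right hb1)
    omega
  obtain ⟨e, he, hecase⟩ := hE
  obtain ⟨f, hf, hfcase⟩ := hF
  have hef : e = f := by
    apply seg_uniq n p (i + 1) e2
    · refine ⟨he, ?_, ?_⟩
      · rcases hecase with ⟨h1, h2⟩ | ⟨h1, h2⟩
        · exact min_le_of_left_le (by omega)
        · exact min_le_of_right_le (by omega)
      · rcases hecase with ⟨h1, h2⟩ | ⟨h1, h2⟩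
        · exact lt_max_of_lt_right h2
        · exact lt_max_of_lt_left h2
    · refine ⟨hf, ?_, ?_⟩
      · rcases hfcase with ⟨h1, h2⟩ | ⟨h1, h2⟩
        · exact min_le_of_right_le (by omega)
        · exact min_le_of_left_le (by omega)
      · rcases hfcase with ⟨h1, h2⟩ | ⟨h1, h2⟩
        · exact lt_max_of_lt_left (by omega)
        · exact lt_max_of_lt_right (by omega)
  subst hef
  refine ⟨e, he, ?_⟩
  rcases hecase with ⟨h1, h2⟩ | ⟨h1, h2⟩ <;> rcases hfcase with ⟨h3, h4⟩ | ⟨h3, h4⟩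
  · omega
  · exact Or.inl ⟨h1, h3⟩
  · exact Or.inr ⟨h3, h1⟩
  · omega
end

section
/- Let H be a Hamiltonian path from 1 to n on {1,...,n}, and let i be such that the three consecutive segments (i,i+1), (i+1,i+2), (i+2,i+3) have total depth 5 with respect to H and the middle segment (i+1,i+2) has depth 3. Then {i+1, i+2} is an edge of H. -/
/-- The set of (indices of) edges of `p` crossing the segment `(s, s+1)`. -/
def Cross3 (n : ℕ) (p : ℕ → ℕ) (s : ℕ) : Finset ℕ :=
  (Finset.range (n - 1)).filter
    (fun t => min (p t) (p (t + 1)) ≤ s ∧ s < max (p t) (p (t + 1)))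

lemma segDepth_eq_card (n : ℕ) (p : ℕ → ℕ) (s : ℕ) :
    segDepth n p s = (Cross3 n p s).card := rfl

lemma mem_Cross3 {n s t : ℕ} {p : ℕ → ℕ} :
    t ∈ Cross3 n p s ↔
      t < n - 1 ∧ min (p t) (p (t + 1)) ≤ s ∧ s < max (p t) (p (t + 1)) := by
  simp [Cross3, and_assoc]

/-- if a 3-piece has total depth 5 and its middle segment has
depth 3, then the middle segment is an edge. -/
theorem stmt_3 (n : ℕ) (p : ℕ → ℕ) (hp : IsHamPath n p)
    (i : ℕ) (hi1 : 1 ≤ i) (hi2 : i ≤ n - 3)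
    (hd : segDepth n p i + segDepth n p (i + 1) + segDepth n p (i + 2) = 5)
    (hmid : segDepth n p (i + 1) = 3) :
    IsEdgeOf n p (i + 1) (i + 2) := by
  classical
  obtain ⟨h2n, h0, hlast, hrange, hinj⟩ := hp
  have hn4 : 4 ≤ n := by omega
  -- every edge has distinct endpoints
  have key : ∀ t, t < n - 1 → min (p t) (p (t + 1)) < max (p t) (p (t + 1)) := by
    intro t ht
    have hne : p t ≠ p (t + 1) := by
      intro h
      have := hinj t (t + 1) (by omega) (by omega) h
      omega
    omega
  -- every cut is crossed at least once
  have crossNe : ∀ s, 1 ≤ s → s < n → 1 ≤ (Cross3 n p s).card := by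
    intro s hs1 hs2
    have hP : ∃ t, s < p t := ⟨n - 1, by rw [hlast]; exact hs2⟩
    have ht0 : s < p (Nat.find hP) := Nat.find_spec hP
    have ht0le : Nat.find hP ≤ n - 1 := Nat.find_min' hP (by rw [hlast]; exact hs2)
    have ht0pos : Nat.find hP ≠ 0 := by
      intro h
      rw [h, h0] at ht0
      omega
    have hprev : ¬ s < p (Nat.find hP - 1) := Nat.find_min hP (by omega)
    have hmem : Nat.find hP - 1 ∈ Cross3 n p s := by
      rw [mem_Cross3]
      have he : Nat.find hP - 1 + 1 = Nat.find hP := by omega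
      rw [he]
      exact ⟨by omega, by omega, by omega⟩
    have : (Cross3 n p s).Nonempty := ⟨_, hmem⟩
    exact Finset.card_pos.mpr this
  -- every vertex value in [1, n] is attained
  have hinjOn : Set.InjOn p ↑(Finset.range n) := by
    intro a ha b hb hab
    simp only [Finset.coe_range, Set.mem_Iio] at ha hb
    exact hinj a b ha hb hab
  have hsurj : ∀ v, 1 ≤ v → v ≤ n → ∃ t, t < n ∧ p t = v := by
    intro v hv1 hv2
    have himg : (Finset.range n).image p = Finset.Icc 1 n := by
      apply Finset.eq_of_subset_of_card_le
      · intro x hx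
        simp only [Finset.mem_image, Finset.mem_range] at hx
        obtain ⟨t, ht, rfl⟩ := hx
        exact Finset.mem_Icc.mpr (hrange t ht)
      · rw [Nat.card_Icc, Finset.card_image_of_injOn hinjOn, Finset.card_range]
        omega
    have hv : v ∈ (Finset.range n).image p := by
      rw [himg]; exact Finset.mem_Icc.mpr ⟨hv1, hv2⟩
    simp only [Finset.mem_image, Finset.mem_range] at hv
    obtain ⟨t, ht, hpt⟩ := hv
    exact ⟨t, ht, hpt⟩
  -- the counting step between adjacent cuts
  have step : ∀ s, (Cross3 n p (s + 1)).card + (Cross3 n p s \ Cross3 n p (s + 1)).card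
      = (Cross3 n p s).card + (Cross3 n p (s + 1) \ Cross3 n p s).card := by
    intro s
    have h1 := Finset.card_sdiff_add_card (Cross3 n p s) (Cross3 n p (s + 1))
    have h2 := Finset.card_sdiff_add_card (Cross3 n p (s + 1)) (Cross3 n p s)
    rw [Finset.union_comm] at h2
    omega
  -- characterization of the difference sets
  have memL : ∀ s t, t ∈ Cross3 n p s \ Cross3 n p (s + 1) ↔
      t < n - 1 ∧ max (p t) (p (t + 1)) = s + 1 := by
    intro s t
    rw [Finset.mem_sdiff, mem_Cross3, mem_Cross3]
    by_cases ht : t < n - 1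
    · have := key t ht
      constructor
      · rintro ⟨⟨-, h1, h2⟩, h3⟩
        refine ⟨ht, ?_⟩
        by_contra hmax
        exact h3 ⟨ht, by omega, by omega⟩
      · rintro ⟨-, hmax⟩
        exact ⟨⟨ht, by omega, by omega⟩, by rintro ⟨-, -, h⟩; omega⟩
    · constructor
      · rintro ⟨⟨h, -⟩, -⟩; exact absurd h ht
      · rintro ⟨h, -⟩; exact absurd h ht
  have memR : ∀ s t, t ∈ Cross3 n p (s + 1) \ Cross3 n p s ↔
      t < n - 1 ∧ min (p t) (p (t + 1)) = s + 1 := by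
    intro s t
    rw [Finset.mem_sdiff, mem_Cross3, mem_Cross3]
    by_cases ht : t < n - 1
    · have := key t ht
      constructor
      · rintro ⟨⟨-, h1, h2⟩, h3⟩
        refine ⟨ht, ?_⟩
        by_contra hmin
        exact h3 ⟨ht, by omega, by omega⟩
      · rintro ⟨-, hmin⟩
        exact ⟨⟨ht, by omega, by omega⟩, by rintro ⟨-, h, -⟩; omega⟩
    · constructor
      · rintro ⟨⟨h, -⟩, -⟩; exact absurd h ht
      · rintro ⟨h, -⟩; exact absurd h ht
  -- degree bound: at most two edges touch vertex s+1
  have bound : ∀ s, s + 1 ≤ n →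
      (Cross3 n p s \ Cross3 n p (s + 1)).card
        + (Cross3 n p (s + 1) \ Cross3 n p s).card ≤ 2 := by
    intro s hs2
    obtain ⟨tv, htv, hptv⟩ := hsurj (s + 1) (by omega) hs2
    have hsub : (Cross3 n p s \ Cross3 n p (s + 1)) ∪ (Cross3 n p (s + 1) \ Cross3 n p s)
        ⊆ ({tv - 1, tv} : Finset ℕ) := by
      intro t ht
      have hcases : t < n - 1 ∧ (p t = s + 1 ∨ p (t + 1) = s + 1) := by
        rcases Finset.mem_union.mp ht with h | h
        · rw [memL] at h; exact ⟨h.1, by omega⟩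
        · rw [memR] at h; exact ⟨h.1, by omega⟩
      obtain ⟨ht1, h | h⟩ := hcases
      · have := hinj t tv (by omega) htv (h.trans hptv.symm)
        simp only [Finset.mem_insert, Finset.mem_singleton]
        right; exact this
      · have := hinj (t + 1) tv (by omega) htv (h.trans hptv.symm)
        simp only [Finset.mem_insert, Finset.mem_singleton]
        left; omega
    have hdisj : Disjoint (Cross3 n p s \ Cross3 n p (s + 1))
        (Cross3 n p (s + 1) \ Cross3 n p s) := disjoint_sdiff_sdiff
    have h1 := Finset.card_union_of_disjoint hdisj
    have h2 := Finset.card_le_card hsub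
    have h3 : ({tv - 1, tv} : Finset ℕ).card ≤ 2 := by
      apply le_trans (Finset.card_insert_le _ _)
      simp
    omega
  -- arithmetic: outer depths are 1
  simp only [segDepth_eq_card] at hd hmid
  have hc1 : (Cross3 n p i).card = 1 := by
    have h1 := crossNe i hi1 (by omega)
    have h3 := crossNe (i + 2) (by omega) (by omega)
    omega
  have hc3 : (Cross3 n p (i + 2)).card = 1 := by
    have h1 := crossNe i hi1 (by omega)
    have h3 := crossNe (i + 2) (by omega) (by omega)
    omega
  -- both edges at vertex i+1 go right, both edges at vertex i+2 go left
  have step1 := step i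
  have bound1 := bound i (by omega)
  have hR1 : (Cross3 n p (i + 1) \ Cross3 n p i).card = 2 := by omega
  have step2 := step (i + 1)
  have bound2 := bound (i + 1) (by omega)
  rw [show i + 1 + 1 = i + 2 from rfl] at step2 bound2
  have hL2 : (Cross3 n p (i + 1) \ Cross3 n p (i + 2)).card = 2 := by omega
  -- conclude
  by_contra hcon
  have hdisj : Disjoint (Cross3 n p (i + 1) \ Cross3 n p i)
      (Cross3 n p (i + 1) \ Cross3 n p (i + 2)) := by
    rw [Finset.disjoint_left]
    intro t h1 h2
    rw [memR] at h1
    have h2' : t ∈ Cross3 n p (i + 1) \ Cross3 n p (i + 1 + 1) := by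
      rw [show i + 1 + 1 = i + 2 from rfl]; exact h2
    rw [memL] at h2'
    apply hcon
    refine ⟨t, h1.1, ?_⟩
    have hmin := h1.2
    have hmax := h2'.2
    omega
  have hsub : (Cross3 n p (i + 1) \ Cross3 n p i) ∪ (Cross3 n p (i + 1) \ Cross3 n p (i + 2))
      ⊆ Cross3 n p (i + 1) :=
    Finset.union_subset (Finset.sdiff_subset) (Finset.sdiff_subset)
  have h1 := Finset.card_union_of_disjoint hdisj
  have h2 := Finset.card_le_card hsub
  omega
end

section
/- Let n ≥ 6 and let H1, H2 be edge-disjoint Hamiltonian paths from 1 to n on {1,...,n} with edge cost |j−k|, such that no vertex v with 1 < v < n is uncovered by both paths (no cut-point). Then c(H1) + c(H2) ≥ 16(n−1)/5. -/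
namespace Stmt7Aux
open Finset

def phiT : ℕ → ℕ → ℕ → ℕ → ℤ
  | 2,4,2,4 => 2
  | 2,4,2,6 => 12
  | 2,4,4,2 => 0
  | 2,4,4,4 => 6
  | 2,4,4,6 => 16
  | 2,4,6,2 => 6
  | 2,4,6,4 => 16
  | 2,4,6,6 => 26
  | 2,6,2,4 => 6
  | 2,6,2,6 => 16
  | 2,6,4,2 => 6
  | 2,6,4,4 => 16
  | 2,6,4,6 => 26
  | 2,6,6,2 => 16
  | 2,6,6,4 => 26
  | 2,6,6,6 => 36
  | 4,2,4,2 => -2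
  | 4,2,4,4 => 6
  | 4,2,4,6 => 16
  | 4,2,6,2 => 6
  | 4,2,6,4 => 16
  | 4,2,6,6 => 26
  | 4,4,2,4 => 4
  | 4,4,2,6 => 14
  | 4,4,4,2 => 0
  | 4,4,4,4 => 10
  | 4,4,4,6 => 20
  | 4,4,6,2 => 10
  | 4,4,6,4 => 20
  | 4,4,6,6 => 30
  | 4,6,2,4 => 10
  | 4,6,2,6 => 20
  | 4,6,4,2 => 10
  | 4,6,4,4 => 20
  | 4,6,4,6 => 30
  | 4,6,6,2 => 20
  | 4,6,6,4 => 30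
  | 4,6,6,6 => 40
  | 6,2,4,2 => 0
  | 6,2,4,4 => 10
  | 6,2,4,6 => 20
  | 6,2,6,2 => 10
  | 6,2,6,4 => 20
  | 6,2,6,6 => 30
  | 6,4,2,4 => 10
  | 6,4,2,6 => 20
  | 6,4,4,2 => 10
  | 6,4,4,4 => 20
  | 6,4,4,6 => 30
  | 6,4,6,2 => 20
  | 6,4,6,4 => 30
  | 6,4,6,6 => 40
  | 6,6,2,4 => 20
  | 6,6,2,6 => 30
  | 6,6,4,2 => 20
  | 6,6,4,4 => 30
  | 6,6,4,6 => 40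
  | 6,6,6,2 => 30
  | 6,6,6,4 => 40
  | 6,6,6,6 => 50
  | _,_,_,_ => 100

def phi (a b c d : ℕ) : ℤ :=
  if c = 2 ∧ d = 2 then 300 else if b = 2 ∧ c = 2 then 200
  else if a = 2 ∧ b = 2 then 100 else phiT a b c d

def tv : List ℕ := [2,4,6]

lemma phiP1 : ∀ b ∈ tv, ∀ c ∈ tv, ∀ d ∈ tv,
    ¬(b = 2) → ¬(b = 4 ∧ c = 2) → ¬(b = 4 ∧ c = 4 ∧ d = 2) → ¬(c = 2 ∧ d = 2) →
    phi 2 b c d + 64 ≤ 5 * (2 + b + c + d) := by decide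

lemma phiP2 : ∀ a ∈ tv, ∀ b ∈ tv, ∀ c ∈ tv, ∀ d ∈ tv, ∀ e ∈ tv,
    ¬(d = 2 ∧ e = 2) → ¬(a = 2 ∧ b = 4 ∧ c = 2 ∧ d = 4 ∧ e = 2) →
    phi b c d e + 16 ≤ phi a b c d + 5 * e := by decide

lemma phiP3 : ∀ a ∈ tv, ∀ b ∈ tv, ∀ c ∈ tv,
    ¬(c = 4 ∧ b = 2) → ¬(c = 4 ∧ b = 4 ∧ a = 2) → 0 ≤ phi a b c 2 := by decide

lemma arith (m : ℕ) (hm : 5 ≤ m) (h : ℕ → ℕ)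
    (hmem : ∀ s, 1 ≤ s → s ≤ m → h s ∈ tv)
    (hone : h 1 = 2) (hend : h m = 2)
    (hc2 : ∀ s, 1 ≤ s → s + 1 ≤ m → ¬(h s = 2 ∧ h (s+1) = 2))
    (hc3 : ∀ s, 1 ≤ s → s + 4 ≤ m →
      ¬(h s = 2 ∧ h (s+1) = 4 ∧ h (s+2) = 2 ∧ h (s+3) = 4 ∧ h (s+4) = 2))
    (hc4 : ¬(h 2 = 4 ∧ h 3 = 2))
    (hc5 : ¬(h 2 = 4 ∧ h 3 = 4 ∧ h 4 = 2))
    (hc4r : ¬(h (m-1) = 4 ∧ h (m-2) = 2))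
    (hc5r : ¬(h (m-1) = 4 ∧ h (m-2) = 4 ∧ h (m-3) = 2)) :
    16 * (m : ℤ) ≤ 5 * ∑ s ∈ Finset.Icc 1 m, (h s : ℤ) := by
  have inv : ∀ t : ℕ, 4 + t ≤ m →
      phi (h (t+1)) (h (t+2)) (h (t+3)) (h (t+4)) + 16 * ((t:ℤ) + 4) ≤
      5 * ∑ s ∈ Finset.Icc 1 (t+4), (h s : ℤ) := by
    intro t
    induction t with
    | zero =>
      intro ht
      have e : Finset.Icc 1 4 = ({1,2,3,4} : Finset ℕ) := by decide
      have h2 : h 2 ∈ tv := hmem 2 (by omega) (by omega)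
      have h3 : h 3 ∈ tv := hmem 3 (by omega) (by omega)
      have h4 : h 4 ∈ tv := hmem 4 (by omega) (by omega)
      have k1 : ¬ (h 2 = 2) := by
        intro hh; exact hc2 1 (by omega) (by omega) ⟨hone, hh⟩
      have k2 : ¬ (h 3 = 2 ∧ h 4 = 2) := hc2 3 (by omega) (by omega)
      have := phiP1 (h 2) h2 (h 3) h3 (h 4) h4 k1 hc4 hc5 k2
      simp only [zero_add, e]
      norm_num [Finset.sum_insert, Finset.mem_insert, Finset.sum_singleton, hone]
      push_cast
      omega
    | succ t ih =>
      intro ht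
      have ih' := ih (by omega)
      have hsum : ∑ s ∈ Finset.Icc 1 (t+1+4), (h s : ℤ)
          = ∑ s ∈ Finset.Icc 1 (t+4), (h s : ℤ) + (h (t+5) : ℤ) := by
        rw [show t+1+4 = (t+4)+1 by ring, Finset.sum_Icc_succ_top (by omega)]
      have m1 : h (t+1) ∈ tv := hmem _ (by omega) (by omega)
      have m2 : h (t+2) ∈ tv := hmem _ (by omega) (by omega)
      have m3 : h (t+3) ∈ tv := hmem _ (by omega) (by omega)
      have m4 : h (t+4) ∈ tv := hmem _ (by omega) (by omega)
      have m5 : h (t+5) ∈ tv := hmem _ (by omega) (by omega)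
      have k1 : ¬(h (t+4) = 2 ∧ h (t+5) = 2) := by
        have := hc2 (t+4) (by omega) (by omega)
        simpa [show t+4+1 = t+5 by ring] using this
      have k2 : ¬(h (t+1) = 2 ∧ h (t+2) = 4 ∧ h (t+3) = 2 ∧ h (t+4) = 4 ∧ h (t+5) = 2) := by
        have := hc3 (t+1) (by omega) (by omega)
        simpa [show t+1+1 = t+2 by ring, show t+1+2 = t+3 by ring,
          show t+1+3 = t+4 by ring, show t+1+4 = t+5 by ring] using this
      have step := phiP2 (h (t+1)) m1 (h (t+2)) m2 (h (t+3)) m3 (h (t+4)) m4 (h (t+5)) m5 k1 k2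
      have : phi (h (t+2)) (h (t+3)) (h (t+4)) (h (t+5)) + 16 * ((t:ℤ) + 1 + 4)
          ≤ 5 * (∑ s ∈ Finset.Icc 1 (t+4), (h s : ℤ) + (h (t+5) : ℤ)) := by
        push_cast
        omega
      rw [show t+1+1 = t+2 by ring, show t+1+2 = t+3 by ring,
        show t+1+3 = t+4 by ring, show t+1+4 = t+5 by ring, hsum]
      push_cast at this ⊢
      omega
  have final := inv (m - 4) (by omega)
  rw [show m - 4 + 4 = m by omega] at final
  have e1 : m - 4 + 1 = m - 3 := by omega
  have e2 : m - 4 + 2 = m - 2 := by omega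
  have e3 : m - 4 + 3 = m - 1 := by omega
  rw [e1, e2, e3, hend] at final
  have ma : h (m-3) ∈ tv := hmem _ (by omega) (by omega)
  have mb : h (m-2) ∈ tv := hmem _ (by omega) (by omega)
  have mc : h (m-1) ∈ tv := hmem _ (by omega) (by omega)
  have pos := phiP3 (h (m-3)) ma (h (m-2)) mb (h (m-1)) mc hc4r hc5r
  have : ((m:ℤ) - 4 + 4) = (m:ℤ) := by ring
  push_cast at final
  omega


lemma mem_tv {x : ℕ} : x ∈ tv ↔ x = 2 ∨ x = 4 ∨ x = 6 := by simp [tv]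

/-! ### Card helpers -/

lemma two_le_card {s : Finset ℕ} {a b : ℕ} (ha : a ∈ s) (hb : b ∈ s) (hab : a ≠ b) :
    2 ≤ s.card := by
  have hsub : ({a, b} : Finset ℕ) ⊆ s := by
    intro x hx; simp only [mem_insert, mem_singleton] at hx
    rcases hx with rfl | rfl <;> assumption
  have h2 : ({a, b} : Finset ℕ).card = 2 := by
    rw [card_insert_of_notMem (by simp [hab]), card_singleton]
  calc 2 = ({a, b} : Finset ℕ).card := h2.symm
    _ ≤ s.card := card_le_card hsub

lemma four_le_card {s : Finset ℕ} {a b c d : ℕ} (ha : a ∈ s) (hb : b ∈ s) (hc : c ∈ s)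
    (hd : d ∈ s) (hab : a ≠ b) (hac : a ≠ c) (had : a ≠ d) (hbc : b ≠ c) (hbd : b ≠ d)
    (hcd : c ≠ d) : 4 ≤ s.card := by
  have hsub : ({a, b, c, d} : Finset ℕ) ⊆ s := by
    intro x hx; simp only [mem_insert, mem_singleton] at hx
    rcases hx with rfl | rfl | rfl | rfl <;> assumption
  have h4 : ({a, b, c, d} : Finset ℕ).card = 4 := by
    rw [card_insert_of_notMem (by simp [hab, hac, had]),
      card_insert_of_notMem (by simp [hbc, hbd]),
      card_insert_of_notMem (by simp [hcd]), card_singleton]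
  calc 4 = ({a, b, c, d} : Finset ℕ).card := h4.symm
    _ ≤ s.card := card_le_card hsub

/-! ### Crossers and coverers -/

def crossers (n : ℕ) (p : ℕ → ℕ) (s : ℕ) : Finset ℕ :=
  (Finset.range (n - 1)).filter
    (fun i => min (p i) (p (i + 1)) ≤ s ∧ s < max (p i) (p (i + 1)))

def coverers (n : ℕ) (p : ℕ → ℕ) (v : ℕ) : Finset ℕ :=
  (Finset.range (n - 1)).filter
    (fun i => min (p i) (p (i + 1)) < v ∧ v < max (p i) (p (i + 1)))

lemma segDepth_eq (n : ℕ) (p : ℕ → ℕ) (s : ℕ) : segDepth n p s = (crossers n p s).card := rfl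

lemma mem_crossers {n : ℕ} {p : ℕ → ℕ} {s j : ℕ} :
    j ∈ crossers n p s ↔ j < n - 1 ∧ min (p j) (p (j + 1)) ≤ s ∧ s < max (p j) (p (j + 1)) := by
  simp [crossers, Finset.mem_filter, Finset.mem_range, and_assoc]

lemma mem_coverers {n : ℕ} {p : ℕ → ℕ} {v j : ℕ} :
    j ∈ coverers n p v ↔ j < n - 1 ∧ min (p j) (p (j + 1)) < v ∧ v < max (p j) (p (j + 1)) := by
  simp [coverers, Finset.mem_filter, Finset.mem_range, and_assoc]

lemma coversVertex_iff {n : ℕ} {p : ℕ → ℕ} {v : ℕ} :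
    CoversVertex n p v ↔ (coverers n p v).Nonempty := by
  constructor
  · rintro ⟨i, hi, h1, h2⟩; exact ⟨i, mem_coverers.mpr ⟨hi, h1, h2⟩⟩
  · rintro ⟨i, hi⟩; rw [mem_coverers] at hi; exact ⟨i, hi.1, hi.2.1, hi.2.2⟩

/-! ### Basic path facts -/

section Path
variable {n : ℕ} {p : ℕ → ℕ}

lemma vals (hp : IsHamPath n p) {i : ℕ} (hi : i < n) : 1 ≤ p i ∧ p i ≤ n :=
  hp.2.2.2.1 i hi

lemma inj (hp : IsHamPath n p) {i j : ℕ} (hi : i < n) (hj : j < n) (h : p i = p j) : i = j :=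
  hp.2.2.2.2 i j hi hj h

lemma pne (hp : IsHamPath n p) {i j : ℕ} (hi : i < n) (hj : j < n) (h : i ≠ j) : p i ≠ p j :=
  fun hc => h (inj hp hi hj hc)

lemma exists_idx (hp : IsHamPath n p) {v : ℕ} (h1 : 1 ≤ v) (h2 : v ≤ n) :
    ∃ i, i < n ∧ p i = v := by
  have hinj : Set.InjOn p (Finset.range n) := fun i hi j hj hij =>
    hp.2.2.2.2 i j (by simpa using hi) (by simpa using hj) hij
  have hsub : (Finset.range n).image p ⊆ Finset.Icc 1 n := by
    intro x hx
    simp only [Finset.mem_image, Finset.mem_range] at hx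
    obtain ⟨i, hi, rfl⟩ := hx
    have := hp.2.2.2.1 i hi
    simp only [Finset.mem_Icc]; omega
  have hcard : ((Finset.range n).image p).card = n := by
    rw [Finset.card_image_of_injOn hinj, Finset.card_range]
  have heq : (Finset.range n).image p = Finset.Icc 1 n :=
    Finset.eq_of_subset_of_card_le hsub (by rw [hcard, Nat.card_Icc]; omega)
  have hv : v ∈ (Finset.range n).image p := by
    rw [heq]; simp only [Finset.mem_Icc]; omega
  simp only [Finset.mem_image, Finset.mem_range] at hv
  obtain ⟨i, hi, hpi⟩ := hv
  exact ⟨i, hi, hpi⟩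

lemma idx_one (hp : IsHamPath n p) {i : ℕ} (hi : i < n) (h : p i = 1) : i = 0 :=
  inj hp hi (by omega) (by rw [h, hp.2.1])

lemma idx_top (hp : IsHamPath n p) {i : ℕ} (hi : i < n) (h : p i = n) : i = n - 1 :=
  inj hp hi (by omega) (by rw [h, hp.2.2.1])

/-- Interior vertex: its index, and classification of incident edge indices. -/
lemma interior (hp : IsHamPath n p) {v : ℕ} (h1 : 1 < v) (h2 : v < n) :
    ∃ i, 0 < i ∧ i < n - 1 ∧ p i = v ∧
      (∀ j, j < n - 1 → (p j = v ∨ p (j + 1) = v) → j = i - 1 ∨ j = i) := by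
  obtain ⟨i, hi, hpi⟩ := exists_idx hp (by omega) (by omega : v ≤ n)
  have hi0 : i ≠ 0 := by
    intro h; rw [h, hp.2.1] at hpi; omega
  have hin : i ≠ n - 1 := by
    intro h; rw [h, hp.2.2.1] at hpi; omega
  refine ⟨i, by omega, by omega, hpi, ?_⟩
  intro j hj hor
  rcases hor with h | h
  · right; exact inj hp (by omega) hi (by rw [h, hpi])
  · left
    have : j + 1 = i := inj hp (by omega) hi (by rw [h, hpi])
    omega

lemma depth_one_crossers {n : ℕ} {p : ℕ → ℕ} {s : ℕ} (h : segDepth n p s = 1) :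
    ∃ j, crossers n p s = {j} := Finset.card_eq_one.mp (by rw [← segDepth_eq]; exact h)

/-- The unique crossing edge of segment 1 is the initial edge. -/
lemma crossers_one (hp : IsHamPath n p) : crossers n p 1 = {0} := by
  have hn : 2 ≤ n := hp.1
  ext j
  rw [mem_crossers, Finset.mem_singleton]
  constructor
  · rintro ⟨hj, hmin, hmax⟩
    have hb1 := vals hp (show j < n by omega)
    have hb2 := vals hp (show j + 1 < n by omega)
    have : p j = 1 ∨ p (j + 1) = 1 := by omega
    rcases this with h | h
    · exact idx_one hp (by omega) h
    · have := idx_one hp (by omega) h; omega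
  · rintro rfl
    have h0 : p 0 = 1 := hp.2.1
    have hb2 := vals hp (show 0 + 1 < n by omega)
    have hne : p 0 ≠ p (0 + 1) := pne hp (i := 0) (j := 0 + 1) (by omega) (by omega) (by omega)
    exact ⟨by omega, by omega, by omega⟩

/-- The unique crossing edge of segment `n-1` is the final edge. -/
lemma crossers_last (hp : IsHamPath n p) : crossers n p (n - 1) = {n - 2} := by
  have hn : 2 ≤ n := hp.1
  ext j
  rw [mem_crossers, Finset.mem_singleton]
  constructor
  · rintro ⟨hj, hmin, hmax⟩
    have hb1 := vals hp (show j < n by omega)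
    have hb2 := vals hp (show j + 1 < n by omega)
    have : p j = n ∨ p (j + 1) = n := by omega
    rcases this with h | h
    · have := idx_top hp (by omega) h; omega
    · have := idx_top hp (by omega) h; omega
  · rintro rfl
    have hl : p (n - 2 + 1) = n := by
      rw [show n - 2 + 1 = n - 1 by omega, hp.2.2.1]
    have hb1 := vals hp (show n - 2 < n by omega)
    have hne : p (n - 2) ≠ p (n - 2 + 1) :=
      pne hp (i := n - 2) (j := n - 2 + 1) (by omega) (by omega) (by omega)
    refine ⟨by omega, ?_, ?_⟩ <;> omega

lemma depth_first (hp : IsHamPath n p) : segDepth n p 1 = 1 := by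
  rw [segDepth_eq, crossers_one hp, card_singleton]

lemma depth_last (hp : IsHamPath n p) : segDepth n p (n - 1) = 1 := by
  rw [segDepth_eq, crossers_last hp, card_singleton]

/-- Key identity: `d(v-1) + d(v) = 2 * c(v) + 2` for interior `v`. -/
lemma depth_pair (hp : IsHamPath n p) {v : ℕ} (h1 : 1 < v) (h2 : v < n) :
    segDepth n p (v - 1) + segDepth n p v = 2 * (coverers n p v).card + 2 := by
  obtain ⟨i, hi0, hin, hpi, huniq⟩ := interior hp h1 h2
  have hn : 2 ≤ n := hp.1
  have hI : (Finset.range (n - 1)).filter (fun j => p j = v ∨ p (j + 1) = v) = {i - 1, i} := by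
    ext j
    simp only [Finset.mem_filter, Finset.mem_range, Finset.mem_insert, Finset.mem_singleton]
    constructor
    · rintro ⟨hj, hor⟩; exact huniq j hj hor
    · rintro (rfl | rfl)
      · refine ⟨by omega, Or.inr ?_⟩
        rw [show i - 1 + 1 = i by omega]; exact hpi
      · exact ⟨hin, Or.inl hpi⟩
  have hIcard : ((Finset.range (n - 1)).filter (fun j => p j = v ∨ p (j + 1) = v)).card = 2 := by
    rw [hI, card_insert_of_notMem (by simp; omega), card_singleton]
  have point : ∀ j ∈ Finset.range (n - 1),
      ((if min (p j) (p (j + 1)) ≤ v - 1 ∧ v - 1 < max (p j) (p (j + 1)) then 1 else 0) +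
       (if min (p j) (p (j + 1)) ≤ v ∧ v < max (p j) (p (j + 1)) then 1 else 0)) =
      (2 * (if min (p j) (p (j + 1)) < v ∧ v < max (p j) (p (j + 1)) then 1 else 0) +
       (if p j = v ∨ p (j + 1) = v then 1 else 0)) := by
    intro j hj
    simp only [Finset.mem_range] at hj
    have hb1 := vals hp (show j < n by omega)
    have hb2 := vals hp (show j + 1 < n by omega)
    have hne : p j ≠ p (j + 1) := pne hp (i := j) (j := j + 1) (by omega) (by omega) (by omega)
    split_ifs <;> omega
  simp only [segDepth, coverers, Finset.card_filter]
  rw [← Finset.sum_add_distrib, Finset.sum_congr rfl point, Finset.sum_add_distrib,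
    ← Finset.mul_sum]
  have hinc : (∑ j ∈ Finset.range (n - 1), if p j = v ∨ p (j + 1) = v then 1 else 0) = 2 := by
    rw [← Finset.card_filter]; exact hIcard
  rw [hinc]

/-- Parity: each segment is crossed an odd number of times. -/
lemma depth_odd (hp : IsHamPath n p) {s : ℕ} (h1 : 1 ≤ s) (h2 : s ≤ n - 1) :
    segDepth n p s % 2 = 1 := by
  have hn : 2 ≤ n := hp.1
  have key : ∀ k, k ≤ n - 1 →
      (((Finset.range k).filter
        (fun i => min (p i) (p (i + 1)) ≤ s ∧ s < max (p i) (p (i + 1)))).card % 2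
        = if p k ≤ s then 0 else 1) := by
    intro k
    induction k with
    | zero =>
      intro _
      simp only [Finset.range_zero, Finset.filter_empty, Finset.card_empty, Nat.zero_mod,
        hp.2.1]
      rw [if_pos (by omega : 1 ≤ s)]
    | succ k ih =>
      intro hk
      have ihk := ih (by omega)
      rw [Finset.range_add_one, Finset.filter_insert]
      have hb1 := vals hp (show k < n by omega)
      have hb2 := vals hp (show k + 1 < n by omega)
      by_cases hc : min (p k) (p (k + 1)) ≤ s ∧ s < max (p k) (p (k + 1))
      · rw [if_pos hc, Finset.card_insert_of_notMem (by simp)]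
        by_cases hk1 : p (k + 1) ≤ s
        · rw [if_pos hk1]
          have h1 : ¬ (p k ≤ s) := by omega
          rw [if_neg h1] at ihk
          omega
        · rw [if_neg hk1]
          have h1 : p k ≤ s := by omega
          rw [if_pos h1] at ihk
          omega
      · rw [if_neg hc]
        by_cases hk1 : p (k + 1) ≤ s
        · rw [if_pos hk1]
          have h1 : p k ≤ s := by omega
          rw [if_pos h1] at ihk
          exact ihk
        · rw [if_neg hk1]
          have h1 : ¬ (p k ≤ s) := by omega
          rw [if_neg h1] at ihk
          exact ihk
  have hfin := key (n - 1) le_rfl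
  rw [hp.2.2.1] at hfin
  have : ¬ (n ≤ s) := by omega
  rw [if_neg this] at hfin
  rw [segDepth]
  omega

/-- Enriched interior-vertex package. -/
lemma interior' (hp : IsHamPath n p) {v : ℕ} (h1 : 1 < v) (h2 : v < n) :
    ∃ i, 0 < i ∧ i < n - 1 ∧ p i = v ∧
      (∀ j, j < n - 1 → (p j = v ∨ p (j + 1) = v) → j = i - 1 ∨ j = i) ∧
      p (i - 1 + 1) = v ∧ p (i - 1) ≠ v ∧ p (i + 1) ≠ v ∧ p (i - 1) ≠ p (i + 1) ∧
      1 ≤ p (i - 1) ∧ p (i - 1) ≤ n ∧ 1 ≤ p (i + 1) ∧ p (i + 1) ≤ n := by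
  obtain ⟨i, hi0, hin, hpi, huniq⟩ := interior hp h1 h2
  have hn : 2 ≤ n := hp.1
  have hpre : p (i - 1 + 1) = v := by rw [show i - 1 + 1 = i by omega]; exact hpi
  have hano : p (i - 1) ≠ v := by
    intro h
    have := inj hp (i := i - 1) (j := i) (by omega) (by omega) (by rw [h, hpi])
    omega
  have hbno : p (i + 1) ≠ v := by
    intro h
    have := inj hp (i := i + 1) (j := i) (by omega) (by omega) (by rw [h, hpi])
    omega
  have habne : p (i - 1) ≠ p (i + 1) :=
    pne hp (i := i - 1) (j := i + 1) (by omega) (by omega) (by omega)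
  have ha := vals hp (i := i - 1) (by omega)
  have hb := vals hp (i := i + 1) (by omega)
  exact ⟨i, hi0, hin, hpi, huniq, hpre, hano, hbno, habne, ha.1, ha.2, hb.1, hb.2⟩

end Path

/-! ### Edge-disjointness helpers -/

lemma disj_symm {n : ℕ} {p q : ℕ → ℕ} (hd : PathsEdgeDisjoint n p q) :
    PathsEdgeDisjoint n q p := by
  intro i hi he
  obtain ⟨j, hj, hor⟩ := he
  exact hd j hj ⟨i, hi, by omega⟩

lemma clash {n : ℕ} {p q : ℕ → ℕ} (hd : PathsEdgeDisjoint n p q) {j k a b : ℕ}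
    (hj : j < n - 1) (hk : k < n - 1)
    (h1 : (p j = a ∧ p (j + 1) = b) ∨ (p j = b ∧ p (j + 1) = a))
    (h2 : (q k = a ∧ q (k + 1) = b) ∨ (q k = b ∧ q (k + 1) = a)) : False := by
  apply hd j hj
  exact ⟨k, hk, by omega⟩

/-! ### Structural lemma SL3 (left boundary, pattern 2,4,2) -/

lemma SL3' {n : ℕ} {p1 p2 : ℕ → ℕ} (hp1 : IsHamPath n p1) (hp2 : IsHamPath n p2)
    (hd : PathsEdgeDisjoint n p1 p2) (hn : 5 ≤ n)
    (db : segDepth n p1 2 = 3) (dc : segDepth n p1 3 = 1)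
    (eb : segDepth n p2 2 = 1) (ec : segDepth n p2 3 = 1) : False := by
  have ea : segDepth n p2 1 = 1 := depth_first hp2
  have hc2 : (coverers n p2 2).card = 0 := by
    have h := depth_pair hp2 (v := 2) (by omega) (by omega)
    rw [show (2:ℕ) - 1 = 1 from rfl] at h
    omega
  have hc3 : (coverers n p2 3).card = 0 := by
    have h := depth_pair hp2 (v := 3) (by omega) (by omega)
    rw [show (3:ℕ) - 1 = 2 from rfl] at h
    omega
  have hno2 : ∀ j, j ∉ coverers n p2 2 := by
    intro j hj
    rw [Finset.card_eq_zero.mp hc2] at hj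
    exact absurd hj (Finset.notMem_empty j)
  have hno3 : ∀ j, j ∉ coverers n p2 3 := by
    intro j hj
    rw [Finset.card_eq_zero.mp hc3] at hj
    exact absurd hj (Finset.notMem_empty j)
  obtain ⟨j2, hj2⟩ := depth_one_crossers eb
  have hj2m := mem_crossers.mp (by rw [hj2]; exact Finset.mem_singleton_self j2)
  have e23 : (p2 j2 = 2 ∧ p2 (j2 + 1) = 3) ∨ (p2 j2 = 3 ∧ p2 (j2 + 1) = 2) := by
    have h2 := hno2 j2
    have h3 := hno3 j2
    rw [mem_coverers] at h2 h3
    omega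
  have hc13 : (coverers n p1 3).card = 1 := by
    have h := depth_pair hp1 (v := 3) (by omega) (by omega)
    rw [show (3:ℕ) - 1 = 2 from rfl] at h
    omega
  obtain ⟨k, hk⟩ := Finset.card_eq_one.mp hc13
  have hkm := mem_coverers.mp (by rw [hk]; exact Finset.mem_singleton_self k)
  obtain ⟨j3, hj3⟩ := depth_one_crossers dc
  have hkj3 : k = j3 := by
    have hmem : k ∈ crossers n p1 3 := mem_crossers.mpr ⟨hkm.1, by omega, by omega⟩
    rw [hj3] at hmem
    exact Finset.mem_singleton.mp hmem
  rw [hkj3] at hkm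
  obtain ⟨i, hi0, hin, hpi, huniq, hpre, hano, hbno, habne, ha1, han, hb1, hbn⟩ :=
    interior' hp1 (v := 3) (by omega) (by omega)
  have ha3 : p1 (i - 1) < 3 := by
    by_contra hge
    have hmem : i - 1 ∈ crossers n p1 3 := mem_crossers.mpr ⟨by omega, by omega, by omega⟩
    have heq : i - 1 = j3 := by
      rw [hj3] at hmem
      exact Finset.mem_singleton.mp hmem
    rw [← heq] at hkm
    omega
  have hb3 : p1 (i + 1) < 3 := by
    by_contra hge
    have hmem : i ∈ crossers n p1 3 := mem_crossers.mpr ⟨by omega, by omega, by omega⟩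
    have heq : i = j3 := by
      rw [hj3] at hmem
      exact Finset.mem_singleton.mp hmem
    rw [← heq] at hkm
    omega
  have h2or : p1 (i - 1) = 2 ∨ p1 (i + 1) = 2 := by omega
  rcases h2or with h | h
  · exact clash hd (j := i - 1) (k := j2) (a := 2) (b := 3) (by omega) hj2m.1
      (Or.inl ⟨h, hpre⟩) e23
  · exact clash hd (j := i) (k := j2) (a := 2) (b := 3) (by omega) hj2m.1
      (Or.inr ⟨hpi, h⟩) e23

/-- No-cover helper. -/
lemma nocov {n : ℕ} {p : ℕ → ℕ} {v : ℕ} (h : (coverers n p v).card = 0) :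
    ∀ j, j ∉ coverers n p v := by
  intro j hj
  rw [Finset.card_eq_zero.mp h] at hj
  exact absurd hj (Finset.notMem_empty j)

/-! ### Structural lemma SL2A (interior, heavy path on both middle segments) -/

lemma SL2A {n : ℕ} {p1 p2 : ℕ → ℕ} (hp1 : IsHamPath n p1) (hp2 : IsHamPath n p2)
    (hd : PathsEdgeDisjoint n p1 p2) {s : ℕ} (hs1 : 1 ≤ s) (hs : s + 3 ≤ n - 1)
    (d1a : segDepth n p1 s = 1) (d1b : segDepth n p1 (s+1) = 3)
    (d1c : segDepth n p1 (s+2) = 1) (d1d : segDepth n p1 (s+3) = 3)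
    (d2a : segDepth n p2 s = 1) (d2b : segDepth n p2 (s+1) = 1)
    (d2c : segDepth n p2 (s+2) = 1) : False := by
  have hn : 2 ≤ n := hp1.1
  have hc21 : (coverers n p2 (s+1)).card = 0 := by
    have h := depth_pair hp2 (v := s+1) (by omega) (by omega)
    rw [show s+1-1 = s from rfl] at h; omega
  have hc22 : (coverers n p2 (s+2)).card = 0 := by
    have h := depth_pair hp2 (v := s+2) (by omega) (by omega)
    rw [show s+2-1 = s+1 from rfl] at h; omega
  obtain ⟨j2, hj2⟩ := depth_one_crossers d2b
  have hj2m := mem_crossers.mp (by rw [hj2]; exact Finset.mem_singleton_self j2)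
  have e12 : (p2 j2 = s+1 ∧ p2 (j2+1) = s+2) ∨ (p2 j2 = s+2 ∧ p2 (j2+1) = s+1) := by
    have h1 := nocov hc21 j2
    have h2 := nocov hc22 j2
    rw [mem_coverers] at h1 h2
    omega
  have hc12 : (coverers n p1 (s+2)).card = 1 := by
    have h := depth_pair hp1 (v := s+2) (by omega) (by omega)
    rw [show s+2-1 = s+1 from rfl] at h; omega
  have hc13 : (coverers n p1 (s+3)).card = 1 := by
    have h := depth_pair hp1 (v := s+3) (by omega) (by omega)
    rw [show s+3-1 = s+2 from rfl] at h; omega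
  obtain ⟨jE, hjE⟩ := depth_one_crossers d1c
  obtain ⟨k2, hk2⟩ := Finset.card_eq_one.mp hc12
  have hk2m := mem_coverers.mp (by rw [hk2]; exact Finset.mem_singleton_self k2)
  have hk2E : k2 = jE := by
    have hmem : k2 ∈ crossers n p1 (s+2) := mem_crossers.mpr ⟨hk2m.1, by omega, by omega⟩
    rw [hjE] at hmem; exact Finset.mem_singleton.mp hmem
  rw [hk2E] at hk2m
  obtain ⟨k3, hk3⟩ := Finset.card_eq_one.mp hc13
  have hk3m := mem_coverers.mp (by rw [hk3]; exact Finset.mem_singleton_self k3)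
  have hk3E : k3 = jE := by
    have hmem : k3 ∈ crossers n p1 (s+2) := mem_crossers.mpr ⟨hk3m.1, by omega, by omega⟩
    rw [hjE] at hmem; exact Finset.mem_singleton.mp hmem
  rw [hk3E] at hk3m
  obtain ⟨i, hi0, hin, hpi, huniq, hpre, hano, hbno, habne, ha1, han, hb1, hbn⟩ :=
    interior' hp1 (v := s+2) (by omega) (by omega)
  have hale : p1 (i-1) ≤ s := by
    have hgt : ¬ (s + 2 < p1 (i - 1)) := by
      intro hgt
      have hmem : i - 1 ∈ crossers n p1 (s+2) := mem_crossers.mpr ⟨by omega, by omega, by omega⟩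
      have heq : i - 1 = jE := by rw [hjE] at hmem; exact Finset.mem_singleton.mp hmem
      rw [← heq] at hk2m
      omega
    have hne1 : p1 (i - 1) ≠ s + 1 := by
      intro heq
      exact clash hd (j := i-1) (k := j2) (a := s+1) (b := s+2) (by omega) hj2m.1
        (Or.inl ⟨heq, hpre⟩) e12
    omega
  have hble : p1 (i+1) ≤ s := by
    have hgt : ¬ (s + 2 < p1 (i + 1)) := by
      intro hgt
      have hmem : i ∈ crossers n p1 (s+2) := mem_crossers.mpr ⟨by omega, by omega, by omega⟩
      have heq : i = jE := by rw [hjE] at hmem; exact Finset.mem_singleton.mp hmem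
      rw [← heq] at hk2m
      omega
    have hne1 : p1 (i + 1) ≠ s + 1 := by
      intro heq
      exact clash hd (j := i) (k := j2) (a := s+1) (b := s+2) (by omega) hj2m.1
        (Or.inr ⟨hpi, heq⟩) e12
    omega
  obtain ⟨jF, hjF⟩ := depth_one_crossers d1a
  have hm1 : i - 1 ∈ crossers n p1 s := mem_crossers.mpr ⟨by omega, by omega, by omega⟩
  have hm2 : i ∈ crossers n p1 s := mem_crossers.mpr ⟨by omega, by omega, by omega⟩
  rw [hjF] at hm1 hm2
  have h1 := Finset.mem_singleton.mp hm1
  have h2 := Finset.mem_singleton.mp hm2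
  omega

/-! ### Structural lemma SL2B (interior, staggered heavy segments) -/

lemma SL2B {n : ℕ} {p1 p2 : ℕ → ℕ} (hp1 : IsHamPath n p1) (hp2 : IsHamPath n p2)
    (hd : PathsEdgeDisjoint n p1 p2) {s : ℕ} (hs1 : 1 ≤ s) (hs : s + 4 ≤ n - 1)
    (d1c : segDepth n p1 (s+2) = 1) (d1d : segDepth n p1 (s+3) = 1)
    (d1e : segDepth n p1 (s+4) = 1)
    (d2b : segDepth n p2 (s+1) = 1) (d2c : segDepth n p2 (s+2) = 1)
    (d2d : segDepth n p2 (s+3) = 3) (d2e : segDepth n p2 (s+4) = 1) : False := by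
  have hn : 2 ≤ n := hp1.1
  -- p1 contains the edge {s+3, s+4}
  have hc13 : (coverers n p1 (s+3)).card = 0 := by
    have h := depth_pair hp1 (v := s+3) (by omega) (by omega)
    rw [show s+3-1 = s+2 from rfl] at h; omega
  have hc14 : (coverers n p1 (s+4)).card = 0 := by
    have h := depth_pair hp1 (v := s+4) (by omega) (by omega)
    rw [show s+4-1 = s+3 from rfl] at h; omega
  obtain ⟨jq, hjq⟩ := depth_one_crossers d1d
  have hjqm := mem_crossers.mp (by rw [hjq]; exact Finset.mem_singleton_self jq)
  have eq34 : (p1 jq = s+3 ∧ p1 (jq+1) = s+4) ∨ (p1 jq = s+4 ∧ p1 (jq+1) = s+3) := by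
    have h1 := nocov hc13 jq
    have h2 := nocov hc14 jq
    rw [mem_coverers] at h1 h2
    omega
  -- p2 cover counts
  have hc22 : (coverers n p2 (s+2)).card = 0 := by
    have h := depth_pair hp2 (v := s+2) (by omega) (by omega)
    rw [show s+2-1 = s+1 from rfl] at h; omega
  have hc23 : (coverers n p2 (s+3)).card = 1 := by
    have h := depth_pair hp2 (v := s+3) (by omega) (by omega)
    rw [show s+3-1 = s+2 from rfl] at h; omega
  have hc24 : (coverers n p2 (s+4)).card = 1 := by
    have h := depth_pair hp2 (v := s+4) (by omega) (by omega)
    rw [show s+4-1 = s+3 from rfl] at h; omega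
  -- F' : unique crosser of p2 seg (s+2), covers s+3
  obtain ⟨jF, hjF⟩ := depth_one_crossers d2c
  have hjFm := mem_crossers.mp (by rw [hjF]; exact Finset.mem_singleton_self jF)
  obtain ⟨k3, hk3⟩ := Finset.card_eq_one.mp hc23
  have hk3m := mem_coverers.mp (by rw [hk3]; exact Finset.mem_singleton_self k3)
  have hk3F : k3 = jF := by
    have hmem : k3 ∈ crossers n p2 (s+2) := mem_crossers.mpr ⟨hk3m.1, by omega, by omega⟩
    rw [hjF] at hmem; exact Finset.mem_singleton.mp hmem
  rw [hk3F] at hk3m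
  -- G' : unique crosser of p2 seg (s+4), covers s+4
  obtain ⟨jG, hjG⟩ := depth_one_crossers d2e
  obtain ⟨k4, hk4⟩ := Finset.card_eq_one.mp hc24
  have hk4m := mem_coverers.mp (by rw [hk4]; exact Finset.mem_singleton_self k4)
  have hk4G : k4 = jG := by
    have hmem : k4 ∈ crossers n p2 (s+4) := mem_crossers.mpr ⟨hk4m.1, by omega, by omega⟩
    rw [hjG] at hmem; exact Finset.mem_singleton.mp hmem
  rw [hk4G] at hk4m
  -- vertex s+3 of p2: both neighbours above s+3
  obtain ⟨i3, hi30, hi3n, hpi3, huniq3, hpre3, hano3, hbno3, habne3, ha13, han3, hb13, hbn3⟩ :=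
    interior' hp2 (v := s+3) (by omega) (by omega)
  have ha3 : s + 3 < p2 (i3 - 1) := by
    by_contra hle
    have hmem : i3 - 1 ∈ crossers n p2 (s+2) := mem_crossers.mpr ⟨by omega, by omega, by omega⟩
    have heq : i3 - 1 = jF := by rw [hjF] at hmem; exact Finset.mem_singleton.mp hmem
    rw [← heq] at hk3m
    omega
  have hb3 : s + 3 < p2 (i3 + 1) := by
    by_contra hle
    have hmem : i3 ∈ crossers n p2 (s+2) := mem_crossers.mpr ⟨by omega, by omega, by omega⟩
    have heq : i3 = jF := by rw [hjF] at hmem; exact Finset.mem_singleton.mp hmem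
    rw [← heq] at hk3m
    omega
  -- vertex s+4 of p2: both neighbours below s+4
  obtain ⟨i4, hi40, hi4n, hpi4, huniq4, hpre4, hano4, hbno4, habne4, ha14, han4, hb14, hbn4⟩ :=
    interior' hp2 (v := s+4) (by omega) (by omega)
  have ha4 : p2 (i4 - 1) < s + 4 := by
    by_contra hge
    have hmem : i4 - 1 ∈ crossers n p2 (s+4) := mem_crossers.mpr ⟨by omega, by omega, by omega⟩
    have heq : i4 - 1 = jG := by rw [hjG] at hmem; exact Finset.mem_singleton.mp hmem
    rw [← heq] at hk4m
    omega
  have hb4 : p2 (i4 + 1) < s + 4 := by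
    by_contra hge
    have hmem : i4 ∈ crossers n p2 (s+4) := mem_crossers.mpr ⟨by omega, by omega, by omega⟩
    have heq : i4 = jG := by rw [hjG] at hmem; exact Finset.mem_singleton.mp hmem
    rw [← heq] at hk4m
    omega
  -- four distinct crossers of p2 seg (s+3)
  have hm1 : i3 - 1 ∈ crossers n p2 (s+3) := mem_crossers.mpr ⟨by omega, by omega, by omega⟩
  have hm2 : i3 ∈ crossers n p2 (s+3) := mem_crossers.mpr ⟨by omega, by omega, by omega⟩
  have hm3 : i4 - 1 ∈ crossers n p2 (s+3) := mem_crossers.mpr ⟨by omega, by omega, by omega⟩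
  have hm4 : i4 ∈ crossers n p2 (s+3) := mem_crossers.mpr ⟨by omega, by omega, by omega⟩
  have hne34 : i3 ≠ i4 := by
    intro h
    rw [h] at hpi3
    omega
  have d13 : i3 - 1 ≠ i4 - 1 := by
    intro h
    have : i3 = i4 := by omega
    exact hne34 this
  have d14 : i3 - 1 ≠ i4 := by
    intro h
    have e1 : p2 (i3 - 1) = s + 4 := by rw [h]; exact hpi4
    exact clash hd (j := jq) (k := i3 - 1) (a := s+3) (b := s+4) hjqm.1 (by omega) eq34
      (Or.inr ⟨e1, hpre3⟩)
  have d23 : i3 ≠ i4 - 1 := by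
    intro h
    have e1 : p2 (i3 + 1) = s + 4 := by
      have : i3 + 1 = i4 - 1 + 1 := by omega
      rw [this, hpre4]
    exact clash hd (j := jq) (k := i3) (a := s+3) (b := s+4) hjqm.1 (by omega) eq34
      (Or.inl ⟨hpi3, e1⟩)
  have hfour := four_le_card hm1 hm2 hm3 hm4 (by omega) d13 d14 (by omega) hne34 (by omega)
  rw [← segDepth_eq, d2d] at hfour
  omega

/-! ### Structural lemma SL4a: boundary pattern (1,3,3,1)/(1,1,1,1) -/

lemma SL4a {n : ℕ} {p1 p2 : ℕ → ℕ} (hp1 : IsHamPath n p1) (hp2 : IsHamPath n p2)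
    (hd : PathsEdgeDisjoint n p1 p2) (hn : 6 ≤ n)
    (d13 : segDepth n p1 3 = 3) (d14 : segDepth n p1 4 = 1)
    (e2 : segDepth n p2 2 = 1) (e3 : segDepth n p2 3 = 1) (e4 : segDepth n p2 4 = 1) :
    False := by
  have e1 : segDepth n p2 1 = 1 := depth_first hp2
  -- p2 cover counts vanish at 2,3,4
  have hc22 : (coverers n p2 2).card = 0 := by
    have h := depth_pair hp2 (v := 2) (by omega) (by omega)
    rw [show (2:ℕ)-1 = 1 from rfl] at h; omega
  have hc23 : (coverers n p2 3).card = 0 := by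
    have h := depth_pair hp2 (v := 3) (by omega) (by omega)
    rw [show (3:ℕ)-1 = 2 from rfl] at h; omega
  have hc24 : (coverers n p2 4).card = 0 := by
    have h := depth_pair hp2 (v := 4) (by omega) (by omega)
    rw [show (4:ℕ)-1 = 3 from rfl] at h; omega
  -- unit edges {2,3} and {3,4} of p2
  obtain ⟨j2, hj2⟩ := depth_one_crossers e2
  have hj2m := mem_crossers.mp (by rw [hj2]; exact Finset.mem_singleton_self j2)
  have e23 : (p2 j2 = 2 ∧ p2 (j2+1) = 3) ∨ (p2 j2 = 3 ∧ p2 (j2+1) = 2) := by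
    have h1 := nocov hc22 j2
    have h2 := nocov hc23 j2
    rw [mem_coverers] at h1 h2
    omega
  obtain ⟨j3, hj3⟩ := depth_one_crossers e3
  have hj3m := mem_crossers.mp (by rw [hj3]; exact Finset.mem_singleton_self j3)
  have e34 : (p2 j3 = 3 ∧ p2 (j3+1) = 4) ∨ (p2 j3 = 4 ∧ p2 (j3+1) = 3) := by
    have h1 := nocov hc23 j3
    have h2 := nocov hc24 j3
    rw [mem_coverers] at h1 h2
    omega
  -- G : unique crosser of p1 seg 4, covers 4
  have hc14 : (coverers n p1 4).card = 1 := by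
    have h := depth_pair hp1 (v := 4) (by omega) (by omega)
    rw [show (4:ℕ)-1 = 3 from rfl] at h; omega
  obtain ⟨jG, hjG⟩ := depth_one_crossers d14
  obtain ⟨k4, hk4⟩ := Finset.card_eq_one.mp hc14
  have hk4m := mem_coverers.mp (by rw [hk4]; exact Finset.mem_singleton_self k4)
  have hk4G : k4 = jG := by
    have hmem : k4 ∈ crossers n p1 4 := mem_crossers.mpr ⟨hk4m.1, by omega, by omega⟩
    rw [hjG] at hmem; exact Finset.mem_singleton.mp hmem
  rw [hk4G] at hk4m
  -- vertex 4 of p1: neighbours are 1 and 2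
  obtain ⟨i4, hi40, hi4n, hpi4, huniq4, hpre4, hano4, hbno4, habne4, ha14, han4, hb14, hbn4⟩ :=
    interior' hp1 (v := 4) (by omega) (by omega)
  have ha4 : p1 (i4 - 1) < 4 := by
    by_contra hge
    have hmem : i4 - 1 ∈ crossers n p1 4 := mem_crossers.mpr ⟨by omega, by omega, by omega⟩
    have heq : i4 - 1 = jG := by rw [hjG] at hmem; exact Finset.mem_singleton.mp hmem
    rw [← heq] at hk4m
    omega
  have hb4 : p1 (i4 + 1) < 4 := by
    by_contra hge
    have hmem : i4 ∈ crossers n p1 4 := mem_crossers.mpr ⟨by omega, by omega, by omega⟩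
    have heq : i4 = jG := by rw [hjG] at hmem; exact Finset.mem_singleton.mp hmem
    rw [← heq] at hk4m
    omega
  have ha4ne3 : p1 (i4 - 1) ≠ 3 := by
    intro h
    exact clash hd (j := i4 - 1) (k := j3) (a := 3) (b := 4) (by omega) hj3m.1
      (Or.inl ⟨h, hpre4⟩) e34
  have hb4ne3 : p1 (i4 + 1) ≠ 3 := by
    intro h
    exact clash hd (j := i4) (k := j3) (a := 3) (b := 4) (by omega) hj3m.1
      (Or.inr ⟨hpi4, h⟩) e34
  have hb4ne1 : p1 (i4 + 1) ≠ 1 := by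
    intro h
    have := idx_one hp1 (i := i4 + 1) (by omega) h
    omega
  -- hence p1 (i4-1) = 1, p1 (i4+1) = 2, i4 = 1
  have ha41 : p1 (i4 - 1) = 1 := by omega
  have hi41 : i4 - 1 = 0 := idx_one hp1 (i := i4 - 1) (by omega) ha41
  have hp14 : p1 (0 + 1) = 4 := by
    rw [← hi41]; exact hpre4
  -- vertex 3 of p1
  obtain ⟨i3, hi30, hi3n, hpi3, huniq3, hpre3, hano3, hbno3, habne3, ha13, han3, hb13, hbn3⟩ :=
    interior' hp1 (v := 3) (by omega) (by omega)
  have ha3ne2 : p1 (i3 - 1) ≠ 2 := by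
    intro h
    exact clash hd (j := i3 - 1) (k := j2) (a := 2) (b := 3) (by omega) hj2m.1
      (Or.inl ⟨h, hpre3⟩) e23
  have hb3ne2 : p1 (i3 + 1) ≠ 2 := by
    intro h
    exact clash hd (j := i3) (k := j2) (a := 2) (b := 3) (by omega) hj2m.1
      (Or.inr ⟨hpi3, h⟩) e23
  have ha3ne4 : p1 (i3 - 1) ≠ 4 := by
    intro h
    exact clash hd (j := i3 - 1) (k := j3) (a := 3) (b := 4) (by omega) hj3m.1
      (Or.inr ⟨h, hpre3⟩) e34
  have hb3ne4 : p1 (i3 + 1) ≠ 4 := by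
    intro h
    exact clash hd (j := i3) (k := j3) (a := 3) (b := 4) (by omega) hj3m.1
      (Or.inl ⟨hpi3, h⟩) e34
  have ha3ne1 : p1 (i3 - 1) ≠ 1 := by
    intro h
    have h0 : i3 - 1 = 0 := idx_one hp1 (i := i3 - 1) (by omega) h
    have : p1 (0 + 1) = 3 := by rw [← h0]; exact hpre3
    omega
  have hb3ne1 : p1 (i3 + 1) ≠ 1 := by
    intro h
    have := idx_one hp1 (i := i3 + 1) (by omega) h
    omega
  -- so both neighbours of 3 are ≥ 5; both incident edges cross seg 4
  have hm1 : i3 - 1 ∈ crossers n p1 4 := mem_crossers.mpr ⟨by omega, by omega, by omega⟩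
  have hm2 : i3 ∈ crossers n p1 4 := mem_crossers.mpr ⟨by omega, by omega, by omega⟩
  rw [hjG] at hm1 hm2
  have hq1 := Finset.mem_singleton.mp hm1
  have hq2 := Finset.mem_singleton.mp hm2
  omega

/-! ### Structural lemma SL4b: boundary pattern (1,3,1,1)/(1,1,3,1) -/

/-- Helper: if `p2` owns the edge `{2,4}`, then `p1` with depths `(3,1,1)` on segments
`2,3,4` is impossible. -/
lemma SL4b_p1 {n : ℕ} {p1 p2 : ℕ → ℕ} (hp1 : IsHamPath n p1) (hp2 : IsHamPath n p2)
    (hd : PathsEdgeDisjoint n p1 p2) (hn : 6 ≤ n)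
    (d12 : segDepth n p1 2 = 3) (d13 : segDepth n p1 3 = 1) (d14 : segDepth n p1 4 = 1)
    {k : ℕ} (hk : k < n - 1)
    (e24 : (p2 k = 2 ∧ p2 (k+1) = 4) ∨ (p2 k = 4 ∧ p2 (k+1) = 2)) : False := by
  have hc1x : (coverers n p1 3).card = 1 := by
    have h := depth_pair hp1 (v := 3) (by omega) (by omega)
    rw [show (3:ℕ)-1 = 2 from rfl] at h; omega
  have hc1y : (coverers n p1 4).card = 0 := by
    have h := depth_pair hp1 (v := 4) (by omega) (by omega)
    rw [show (4:ℕ)-1 = 3 from rfl] at h; omega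
  obtain ⟨jE, hjE⟩ := depth_one_crossers d13
  have hjEm := mem_crossers.mp (by rw [hjE]; exact Finset.mem_singleton_self jE)
  obtain ⟨kE, hkE⟩ := Finset.card_eq_one.mp hc1x
  have hkEm := mem_coverers.mp (by rw [hkE]; exact Finset.mem_singleton_self kE)
  have hkEj : kE = jE := by
    have hmem : kE ∈ crossers n p1 3 := mem_crossers.mpr ⟨hkEm.1, by omega, by omega⟩
    rw [hjE] at hmem; exact Finset.mem_singleton.mp hmem
  rw [hkEj] at hkEm
  have hnoc4 := nocov hc1y jE
  rw [mem_coverers] at hnoc4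
  have hvE1 := vals hp1 (i := jE) (show jE < n by omega)
  have hvE2 := vals hp1 (i := jE + 1) (show jE + 1 < n by omega)
  have eE : (p1 jE = 1 ∧ p1 (jE+1) = 4) ∨ (p1 jE = 4 ∧ p1 (jE+1) = 1) ∨
      (p1 jE = 2 ∧ p1 (jE+1) = 4) ∨ (p1 jE = 4 ∧ p1 (jE+1) = 2) := by
    omega
  have eE14 : p1 jE = 1 ∧ p1 (jE + 1) = 4 := by
    rcases eE with h | h | h | h
    · exact h
    · exfalso
      have := idx_one hp1 (i := jE + 1) (by omega) h.2
      omega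
    · exact absurd (clash hd (j := jE) (k := k) (a := 2) (b := 4) hjEm.1 hk
        (Or.inl h) e24) (fun x => x)
    · exact absurd (clash hd (j := jE) (k := k) (a := 2) (b := 4) hjEm.1 hk
        (Or.inr ⟨h.1, h.2⟩) e24) (fun x => x)
  have hjE0 : jE = 0 := idx_one hp1 (i := jE) (by omega) eE14.1
  obtain ⟨iv, hiv0, hivn, hpiv, huniqv, hprev, hanov, hbnov, habnev, ha1v, hanv, hb1v, hbnv⟩ :=
    interior' hp1 (v := 3) (by omega) (by omega)
  have hav : p1 (iv - 1) < 3 := by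
    by_contra hge
    have hmem : iv - 1 ∈ crossers n p1 3 := mem_crossers.mpr ⟨by omega, by omega, by omega⟩
    have heq : iv - 1 = jE := by rw [hjE] at hmem; exact Finset.mem_singleton.mp hmem
    have : p1 (jE + 1) = 3 := by rw [← heq]; exact hprev
    omega
  have hbv : p1 (iv + 1) < 3 := by
    by_contra hge
    have hmem : iv ∈ crossers n p1 3 := mem_crossers.mpr ⟨by omega, by omega, by omega⟩
    have heq : iv = jE := by rw [hjE] at hmem; exact Finset.mem_singleton.mp hmem
    have : p1 jE = 3 := by rw [← heq]; exact hpiv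
    omega
  have havne1 : p1 (iv - 1) ≠ 1 := by
    intro h
    have h0 : iv - 1 = 0 := idx_one hp1 (i := iv - 1) (by omega) h
    have : p1 (jE + 1) = 3 := by rw [hjE0, ← h0]; exact hprev
    omega
  have hbvne1 : p1 (iv + 1) ≠ 1 := by
    intro h
    have := idx_one hp1 (i := iv + 1) (by omega) h
    omega
  omega

lemma SL4b {n : ℕ} {p1 p2 : ℕ → ℕ} (hp1 : IsHamPath n p1) (hp2 : IsHamPath n p2)
    (hd : PathsEdgeDisjoint n p1 p2) (hn : 6 ≤ n)
    (d12 : segDepth n p1 2 = 3) (d13 : segDepth n p1 3 = 1) (d14 : segDepth n p1 4 = 1)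
    (e2 : segDepth n p2 2 = 1) (e3 : segDepth n p2 3 = 3) (e4 : segDepth n p2 4 = 1) :
    False := by
  have e1 : segDepth n p2 1 = 1 := depth_first hp2
  have hc22 : (coverers n p2 2).card = 0 := by
    have h := depth_pair hp2 (v := 2) (by omega) (by omega)
    rw [show (2:ℕ)-1 = 1 from rfl] at h; omega
  have hc23 : (coverers n p2 3).card = 1 := by
    have h := depth_pair hp2 (v := 3) (by omega) (by omega)
    rw [show (3:ℕ)-1 = 2 from rfl] at h; omega
  have hc24 : (coverers n p2 4).card = 1 := by
    have h := depth_pair hp2 (v := 4) (by omega) (by omega)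
    rw [show (4:ℕ)-1 = 3 from rfl] at h; omega
  obtain ⟨j2, hj2⟩ := depth_one_crossers e2
  have hj2m := mem_crossers.mp (by rw [hj2]; exact Finset.mem_singleton_self j2)
  have hnoc2 := nocov hc22 j2
  rw [mem_coverers] at hnoc2
  obtain ⟨k3, hk3⟩ := Finset.card_eq_one.mp hc23
  have hk3m := mem_coverers.mp (by rw [hk3]; exact Finset.mem_singleton_self k3)
  have hk3j2 : k3 = j2 := by
    have hmem : k3 ∈ crossers n p2 2 := mem_crossers.mpr ⟨hk3m.1, by omega, by omega⟩
    rw [hj2] at hmem; exact Finset.mem_singleton.mp hmem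
  rw [hk3j2] at hk3m
  clear hk3 hk3j2
  obtain ⟨jG, hjG⟩ := depth_one_crossers e4
  obtain ⟨k4, hk4⟩ := Finset.card_eq_one.mp hc24
  have hk4m := mem_coverers.mp (by rw [hk4]; exact Finset.mem_singleton_self k4)
  have hk4G : k4 = jG := by
    have hmem : k4 ∈ crossers n p2 4 := mem_crossers.mpr ⟨hk4m.1, by omega, by omega⟩
    rw [hjG] at hmem; exact Finset.mem_singleton.mp hmem
  rw [hk4G] at hk4m
  clear hk4 hk4G hc22 hc23 hc24
  obtain ⟨i4, hi40, hi4n, hpi4, huniq4, hpre4, hano4, hbno4, habne4, ha14, han4, hb14, hbn4⟩ :=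
    interior' hp2 (v := 4) (by omega) (by omega)
  have ha4 : p2 (i4 - 1) < 4 := by
    by_contra hge
    have hmem : i4 - 1 ∈ crossers n p2 4 := mem_crossers.mpr ⟨by omega, by omega, by omega⟩
    have heq : i4 - 1 = jG := by rw [hjG] at hmem; exact Finset.mem_singleton.mp hmem
    rw [← heq] at hk4m
    omega
  have hb4 : p2 (i4 + 1) < 4 := by
    by_contra hge
    have hmem : i4 ∈ crossers n p2 4 := mem_crossers.mpr ⟨by omega, by omega, by omega⟩
    have heq : i4 = jG := by rw [hjG] at hmem; exact Finset.mem_singleton.mp hmem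
    rw [← heq] at hk4m
    omega
  clear huniq4 hjG hk4m
  obtain ⟨i3, hi30, hi3n, hpi3, huniq3, hpre3, hano3, hbno3, habne3, ha13, han3, hb13, hbn3⟩ :=
    interior' hp2 (v := 3) (by omega) (by omega)
  have ha3 : 3 < p2 (i3 - 1) := by
    by_contra hle
    have hmem : i3 - 1 ∈ crossers n p2 2 := mem_crossers.mpr ⟨by omega, by omega, by omega⟩
    have heq : i3 - 1 = j2 := by rw [hj2] at hmem; exact Finset.mem_singleton.mp hmem
    rw [← heq] at hk3m
    omega
  have hb3 : 3 < p2 (i3 + 1) := by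
    by_contra hle
    have hmem : i3 ∈ crossers n p2 2 := mem_crossers.mpr ⟨by omega, by omega, by omega⟩
    have heq : i3 = j2 := by rw [hj2] at hmem; exact Finset.mem_singleton.mp hmem
    rw [← heq] at hk3m
    omega
  clear huniq3 hj2
  have hm1 : i3 - 1 ∈ crossers n p2 3 := mem_crossers.mpr ⟨by omega, by omega, by omega⟩
  have hm2 : i3 ∈ crossers n p2 3 := mem_crossers.mpr ⟨by omega, by omega, by omega⟩
  have hm3 : i4 - 1 ∈ crossers n p2 3 := mem_crossers.mpr ⟨by omega, by omega, by omega⟩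
  have hm4 : i4 ∈ crossers n p2 3 := mem_crossers.mpr ⟨by omega, by omega, by omega⟩
  have hmj2 : j2 ∈ crossers n p2 3 := mem_crossers.mpr ⟨by omega, by omega, by omega⟩
  have hcard3 : (crossers n p2 3).card = 3 := by rw [← segDepth_eq]; exact e3
  have hne34 : i3 ≠ i4 := by
    intro h; rw [h] at hpi3; omega
  have dj2a : j2 ≠ i3 - 1 := by
    intro h
    rw [h] at hk3m
    omega
  have dj2b : j2 ≠ i3 := by
    intro h
    rw [h] at hk3m
    omega
  by_cases hj24 : j2 = i4 - 1 ∨ j2 = i4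
  swap
  · push_neg at hj24
    by_cases h14 : i3 - 1 = i4
    · have hx : i4 - 1 ≠ i3 - 1 := by omega
      have hx2 : i4 - 1 ≠ i3 := by omega
      have := four_le_card hmj2 hm1 hm2 hm3 dj2a dj2b hj24.1 (by omega) (fun h => hx h.symm)
        (fun h => hx2 h.symm)
      omega
    · have := four_le_card hmj2 hm1 hm2 hm4 dj2a dj2b hj24.2 (by omega) h14 hne34
      omega
  · have e24 : (p2 j2 = 2 ∧ p2 (j2+1) = 4) ∨ (p2 j2 = 4 ∧ p2 (j2+1) = 2) := by
      rcases hj24 with h | h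
      · have : p2 (j2 + 1) = 4 := by
          rw [show j2 + 1 = i4 - 1 + 1 by omega]; exact hpre4
        omega
      · have : p2 j2 = 4 := by rw [h]; exact hpi4
        omega
    exact SL4b_p1 hp1 hp2 hd hn d12 d13 d14 hj2m.1 e24

/-! ### Reversal -/

def revp (n : ℕ) (p : ℕ → ℕ) : ℕ → ℕ := fun i => n + 1 - p (n - 1 - i)

lemma rev_ham {n : ℕ} {p : ℕ → ℕ} (hp : IsHamPath n p) : IsHamPath n (revp n p) := by
  obtain ⟨hn, h0, hl, hb, hinj⟩ := hp
  refine ⟨hn, ?_, ?_, ?_, ?_⟩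
  · show n + 1 - p (n - 1 - 0) = 1
    rw [show n - 1 - 0 = n - 1 from rfl, hl]
    omega
  · show n + 1 - p (n - 1 - (n - 1)) = n
    rw [show n - 1 - (n - 1) = 0 by omega, h0]
    omega
  · intro i hi
    have := hb (n - 1 - i) (by omega)
    constructor <;> simp only [revp] <;> omega
  · intro i j hi hj hij
    simp only [revp] at hij
    have hbi := hb (n - 1 - i) (by omega)
    have hbj := hb (n - 1 - j) (by omega)
    have heq : p (n - 1 - i) = p (n - 1 - j) := by omega
    have := hinj _ _ (by omega) (by omega) heq
    omega

lemma rev_depth {n : ℕ} {p : ℕ → ℕ} (hp : IsHamPath n p) {s : ℕ} (h1 : 1 ≤ s)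
    (h2 : s ≤ n - 1) : segDepth n (revp n p) s = segDepth n p (n - s) := by
  have hn : 2 ≤ n := hp.1
  rw [segDepth_eq, segDepth_eq]
  have himg : crossers n (revp n p) s = (crossers n p (n - s)).image (fun j => n - 2 - j) := by
    ext j
    simp only [Finset.mem_image]
    constructor
    · intro hj
      rw [mem_crossers] at hj
      have e1 : revp n p j = n + 1 - p (n - 1 - j) := rfl
      have e2 : revp n p (j + 1) = n + 1 - p (n - 2 - j) := by
        simp only [revp]
        congr 2
        omega
      rw [e1, e2] at hj
      have hv1 := vals hp (show n - 1 - j < n by omega)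
      have hv2 := vals hp (show n - 2 - j < n by omega)
      refine ⟨n - 2 - j, ?_, by omega⟩
      rw [mem_crossers]
      have e3 : p (n - 2 - j + 1) = p (n - 1 - j) := by
        congr 1
        omega
      rw [e3]
      exact ⟨by omega, by omega, by omega⟩
    · rintro ⟨k, hk, rfl⟩
      rw [mem_crossers] at hk
      have hv1 := vals hp (show k < n by omega)
      have hv2 := vals hp (show k + 1 < n by omega)
      rw [mem_crossers]
      have e1 : revp n p (n - 2 - k) = n + 1 - p (k + 1) := by
        simp only [revp]
        congr 2
        omega
      have e2 : revp n p (n - 2 - k + 1) = n + 1 - p k := by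
        simp only [revp]
        congr 2
        omega
      rw [e1, e2]
      exact ⟨by omega, by omega, by omega⟩
  rw [himg]
  rw [Finset.card_image_of_injOn]
  intro a ha b hb hab
  simp only [Finset.mem_coe, mem_crossers] at ha hb
  simp only at hab
  omega

lemma rev_disj {n : ℕ} {p1 p2 : ℕ → ℕ} (hp1 : IsHamPath n p1) (hp2 : IsHamPath n p2)
    (hd : PathsEdgeDisjoint n p1 p2) : PathsEdgeDisjoint n (revp n p1) (revp n p2) := by
  have hn : 2 ≤ n := hp1.1
  intro i hi he
  obtain ⟨j, hj, hor⟩ := he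
  apply hd (n - 2 - i) (by omega)
  refine ⟨n - 2 - j, by omega, ?_⟩
  have a1 : revp n p2 j = n + 1 - p2 (n - 1 - j) := rfl
  have a2 : revp n p2 (j + 1) = n + 1 - p2 (n - 2 - j) := by
    simp only [revp]; congr 2; omega
  have b1 : revp n p1 i = n + 1 - p1 (n - 1 - i) := rfl
  have b2 : revp n p1 (i + 1) = n + 1 - p1 (n - 2 - i) := by
    simp only [revp]; congr 2; omega
  have c1 : p1 (n - 2 - i + 1) = p1 (n - 1 - i) := by congr 1; omega
  have c2 : p2 (n - 2 - j + 1) = p2 (n - 1 - j) := by congr 1; omega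
  rw [a1, a2, b1, b2] at hor
  rw [c1, c2]
  have v1 := vals hp1 (show n - 1 - i < n by omega)
  have v2 := vals hp1 (show n - 2 - i < n by omega)
  have v3 := vals hp2 (show n - 1 - j < n by omega)
  have v4 := vals hp2 (show n - 2 - j < n by omega)
  omega

/-! ### Wrappers -/

lemma SL2B_rev {n : ℕ} {p1 p2 : ℕ → ℕ} (hp1 : IsHamPath n p1) (hp2 : IsHamPath n p2)
    (hd : PathsEdgeDisjoint n p1 p2) {s : ℕ} (hs1 : 1 ≤ s) (hs : s + 4 ≤ n - 1)
    (d1a : segDepth n p1 s = 1) (d1b : segDepth n p1 (s+1) = 1) (d1c : segDepth n p1 (s+2) = 1)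
    (d2a : segDepth n p2 s = 1) (d2b : segDepth n p2 (s+1) = 3) (d2c : segDepth n p2 (s+2) = 1)
    (d2d : segDepth n p2 (s+3) = 1) : False := by
  have hn : 2 ≤ n := hp1.1
  have ht1 : 1 ≤ n - (s + 4) := by omega
  have ht4 : n - (s + 4) + 4 ≤ n - 1 := by omega
  have r : ∀ (p : ℕ → ℕ), IsHamPath n p → ∀ j, j ≤ 4 →
      segDepth n (revp n p) (n - (s + 4) + j) = segDepth n p (s + 4 - j) := by
    intro p hp j hj
    rw [rev_depth hp (by omega) (by omega)]
    congr 1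
    omega
  have q1 : segDepth n (revp n p1) (n - (s + 4) + 2) = 1 := by
    rw [r p1 hp1 2 (by omega), show s + 4 - 2 = s + 2 by omega]; exact d1c
  have q2 : segDepth n (revp n p1) (n - (s + 4) + 3) = 1 := by
    rw [r p1 hp1 3 (by omega), show s + 4 - 3 = s + 1 by omega]; exact d1b
  have q3 : segDepth n (revp n p1) (n - (s + 4) + 4) = 1 := by
    rw [r p1 hp1 4 (by omega), show s + 4 - 4 = s by omega]; exact d1a
  have q4 : segDepth n (revp n p2) (n - (s + 4) + 1) = 1 := by
    rw [r p2 hp2 1 (by omega), show s + 4 - 1 = s + 3 by omega]; exact d2d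
  have q5 : segDepth n (revp n p2) (n - (s + 4) + 2) = 1 := by
    rw [r p2 hp2 2 (by omega), show s + 4 - 2 = s + 2 by omega]; exact d2c
  have q6 : segDepth n (revp n p2) (n - (s + 4) + 3) = 3 := by
    rw [r p2 hp2 3 (by omega), show s + 4 - 3 = s + 1 by omega]; exact d2b
  have q7 : segDepth n (revp n p2) (n - (s + 4) + 4) = 1 := by
    rw [r p2 hp2 4 (by omega), show s + 4 - 4 = s by omega]; exact d2a
  exact SL2B (rev_ham hp1) (rev_ham hp2) (rev_disj hp1 hp2 hd) ht1 ht4 q1 q2 q3 q4 q5 q6 q7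

lemma SL2main {n : ℕ} {p1 p2 : ℕ → ℕ} (hp1 : IsHamPath n p1) (hp2 : IsHamPath n p2)
    (hd : PathsEdgeDisjoint n p1 p2) {s : ℕ} (hs1 : 1 ≤ s) (hs : s + 4 ≤ n - 1)
    (f0 : segDepth n p1 s + segDepth n p2 s = 2)
    (f1 : segDepth n p1 (s+1) + segDepth n p2 (s+1) = 4)
    (f2 : segDepth n p1 (s+2) + segDepth n p2 (s+2) = 2)
    (f3 : segDepth n p1 (s+3) + segDepth n p2 (s+3) = 4)
    (f4 : segDepth n p1 (s+4) + segDepth n p2 (s+4) = 2) : False := by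
  have o0a := depth_odd hp1 (s := s) hs1 (by omega)
  have o0b := depth_odd hp2 (s := s) hs1 (by omega)
  have o1a := depth_odd hp1 (s := s+1) (by omega) (by omega)
  have o1b := depth_odd hp2 (s := s+1) (by omega) (by omega)
  have o2a := depth_odd hp1 (s := s+2) (by omega) (by omega)
  have o2b := depth_odd hp2 (s := s+2) (by omega) (by omega)
  have o3a := depth_odd hp1 (s := s+3) (by omega) (by omega)
  have o3b := depth_odd hp2 (s := s+3) (by omega) (by omega)
  have o4a := depth_odd hp1 (s := s+4) (by omega) (by omega)
  have o4b := depth_odd hp2 (s := s+4) (by omega) (by omega)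
  have g0a : segDepth n p1 s = 1 := by omega
  have g0b : segDepth n p2 s = 1 := by omega
  have g2a : segDepth n p1 (s+2) = 1 := by omega
  have g2b : segDepth n p2 (s+2) = 1 := by omega
  have g4a : segDepth n p1 (s+4) = 1 := by omega
  have g4b : segDepth n p2 (s+4) = 1 := by omega
  have hx1 : segDepth n p1 (s+1) = 1 ∨ segDepth n p1 (s+1) = 3 := by omega
  have hx3 : segDepth n p1 (s+3) = 1 ∨ segDepth n p1 (s+3) = 3 := by omega
  rcases hx1 with hx1 | hx1 <;> rcases hx3 with hx3 | hx3
  · exact SL2A hp2 hp1 (disj_symm hd) hs1 (by omega) g0b (by omega) g2b (by omega)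
      g0a hx1 g2a
  · exact SL2B_rev hp1 hp2 hd hs1 hs g0a hx1 g2a g0b (by omega) g2b (by omega)
  · exact SL2B hp1 hp2 hd hs1 hs g2a hx3 g4a (by omega) g2b (by omega) g4b
  · exact SL2A hp1 hp2 hd hs1 (by omega) g0a hx1 g2a hx3 g0b (by omega) g2b

lemma SL3main {n : ℕ} {p1 p2 : ℕ → ℕ} (hp1 : IsHamPath n p1) (hp2 : IsHamPath n p2)
    (hd : PathsEdgeDisjoint n p1 p2) (hn : 6 ≤ n)
    (f2 : segDepth n p1 2 + segDepth n p2 2 = 4)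
    (f3 : segDepth n p1 3 + segDepth n p2 3 = 2) : False := by
  have o2a := depth_odd hp1 (s := 2) (by omega) (by omega)
  have o2b := depth_odd hp2 (s := 2) (by omega) (by omega)
  have o3a := depth_odd hp1 (s := 3) (by omega) (by omega)
  have o3b := depth_odd hp2 (s := 3) (by omega) (by omega)
  have h3a : segDepth n p1 3 = 1 := by omega
  have h3b : segDepth n p2 3 = 1 := by omega
  have hx : segDepth n p1 2 = 3 ∨ segDepth n p2 2 = 3 := by omega
  rcases hx with h | h
  · exact SL3' hp1 hp2 hd (by omega) h h3a (by omega) h3b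
  · exact SL3' hp2 hp1 (disj_symm hd) (by omega) h h3b (by omega) h3a

lemma SL4main {n : ℕ} {p1 p2 : ℕ → ℕ} (hp1 : IsHamPath n p1) (hp2 : IsHamPath n p2)
    (hd : PathsEdgeDisjoint n p1 p2) (hn : 6 ≤ n)
    (f2 : segDepth n p1 2 + segDepth n p2 2 = 4)
    (f3 : segDepth n p1 3 + segDepth n p2 3 = 4)
    (f4 : segDepth n p1 4 + segDepth n p2 4 = 2) : False := by
  have o2a := depth_odd hp1 (s := 2) (by omega) (by omega)
  have o2b := depth_odd hp2 (s := 2) (by omega) (by omega)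
  have o3a := depth_odd hp1 (s := 3) (by omega) (by omega)
  have o3b := depth_odd hp2 (s := 3) (by omega) (by omega)
  have o4a := depth_odd hp1 (s := 4) (by omega) (by omega)
  have o4b := depth_odd hp2 (s := 4) (by omega) (by omega)
  have h4a : segDepth n p1 4 = 1 := by omega
  have h4b : segDepth n p2 4 = 1 := by omega
  have hx2 : segDepth n p1 2 = 1 ∨ segDepth n p1 2 = 3 := by omega
  have hx3 : segDepth n p1 3 = 1 ∨ segDepth n p1 3 = 3 := by omega
  rcases hx2 with hx2 | hx2 <;> rcases hx3 with hx3 | hx3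
  · exact SL4a hp2 hp1 (disj_symm hd) hn (by omega) h4b hx2 hx3 h4a
  · exact SL4b hp2 hp1 (disj_symm hd) hn (by omega) (by omega) h4b hx2 hx3 h4a
  · exact SL4b hp1 hp2 hd hn hx2 hx3 h4a (by omega) (by omega) h4b
  · exact SL4a hp1 hp2 hd hn hx3 h4a (by omega) (by omega) h4b

lemma SL3main_rev {n : ℕ} {p1 p2 : ℕ → ℕ} (hp1 : IsHamPath n p1) (hp2 : IsHamPath n p2)
    (hd : PathsEdgeDisjoint n p1 p2) (hn : 6 ≤ n)
    (f2 : segDepth n p1 (n-2) + segDepth n p2 (n-2) = 4)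
    (f3 : segDepth n p1 (n-3) + segDepth n p2 (n-3) = 2) : False := by
  apply SL3main (rev_ham hp1) (rev_ham hp2) (rev_disj hp1 hp2 hd) hn
  · rw [rev_depth hp1 (by omega) (by omega), rev_depth hp2 (by omega) (by omega)]
    exact f2
  · rw [rev_depth hp1 (by omega) (by omega), rev_depth hp2 (by omega) (by omega)]
    exact f3

lemma SL4main_rev {n : ℕ} {p1 p2 : ℕ → ℕ} (hp1 : IsHamPath n p1) (hp2 : IsHamPath n p2)
    (hd : PathsEdgeDisjoint n p1 p2) (hn : 6 ≤ n)
    (f2 : segDepth n p1 (n-2) + segDepth n p2 (n-2) = 4)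
    (f3 : segDepth n p1 (n-3) + segDepth n p2 (n-3) = 4)
    (f4 : segDepth n p1 (n-4) + segDepth n p2 (n-4) = 2) : False := by
  apply SL4main (rev_ham hp1) (rev_ham hp2) (rev_disj hp1 hp2 hd) hn
  · rw [rev_depth hp1 (by omega) (by omega), rev_depth hp2 (by omega) (by omega)]
    exact f2
  · rw [rev_depth hp1 (by omega) (by omega), rev_depth hp2 (by omega) (by omega)]
    exact f3
  · rw [rev_depth hp1 (by omega) (by omega), rev_depth hp2 (by omega) (by omega)]
    exact f4

lemma SL1main {n : ℕ} {p1 p2 : ℕ → ℕ} (hp1 : IsHamPath n p1) (hp2 : IsHamPath n p2)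
    (hnc : ¬ ∃ v, 1 < v ∧ v < n ∧ ¬ CoversVertex n p1 v ∧ ¬ CoversVertex n p2 v)
    {s : ℕ} (hs1 : 1 ≤ s) (hs : s + 1 ≤ n - 1)
    (f0 : segDepth n p1 s + segDepth n p2 s = 2)
    (f1 : segDepth n p1 (s+1) + segDepth n p2 (s+1) = 2) : False := by
  have hn : 2 ≤ n := hp1.1
  have o0a := depth_odd hp1 (s := s) hs1 (by omega)
  have o0b := depth_odd hp2 (s := s) hs1 (by omega)
  have ca : (coverers n p1 (s+1)).card = 0 := by
    have h := depth_pair hp1 (v := s+1) (by omega) (by omega)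
    rw [show s+1-1 = s from rfl] at h
    omega
  have cb : (coverers n p2 (s+1)).card = 0 := by
    have h := depth_pair hp2 (v := s+1) (by omega) (by omega)
    rw [show s+1-1 = s from rfl] at h
    omega
  apply hnc
  refine ⟨s + 1, by omega, by omega, ?_, ?_⟩
  · intro hcv
    rw [coversVertex_iff] at hcv
    have := Finset.card_pos.mpr hcv
    omega
  · intro hcv
    rw [coversVertex_iff] at hcv
    have := Finset.card_pos.mpr hcv
    omega

/-! ### Cost identity -/

lemma pathCost_eq {n : ℕ} {p : ℕ → ℕ} (hp : IsHamPath n p) :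
    pathCost n p = ∑ s ∈ Finset.Icc 1 (n - 1), segDepth n p s := by
  symm
  calc ∑ s ∈ Finset.Icc 1 (n - 1), segDepth n p s
      = ∑ s ∈ Finset.Icc 1 (n - 1), ∑ i ∈ Finset.range (n - 1),
          (if min (p i) (p (i + 1)) ≤ s ∧ s < max (p i) (p (i + 1)) then 1 else 0) := by
        refine Finset.sum_congr rfl (fun s _ => ?_)
        rw [segDepth, Finset.card_filter]
    _ = ∑ i ∈ Finset.range (n - 1), ∑ s ∈ Finset.Icc 1 (n - 1),
          (if min (p i) (p (i + 1)) ≤ s ∧ s < max (p i) (p (i + 1)) then 1 else 0) :=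
        Finset.sum_comm
    _ = ∑ i ∈ Finset.range (n - 1), (max (p i) (p (i + 1)) - min (p i) (p (i + 1))) := by
        refine Finset.sum_congr rfl (fun i hi => ?_)
        simp only [Finset.mem_range] at hi
        have hb1 := vals hp (show i < n by omega)
        have hb2 := vals hp (show i + 1 < n by omega)
        rw [← Finset.card_filter]
        have heq : (Finset.Icc 1 (n-1)).filter
            (fun s => min (p i) (p (i+1)) ≤ s ∧ s < max (p i) (p (i+1)))
            = Finset.Ico (min (p i) (p (i+1))) (max (p i) (p (i+1))) := by
          ext s
          simp only [Finset.mem_filter, Finset.mem_Icc, Finset.mem_Ico]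
          omega
        rw [heq, Nat.card_Ico]
    _ = pathCost n p := rfl

end Stmt7Aux

/-- for `n ≥ 6`, an edge-disjoint pair of Hamiltonian (1,n)-paths
with no cut-point has total cost at least `16(n-1)/5`. -/
theorem stmt_7 (n : ℕ) (hn : 6 ≤ n) (p1 p2 : ℕ → ℕ)
    (h1 : IsHamPath n p1) (h2 : IsHamPath n p2)
    (hd : PathsEdgeDisjoint n p1 p2)
    (hnc : ¬ ∃ v, 1 < v ∧ v < n ∧ ¬ CoversVertex n p1 v ∧ ¬ CoversVertex n p2 v) :
    (16 : ℚ) * ((n : ℚ) - 1) / 5 ≤ ((pathCost n p1 + pathCost n p2 : ℕ) : ℚ) := by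
  classical
  have hn2 : 2 ≤ n := h1.1
  have key : 16 * ((n - 1 : ℕ) : ℤ) ≤
      5 * ∑ s ∈ Finset.Icc 1 (n - 1),
        ((min (segDepth n p1 s + segDepth n p2 s) 6 : ℕ) : ℤ) := by
    refine Stmt7Aux.arith (n - 1) (by omega)
      (fun s => min (segDepth n p1 s + segDepth n p2 s) 6) ?_ ?_ ?_ ?_ ?_ ?_ ?_ ?_ ?_
    · intro s ha hb
      rw [Stmt7Aux.mem_tv]
      have o1 := Stmt7Aux.depth_odd h1 ha hb
      have o2 := Stmt7Aux.depth_odd h2 ha hb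
      omega
    · have a1 := Stmt7Aux.depth_first h1
      have a2 := Stmt7Aux.depth_first h2
      omega
    · have a1 := Stmt7Aux.depth_last h1
      have a2 := Stmt7Aux.depth_last h2
      omega
    · intro s ha hb hcon
      exact Stmt7Aux.SL1main h1 h2 hnc ha hb (by omega) (by omega)
    · intro s ha hb hcon
      exact Stmt7Aux.SL2main h1 h2 hd ha hb (by omega) (by omega) (by omega) (by omega)
        (by omega)
    · rintro ⟨c2, c3⟩
      exact Stmt7Aux.SL3main h1 h2 hd hn (by omega) (by omega)
    · rintro ⟨c2, c3, c4⟩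
      exact Stmt7Aux.SL4main h1 h2 hd hn (by omega) (by omega) (by omega)
    · rintro ⟨c2, c3⟩
      rw [show n - 1 - 1 = n - 2 by omega] at c2
      rw [show n - 1 - 2 = n - 3 by omega] at c3
      exact Stmt7Aux.SL3main_rev h1 h2 hd hn (by omega) (by omega)
    · rintro ⟨c2, c3, c4⟩
      rw [show n - 1 - 1 = n - 2 by omega] at c2
      rw [show n - 1 - 2 = n - 3 by omega] at c3
      rw [show n - 1 - 3 = n - 4 by omega] at c4
      exact Stmt7Aux.SL4main_rev h1 h2 hd hn (by omega) (by omega) (by omega)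
  rw [← Nat.cast_sum] at key
  have keyN : 16 * (n - 1) ≤
      5 * ∑ s ∈ Finset.Icc 1 (n - 1), min (segDepth n p1 s + segDepth n p2 s) 6 := by
    exact_mod_cast key
  have hmono : ∑ s ∈ Finset.Icc 1 (n - 1), min (segDepth n p1 s + segDepth n p2 s) 6 ≤
      ∑ s ∈ Finset.Icc 1 (n - 1), (segDepth n p1 s + segDepth n p2 s) :=
    Finset.sum_le_sum (fun s _ => min_le_left _ _)
  have hcost : pathCost n p1 + pathCost n p2
      = ∑ s ∈ Finset.Icc 1 (n - 1), (segDepth n p1 s + segDepth n p2 s) := by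
    rw [Stmt7Aux.pathCost_eq h1, Stmt7Aux.pathCost_eq h2, ← Finset.sum_add_distrib]
  have main : 16 * (n - 1) ≤ 5 * (pathCost n p1 + pathCost n p2) := by
    rw [hcost]
    omega
  rw [div_le_iff₀ (by norm_num : (0:ℚ) < 5)]
  have hq : ((16 * (n - 1) : ℕ) : ℚ) ≤ ((5 * (pathCost n p1 + pathCost n p2) : ℕ) : ℚ) :=
    Nat.cast_le.mpr main
  have h16 : ((n - 1 : ℕ) : ℚ) = (n : ℚ) - 1 := by
    rw [Nat.cast_sub (by omega : 1 ≤ n)]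
    norm_num
  push_cast at hq
  rw [h16] at hq
  push_cast
  linarith
end

section
/- For every n ≥ 6, every pair of edge-disjoint Hamiltonian paths from 1 to n on {1,...,n}, with edge cost |j−k|, has total cost at least 16(n−1)/5. -/
/-!
The cost of a path is the sum, over the segments `[s, s+1]` with `1 ≤ s < n`, of the number of
its edges jumping over the segment (`segDepth`). A path from `1` to `n` jumps over each such
segment an odd number of times, and exactly once only if it visits `1, …, s` in its first `s`
steps (`SplitsAt`). Hence the two depths at `s` add up to at least `4`, except at segments
where both paths split, where they add up to at least `2`.

Both paths split at `0` and at `n`. If both split at `s` and at `s + k` with `k ∈ {2, 3}`, they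
traverse the same `k` vertices in the same `k` steps, and two such paths share an edge. So the
set of points of `[0, n]` at which both paths split has no two elements at distance `2` or `3`,
and a counting argument bounds it by `(2n + 8) / 5` elements. At most `2(n - 1) / 5` segments are
therefore exceptional, and the total cost is at least `4(n - 1) - 2 · 2(n - 1) / 5 = 16(n - 1) / 5`.
-/

open Finset

-- The sharper bound when `L - 1 ∉ T` is what carries the induction.
theorem Finset.five_mul_card_le_of_no_gap_two_three (T : Finset ℕ)
    (hT : ∀ a ∈ T, a + 2 ∉ T ∧ a + 3 ∉ T) (L : ℕ) (hL : ∀ x ∈ T, x ≤ L) :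
    5 * #T ≤ 2 * L + 8 ∧ ((∀ x ∈ T, x + 1 ≠ L) → 5 * #T ≤ 2 * L + 5) := by
  induction T using Finset.induction_on_max generalizing L with
  | empty => simp
  | insert a s hlt ih =>
    have hgap : ∀ x ∈ s, x + 2 ≠ a ∧ x + 3 ≠ a := fun x hx => by
      have := hT x (mem_insert_of_mem hx)
      exact ⟨fun h => this.1 (h ▸ mem_insert_self a s), fun h => this.2 (h ▸ mem_insert_self a s)⟩
    replace ih := ih fun x hx => (hT x (mem_insert_of_mem hx)).imp
      (mt (mem_insert_of_mem ·)) (mt (mem_insert_of_mem ·))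
    have haL := hL a (mem_insert_self a s)
    rw [card_insert_of_notMem fun h => (hlt a h).false]
    rcases s.eq_empty_or_nonempty with rfl | ⟨y, hy⟩
    · simp only [card_empty]; omega
    have := hlt y hy
    have hnear := (ih (a - 1) fun x hx => by have := hlt x hx; omega).2
      fun x hx => by have := hlt x hx; have := hgap x hx; omega
    refine ⟨by omega, fun hL1 => ?_⟩
    obtain rfl | haL := haL.eq_or_lt
    · -- `a - 1 ∉ T`, so the rest of `T` lies below `a - 3`
      have hfar := (ih (a - 4) fun x hx => by
        have := hlt x hx; have := hgap x hx; have := hL1 x (mem_insert_of_mem hx); omega).1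
      have := hgap y hy; have := hL1 y (mem_insert_of_mem hy)
      omega
    · have := hL1 a (mem_insert_self a s)
      omega

theorem Finset.odd_card_filter_range_not_iff {P : ℕ → Prop} [DecidablePred P] {m : ℕ}
    (h0 : P 0) (hm : ¬ P m) : Odd #{i ∈ range m | ¬(P i ↔ P (i + 1))} := by
  let f : ℕ → ZMod 2 := fun i => if P i then 1 else 0
  rw [← ZMod.natCast_eq_one_iff_odd, card_filter, Nat.cast_sum]
  calc ∑ i ∈ range m, ((if ¬(P i ↔ P (i + 1)) then 1 else 0 : ℕ) : ZMod 2)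
      = ∑ i ∈ range m, (f (i + 1) - f i) := by
        refine sum_congr rfl fun i _ => ?_
        by_cases P i <;> by_cases P (i + 1) <;> simp_all [f]
    _ = 1 := by rw [sum_range_sub]; simp [f, h0, hm]

theorem iff_le_of_unique_change {P : ℕ → Prop} {m c : ℕ} (h0 : P 0)
    (hc : ¬(P c ↔ P (c + 1))) (huniq : ∀ i < m, ¬(P i ↔ P (i + 1)) → i = c) :
    ∀ i ≤ m, (P i ↔ i ≤ c) := by
  intro i
  induction i with
  | zero => simp [h0]
  | succ i ih =>
    intro hi
    by_cases hic : i = c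
    · subst hic
      have := (ih (by omega)).2 le_rfl
      simp only [add_le_iff_nonpos_right, Nat.le_zero, one_ne_zero, iff_false]
      tauto
    · have := ih (by omega)
      have := huniq i (by omega)
      rw [show i + 1 ≤ c ↔ i ≤ c by omega]
      tauto

def SplitsAt (n : ℕ) (p : ℕ → ℕ) (s : ℕ) : Prop :=
  ∀ i < n, (p i ≤ s ↔ i < s)

instance (n : ℕ) (p : ℕ → ℕ) : DecidablePred (SplitsAt n p) :=
  fun _ => inferInstanceAs (Decidable (∀ i < n, _))

variable {n : ℕ} {p : ℕ → ℕ}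

theorem segDepth_eq_card_filter_not_iff (s : ℕ) :
    segDepth n p s = #{i ∈ range (n - 1) | ¬(p i ≤ s ↔ p (i + 1) ≤ s)} := by
  unfold segDepth
  congr 1
  exact filter_congr fun i _ => by omega

namespace IsHamPath

theorem apply_ne (hp : IsHamPath n p) {i j : ℕ} (hi : i < n) (hj : j < n)
    (hij : i ≠ j) : p i ≠ p j :=
  fun h => hij (hp.2.2.2.2 i j hi hj h)

theorem image_range (hp : IsHamPath n p) : (range n).image p = Icc 1 n := by
  obtain ⟨-, -, -, hmem, hinj⟩ := hp
  refine eq_of_subset_of_card_le (fun v hv => ?_) ?_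
  · obtain ⟨i, hi, rfl⟩ := mem_image.1 hv
    exact mem_Icc.2 (hmem i (mem_range.1 hi))
  · rw [card_image_of_injOn fun i hi j hj => hinj i j (mem_range.1 hi) (mem_range.1 hj)]
    simp

theorem card_filter_le (hp : IsHamPath n p) {s : ℕ} (hs : s ≤ n) :
    #{i ∈ range n | p i ≤ s} = s := by
  have hinj := hp.2.2.2.2
  rw [← card_image_of_injOn fun i hi j hj =>
      hinj i j (mem_range.1 (mem_filter.1 hi).1) (mem_range.1 (mem_filter.1 hj).1),
    ← filter_image (p := (· ≤ s)), hp.image_range]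
  convert Nat.card_Icc 1 s using 2
  · ext v; simp only [mem_filter, mem_Icc]; omega
  · omega

theorem pathCost_eq_sum_segDepth (hp : IsHamPath n p) :
    pathCost n p = ∑ s ∈ Ico 1 n, segDepth n p s := by
  have hmem := hp.2.2.2.1
  have hedge : ∀ i ∈ range (n - 1), max (p i) (p (i + 1)) - min (p i) (p (i + 1)) =
      #{s ∈ Ico 1 n | min (p i) (p (i + 1)) ≤ s ∧ s < max (p i) (p (i + 1))} := by
    intro i hi
    have := hmem i (by simp at hi; omega)
    have := hmem (i + 1) (by simp at hi; omega)
    rw [← Nat.card_Ico]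
    congr 1
    ext s; simp only [mem_filter, mem_Ico]; omega
  simp only [pathCost, sum_congr rfl hedge, segDepth, card_filter]
  exact sum_comm

theorem odd_segDepth (hp : IsHamPath n p) {s : ℕ} (hs : 1 ≤ s) (hsn : s < n) :
    Odd (segDepth n p s) := by
  obtain ⟨-, h0, hlast, -, -⟩ := hp
  rw [segDepth_eq_card_filter_not_iff]
  exact odd_card_filter_range_not_iff (P := (p · ≤ s)) (by simp [h0, hs]) (by simp [hlast, hsn])

theorem splitsAt_zero (hp : IsHamPath n p) : SplitsAt n p 0 :=
  fun i hi => by have := hp.2.2.2.1 i hi; omega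

theorem splitsAt_self (hp : IsHamPath n p) : SplitsAt n p n :=
  fun i hi => by have := hp.2.2.2.1 i hi; omega

theorem splitsAt_of_segDepth_eq_one (hp : IsHamPath n p) {s : ℕ} (hs : 1 ≤ s) (hsn : s < n)
    (h : segDepth n p s = 1) : SplitsAt n p s := by
  obtain ⟨c, hc⟩ := card_eq_one.1 (segDepth_eq_card_filter_not_iff (p := p) s ▸ h)
  have hcmem := hc ▸ mem_singleton_self c
  simp only [mem_filter, mem_range] at hcmem
  have hle : ∀ i ≤ n - 1, (p i ≤ s ↔ i ≤ c) :=
    iff_le_of_unique_change (P := (p · ≤ s)) (by simp [hp.2.1, hs]) hcmem.2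
      fun i hi hi' => mem_singleton.1 (hc ▸ mem_filter.2 ⟨mem_range.2 hi, hi'⟩)
  have hcard : #{i ∈ range n | p i ≤ s} = c + 1 := by
    rw [← card_range (c + 1)]
    congr 1
    ext i
    simp only [mem_filter, mem_range]
    constructor
    · rintro ⟨hi, his⟩; have := (hle i (by omega)).1 his; omega
    · intro hi; exact ⟨by omega, (hle i (by omega)).2 (by omega)⟩
  rw [hp.card_filter_le hsn.le] at hcard
  intro i hi
  rw [hle i (by omega)]
  omega

theorem splitsAt_or_three_le_segDepth (hp : IsHamPath n p) {s : ℕ} (hs : 1 ≤ s) (hsn : s < n) :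
    SplitsAt n p s ∨ 3 ≤ segDepth n p s := by
  obtain ⟨k, hk⟩ := hp.odd_segDepth hs hsn
  rcases k with _ | k
  · exact .inl (hp.splitsAt_of_segDepth_eq_one hs hsn hk)
  · exact .inr (by omega)

end IsHamPath

theorem SplitsAt.mem_Ioc {s t i : ℕ} (hs : SplitsAt n p s) (ht : SplitsAt n p t) (hi : i < n)
    (hsi : s ≤ i) (hit : i < t) : s < p i ∧ p i ≤ t := by
  have := hs i hi; have := ht i hi; omega

theorem PathsEdgeDisjoint.not_shared_edge {q : ℕ → ℕ} (hd : PathsEdgeDisjoint n p q) {i j : ℕ}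
    (hi : i < n - 1) (hj : j < n - 1) :
    ¬((q j = p i ∧ q (j + 1) = p (i + 1)) ∨ (q j = p (i + 1) ∧ q (j + 1) = p i)) :=
  fun h => hd i hi ⟨j, hj, h⟩

section Gaps

variable {q : ℕ → ℕ} (hd : PathsEdgeDisjoint n p q) (hp : IsHamPath n p) (hq : IsHamPath n q)
  {s : ℕ} (hs : SplitsAt n p s ∧ SplitsAt n q s)
include hd hp hq hs

theorem PathsEdgeDisjoint.not_splitsAt_add_two (hsn : s + 2 ≤ n)
    (hs' : SplitsAt n p (s + 2) ∧ SplitsAt n q (s + 2)) : False := by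
  have := hs.1.mem_Ioc hs'.1 (i := s) (by omega) le_rfl (by omega)
  have := hs.1.mem_Ioc hs'.1 (i := s + 1) (by omega) (by omega) (by omega)
  have := hs.2.mem_Ioc hs'.2 (i := s) (by omega) le_rfl (by omega)
  have := hs.2.mem_Ioc hs'.2 (i := s + 1) (by omega) (by omega) (by omega)
  have := hp.apply_ne (i := s) (j := s + 1) (by omega) (by omega) (by omega)
  have := hq.apply_ne (i := s) (j := s + 1) (by omega) (by omega) (by omega)
  have := hd.not_shared_edge (i := s) (j := s) (by omega) (by omega)
  omega

theorem PathsEdgeDisjoint.not_splitsAt_add_three (hsn : s + 3 ≤ n)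
    (hs' : SplitsAt n p (s + 3) ∧ SplitsAt n q (s + 3)) : False := by
  have := hs.1.mem_Ioc hs'.1 (i := s) (by omega) le_rfl (by omega)
  have := hs.1.mem_Ioc hs'.1 (i := s + 1) (by omega) (by omega) (by omega)
  have := hs.1.mem_Ioc hs'.1 (i := s + 1 + 1) (by omega) (by omega) (by omega)
  have := hs.2.mem_Ioc hs'.2 (i := s) (by omega) le_rfl (by omega)
  have := hs.2.mem_Ioc hs'.2 (i := s + 1) (by omega) (by omega) (by omega)
  have := hs.2.mem_Ioc hs'.2 (i := s + 1 + 1) (by omega) (by omega) (by omega)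
  have := hp.apply_ne (i := s) (j := s + 1) (by omega) (by omega) (by omega)
  have := hp.apply_ne (i := s) (j := s + 1 + 1) (by omega) (by omega) (by omega)
  have := hp.apply_ne (i := s + 1) (j := s + 1 + 1) (by omega) (by omega) (by omega)
  have := hq.apply_ne (i := s) (j := s + 1) (by omega) (by omega) (by omega)
  have := hq.apply_ne (i := s) (j := s + 1 + 1) (by omega) (by omega) (by omega)
  have := hq.apply_ne (i := s + 1) (j := s + 1 + 1) (by omega) (by omega) (by omega)
  -- compare the middle vertices of the two three-vertex paths
  rcases (by omega : q (s + 1) = p (s + 1) ∨ q (s + 1) = p s ∨ q (s + 1) = p (s + 1 + 1))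
    with hmid | hmid | hmid
  · rcases (by omega : q s = p s ∨ q s = p (s + 1 + 1)) with h | h
    · exact hd.not_shared_edge (i := s) (j := s) (by omega) (by omega) (by omega)
    · exact hd.not_shared_edge (i := s + 1) (j := s) (by omega) (by omega) (by omega)
  · rcases (by omega : q s = p (s + 1) ∨ q (s + 1 + 1) = p (s + 1)) with h | h
    · exact hd.not_shared_edge (i := s) (j := s) (by omega) (by omega) (by omega)
    · exact hd.not_shared_edge (i := s) (j := s + 1) (by omega) (by omega) (by omega)
  · rcases (by omega : q s = p (s + 1) ∨ q (s + 1 + 1) = p (s + 1)) with h | h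
    · exact hd.not_shared_edge (i := s + 1) (j := s) (by omega) (by omega) (by omega)
    · exact hd.not_shared_edge (i := s + 1) (j := s + 1) (by omega) (by omega) (by omega)

end Gaps

theorem four_le_segDepth_add {q : ℕ → ℕ} (hp : IsHamPath n p) (hq : IsHamPath n q) {s : ℕ}
    (hs : 1 ≤ s) (hsn : s < n) :
    4 ≤ segDepth n p s + segDepth n q s + 2 * if SplitsAt n p s ∧ SplitsAt n q s then 1 else 0 := by
  have := (hp.odd_segDepth hs hsn).pos
  have := (hq.odd_segDepth hs hsn).pos
  by_cases h : SplitsAt n p s ∧ SplitsAt n q s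
  · rw [if_pos h]; omega
  · rw [if_neg h]
    rcases hp.splitsAt_or_three_le_segDepth hs hsn with hps | hp3 <;>
    rcases hq.splitsAt_or_three_le_segDepth hs hsn with hqs | hq3
    exacts [(h ⟨hps, hqs⟩).elim, by omega, by omega, by omega]

theorem sixteen_mul_le_five_mul_pathCost_add {q : ℕ → ℕ} (hp : IsHamPath n p)
    (hq : IsHamPath n q) (hd : PathsEdgeDisjoint n p q) :
    16 * (n - 1) ≤ 5 * (pathCost n p + pathCost n q) := by
  set T := {s ∈ Ico 1 n | SplitsAt n p s ∧ SplitsAt n q s}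
  have hsum : 4 * (n - 1) ≤ pathCost n p + pathCost n q + 2 * #T := by
    rw [hp.pathCost_eq_sum_segDepth, hq.pathCost_eq_sum_segDepth, ← sum_add_distrib, card_filter,
      mul_sum, ← sum_add_distrib]
    calc 4 * (n - 1) = ∑ s ∈ Ico 1 n, 4 := by simp [mul_comm]
      _ ≤ _ := sum_le_sum fun s hs =>
        four_le_segDepth_add hp hq (mem_Ico.1 hs).1 (mem_Ico.1 hs).2
  have hn := hp.1
  set S := insert 0 (insert n T)
  have hsplit : ∀ a ∈ S, a ≤ n ∧ SplitsAt n p a ∧ SplitsAt n q a := by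
    intro a ha
    rcases mem_insert.1 ha with rfl | ha
    · exact ⟨by omega, hp.splitsAt_zero, hq.splitsAt_zero⟩
    rcases mem_insert.1 ha with rfl | ha
    · exact ⟨le_rfl, hp.splitsAt_self, hq.splitsAt_self⟩
    · obtain ⟨ha, hsp⟩ := mem_filter.1 ha
      exact ⟨(mem_Ico.1 ha).2.le, hsp⟩
  have hgap : ∀ a ∈ S, a + 2 ∉ S ∧ a + 3 ∉ S := fun a ha =>
    ⟨fun h => hd.not_splitsAt_add_two hp hq (hsplit a ha).2 (hsplit _ h).1 (hsplit _ h).2,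
     fun h => hd.not_splitsAt_add_three hp hq (hsplit a ha).2 (hsplit _ h).1 (hsplit _ h).2⟩
  have hcount := (five_mul_card_le_of_no_gap_two_three S hgap n fun a ha => (hsplit a ha).1).1
  rw [card_insert_of_notMem (by simp [T]; omega), card_insert_of_notMem (by simp [T])] at hcount
  omega

theorem stmt_8_general (n : ℕ) (p1 p2 : ℕ → ℕ)
    (h1 : IsHamPath n p1) (h2 : IsHamPath n p2)
    (hd : PathsEdgeDisjoint n p1 p2) :
    (16 : ℚ) * ((n : ℚ) - 1) / 5 ≤ ((pathCost n p1 + pathCost n p2 : ℕ) : ℚ) := by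
  have key := sixteen_mul_le_five_mul_pathCost_add h1 h2 hd
  have hn : 1 ≤ n := by have := h1.1; omega
  rw [div_le_iff₀ (by norm_num)]
  exact_mod_cast (by omega : 16 * (n - 1) ≤ (pathCost n p1 + pathCost n p2) * 5)

/-- for every `n ≥ 6`, every pair of edge-disjoint Hamiltonian
(1,n)-paths has total cost at least `16(n-1)/5`. -/
theorem stmt_8 (n : ℕ) (hn : 6 ≤ n) (p1 p2 : ℕ → ℕ)
    (h1 : IsHamPath n p1) (h2 : IsHamPath n p2)
    (hd : PathsEdgeDisjoint n p1 p2) :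
    (16 : ℚ) * ((n : ℚ) - 1) / 5 ≤ ((pathCost n p1 + pathCost n p2 : ℕ) : ℚ) :=
  stmt_8_general n p1 p2 h1 h2 hd
end

section
/- For every n ≥ 6, in any pair of edge-disjoint Hamiltonian paths from 1 to n on {1,...,n} with edge cost |j−k|, the more expensive of the two paths has cost at least (8/5)(n−1). -/
section
variable {n : ℕ} {p p1 p2 : ℕ → ℕ}

namespace Stmt9Aux


/-- parity of the number of "crossings" of level s among the first k steps -/
lemma depth_flip_parity (p : ℕ → ℕ) (s : ℕ) :
    ∀ k, (Odd (((Finset.range k).filter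
        (fun i => min (p i) (p (i + 1)) ≤ s ∧ s < max (p i) (p (i + 1)))).card)
      ↔ ¬ (s < p 0 ↔ s < p k)) := by
  intro k
  induction k with
  | zero => simp
  | succ k ih =>
    have hcond : (min (p k) (p (k + 1)) ≤ s ∧ s < max (p k) (p (k + 1)))
        ↔ ¬ (s < p k ↔ s < p (k + 1)) := by omega
    rw [Finset.range_add_one, Finset.filter_insert]
    by_cases hE : s < p k ↔ s < p (k + 1)
    · rw [if_neg (fun hcnd => (hcond.mp hcnd) hE)]
      rw [ih]
      constructor <;> (intro h hiff; exact h (by tauto))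
    · rw [if_pos (hcond.mpr hE), Finset.card_insert_of_notMem (by simp)]
      rw [Nat.odd_add_one, ih]
      tauto

lemma depth_odd {n : ℕ} {p : ℕ → ℕ} (h : IsHamPath n p) {s : ℕ}
    (hs1 : 1 ≤ s) (hsm : s ≤ n - 1) : Odd (segDepth n p s) := by
  rw [segDepth, depth_flip_parity p s (n-1)]
  rw [h.2.1, h.2.2.1]
  have h2 : 2 ≤ n := h.1
  intro hiff
  omega



lemma pathCost_eq (h : IsHamPath n p) :
    pathCost n p = ∑ s ∈ Finset.Icc 1 (n - 1), segDepth n p s := by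
  have key : ∀ i ∈ Finset.range (n - 1),
      max (p i) (p (i + 1)) - min (p i) (p (i + 1))
        = ∑ s ∈ Finset.Icc 1 (n - 1),
            (if min (p i) (p (i + 1)) ≤ s ∧ s < max (p i) (p (i + 1)) then 1 else 0) := by
    intro i hi
    rw [Finset.mem_range] at hi
    have hb1 := h.2.2.2.1 i (by omega)
    have hb2 := h.2.2.2.1 (i + 1) (by omega)
    rw [← Finset.card_filter]
    have : (Finset.Icc 1 (n - 1)).filter
        (fun s => min (p i) (p (i + 1)) ≤ s ∧ s < max (p i) (p (i + 1)))
        = Finset.Ico (min (p i) (p (i + 1))) (max (p i) (p (i + 1))) := by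
      ext s
      simp only [Finset.mem_filter, Finset.mem_Icc, Finset.mem_Ico]
      omega
    rw [this, Nat.card_Ico]
  rw [pathCost, Finset.sum_congr rfl key, Finset.sum_comm]
  apply Finset.sum_congr rfl
  intro s _
  rw [segDepth, Finset.card_filter]

lemma exists_pos (h : IsHamPath n p) {x : ℕ} (hx1 : 1 ≤ x) (hxn : x ≤ n) :
    ∃ i, i < n ∧ p i = x := by
  classical
  have himg : (Finset.range n).image p = Finset.Icc 1 n := by
    apply Finset.eq_of_subset_of_card_le
    · intro y hy
      simp only [Finset.mem_image, Finset.mem_range] at hy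
      obtain ⟨i, hi, rfl⟩ := hy
      exact Finset.mem_Icc.mpr (h.2.2.2.1 i hi)
    · rw [Finset.card_image_of_injOn, Finset.card_range, Nat.card_Icc]
      · omega
      · intro i hi j hj hij
        exact h.2.2.2.2 i j (Finset.mem_range.mp hi) (Finset.mem_range.mp hj) hij
  have : x ∈ (Finset.range n).image p := by
    rw [himg]; exact Finset.mem_Icc.mpr ⟨hx1, hxn⟩
  simp only [Finset.mem_image, Finset.mem_range] at this
  obtain ⟨i, hi, hpi⟩ := this
  exact ⟨i, hi, hpi⟩

lemma threshold (h : IsHamPath n p) {s : ℕ} (hs1 : 1 ≤ s)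
    (hd : segDepth n p s = 1) :
    ∃ j, j < n - 1 ∧ ∀ i, i ≤ n - 1 → (s < p i ↔ j < i) := by
  obtain ⟨j, hj⟩ := Finset.card_eq_one.mp hd
  have hjmem : j ∈ (Finset.range (n - 1)).filter
      (fun i => min (p i) (p (i + 1)) ≤ s ∧ s < max (p i) (p (i + 1))) := by
    rw [hj]; exact Finset.mem_singleton_self j
  rw [Finset.mem_filter, Finset.mem_range] at hjmem
  obtain ⟨hjlt, hjcond⟩ := hjmem
  have honly : ∀ i, i < n - 1 → i ≠ j → (s < p i ↔ s < p (i + 1)) := by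
    intro i hi hne
    have hni : i ∉ (Finset.range (n - 1)).filter
        (fun i => min (p i) (p (i + 1)) ≤ s ∧ s < max (p i) (p (i + 1))) := by
      rw [hj]; simp [hne]
    rw [Finset.mem_filter, Finset.mem_range] at hni
    omega
  have hp0 : ¬ s < p 0 := by rw [h.2.1]; omega
  have claim1 : ∀ i, i ≤ j → ¬ s < p i := by
    intro i
    induction i with
    | zero => intro _; exact hp0
    | succ i ih =>
      intro hle hcon
      exact (ih (by omega)) (((honly i (by omega) (by omega)).mpr) hcon)
  have hj1 : s < p (j + 1) := by
    have hnj : ¬ s < p j := claim1 j le_rfl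
    omega
  have claim2 : ∀ i, j < i → i ≤ n - 1 → s < p i := by
    intro i
    induction i with
    | zero => omega
    | succ i ih =>
      intro hji hin
      by_cases hcase : j = i
      · rw [← hcase]; exact hj1
      · exact (honly i (by omega) (by omega)).mp (ih (by omega) (by omega))
  refine ⟨j, hjlt, fun i hi => ⟨fun hc => ?_, fun hji => claim2 i hji hi⟩⟩
  by_contra hn
  exact (claim1 i (by omega)) hc

lemma interval (h : IsHamPath n p) {s s' j j' : ℕ} (hs1 : 1 ≤ s) (hss' : s < s')
    (hs'm : s' ≤ n - 1) (hj : j < n - 1) (hj' : j' < n - 1)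
    (ht : ∀ i, i ≤ n - 1 → (s < p i ↔ j < i))
    (ht' : ∀ i, i ≤ n - 1 → (s' < p i ↔ j' < i)) :
    j' = j + (s' - s) := by
  classical
  have h2n : 2 ≤ n := h.1
  have hset : (Finset.range n).filter (fun i => s < p i ∧ p i ≤ s') = Finset.Ioc j j' := by
    ext i
    simp only [Finset.mem_filter, Finset.mem_range, Finset.mem_Ioc]
    constructor
    · rintro ⟨hin, h1, h2⟩
      have e1 := (ht i (by omega)).mp h1
      have e2 : ¬ j' < i := fun hc => by
        have := (ht' i (by omega)).mpr hc; omega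
      exact ⟨e1, by omega⟩
    · rintro ⟨h1, h2⟩
      have hin : i < n := by omega
      have e1 := (ht i (by omega)).mpr h1
      have e2 : ¬ s' < p i := fun hc => by
        have := (ht' i (by omega)).mp hc; omega
      exact ⟨hin, e1, by omega⟩
  have hcard : ((Finset.range n).filter (fun i => s < p i ∧ p i ≤ s')).card
      = (Finset.Ioc s s').card := by
    apply Finset.card_bij (fun a _ => p a)
    · intro a ha
      rw [Finset.mem_filter] at ha
      exact Finset.mem_Ioc.mpr ⟨ha.2.1, ha.2.2⟩
    · intro a ha b hb hab
      rw [Finset.mem_filter, Finset.mem_range] at ha hb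
      exact h.2.2.2.2 a b ha.1 hb.1 hab
    · intro x hx
      rw [Finset.mem_Ioc] at hx
      obtain ⟨i, hi, hpi⟩ := exists_pos h (by omega) (by omega) (x := x)
      exact ⟨i, by rw [Finset.mem_filter, Finset.mem_range]; exact ⟨hi, by omega⟩, hpi⟩
  rw [hset, Nat.card_Ioc, Nat.card_Ioc] at hcard
  omega




lemma isEdgeOf_symm {a b : ℕ} : IsEdgeOf n p a b → IsEdgeOf n p b a := by
  rintro ⟨i, hi, hc | hc⟩
  · exact ⟨i, hi, Or.inr hc⟩
  · exact ⟨i, hi, Or.inl hc⟩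

lemma no_common_edge (hd : PathsEdgeDisjoint n p1 p2) {a b : ℕ}
    (e1 : IsEdgeOf n p1 a b) (e2 : IsEdgeOf n p2 a b) : False := by
  obtain ⟨i, hi, hc⟩ := e1
  apply hd i hi
  rcases hc with ⟨ha, hb⟩ | ⟨ha, hb⟩
  · rw [ha, hb]; exact e2
  · rw [ha, hb]; exact isEdgeOf_symm e2

lemma gap2_edge (h : IsHamPath n p) {s : ℕ} (hs1 : 1 ≤ s) (hs2 : s + 2 ≤ n - 1)
    (hd : segDepth n p s = 1) (hd' : segDepth n p (s + 2) = 1) :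
    IsEdgeOf n p (s + 1) (s + 2) := by
  obtain ⟨j, hj, ht⟩ := threshold h hs1 hd
  obtain ⟨j', hj', ht'⟩ := threshold h (by omega) hd'
  have hjj : j' = j + (s + 2 - s) := interval h hs1 (by omega) hs2 hj hj' ht ht'
  have hb1 := h.2.2.2.1 (j + 1) (by omega)
  have hb2 := h.2.2.2.1 (j + 2) (by omega)
  have hv1a : s < p (j + 1) := (ht (j + 1) (by omega)).mpr (by omega)
  have hv1b : ¬ s + 2 < p (j + 1) := fun hc => by
    have := (ht' (j + 1) (by omega)).mp hc; omega
  have hv2a : s < p (j + 2) := (ht (j + 2) (by omega)).mpr (by omega)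
  have hv2b : ¬ s + 2 < p (j + 2) := fun hc => by
    have := (ht' (j + 2) (by omega)).mp hc; omega
  have hne : p (j + 1) ≠ p (j + 2) := fun hc => by
    have := h.2.2.2.2 (j + 1) (j + 2) (by omega) (by omega) hc; omega
  have hcase : (p (j + 1) = s + 1 ∧ p (j + 2) = s + 2)
      ∨ (p (j + 1) = s + 2 ∧ p (j + 2) = s + 1) := by omega
  rcases hcase with ⟨ha, hb⟩ | ⟨ha, hb⟩
  · exact ⟨j + 1, by omega, Or.inl ⟨ha, hb⟩⟩
  · exact ⟨j + 1, by omega, Or.inr ⟨ha, hb⟩⟩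

lemma gap3_edges (h : IsHamPath n p) {s : ℕ} (hs1 : 1 ≤ s) (hs3 : s + 3 ≤ n - 1)
    (hd : segDepth n p s = 1) (hd' : segDepth n p (s + 3) = 1) :
    ∃ b, s < b ∧ b ≤ s + 3 ∧
      ∀ x, s < x → x ≤ s + 3 → x ≠ b → IsEdgeOf n p x b := by
  obtain ⟨j, hj, ht⟩ := threshold h hs1 hd
  obtain ⟨j', hj', ht'⟩ := threshold h (by omega) hd'
  have hjj : j' = j + (s + 3 - s) := interval h hs1 (by omega) hs3 hj hj' ht ht'
  have hmid1 : s < p (j + 2) := (ht (j + 2) (by omega)).mpr (by omega)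
  have hmid2 : ¬ s + 3 < p (j + 2) := fun hc => by
    have := (ht' (j + 2) (by omega)).mp hc; omega
  refine ⟨p (j + 2), hmid1, by omega, ?_⟩
  intro x hx1 hx2 hxb
  obtain ⟨i, hin, hpi⟩ := exists_pos h (x := x) (by omega) (by omega)
  have hi1 : j < i := (ht i (by omega)).mp (by omega)
  have hi2 : ¬ j' < i := fun hc => by
    have := (ht' i (by omega)).mpr hc; omega
  have hcase : i = j + 1 ∨ i = j + 2 ∨ i = j + 3 := by omega
  rcases hcase with rfl | rfl | rfl
  · exact ⟨j + 1, by omega, Or.inl ⟨hpi, rfl⟩⟩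
  · exact absurd hpi.symm hxb
  · exact ⟨j + 2, by omega, Or.inr ⟨rfl, hpi⟩⟩

lemma depth_first (h : IsHamPath n p) : segDepth n p 1 = 1 := by
  have h2n : 2 ≤ n := h.1
  have hset : (Finset.range (n - 1)).filter
      (fun i => min (p i) (p (i + 1)) ≤ 1 ∧ 1 < max (p i) (p (i + 1))) = {0} := by
    ext i
    simp only [Finset.mem_filter, Finset.mem_range, Finset.mem_singleton]
    constructor
    · rintro ⟨hin, hc1, hc2⟩
      by_contra hne
      have hb1 := h.2.2.2.1 i (by omega)
      have hb2 := h.2.2.2.1 (i + 1) (by omega)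
      -- one of p i, p (i+1) equals 1 = p 0, so i = 0 or i + 1 = 0
      have : p i = 1 ∨ p (i + 1) = 1 := by omega
      rcases this with hc | hc
      · have := h.2.2.2.2 i 0 (by omega) (by omega) (by rw [hc, h.2.1]); omega
      · have := h.2.2.2.2 (i + 1) 0 (by omega) (by omega) (by rw [hc, h.2.1]); omega
    · rintro rfl
      have hb2 := h.2.2.2.1 1 (by omega)
      have hne : p 1 ≠ 1 := fun hc => by
        have := h.2.2.2.2 1 0 (by omega) (by omega) (by rw [hc, h.2.1]); omega
      refine ⟨by omega, ?_, ?_⟩ <;> simp only [Nat.zero_add] <;> rw [h.2.1] <;> omega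
  rw [segDepth, hset, Finset.card_singleton]

lemma depth_last (h : IsHamPath n p) : segDepth n p (n - 1) = 1 := by
  have h2n : 2 ≤ n := h.1
  have hset : (Finset.range (n - 1)).filter
      (fun i => min (p i) (p (i + 1)) ≤ n - 1 ∧ n - 1 < max (p i) (p (i + 1))) = {n - 2} := by
    ext i
    simp only [Finset.mem_filter, Finset.mem_range, Finset.mem_singleton]
    constructor
    · rintro ⟨hin, hc1, hc2⟩
      by_contra hne
      have hb1 := h.2.2.2.1 i (by omega)
      have hb2 := h.2.2.2.1 (i + 1) (by omega)
      have : p i = n ∨ p (i + 1) = n := by omega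
      rcases this with hc | hc
      · have := h.2.2.2.2 i (n - 1) (by omega) (by omega) (by rw [hc, h.2.2.1]); omega
      · have := h.2.2.2.2 (i + 1) (n - 1) (by omega) (by omega) (by rw [hc, h.2.2.1]); omega
    · rintro rfl
      have hin : n - 2 < n - 1 := by omega
      have heq : n - 2 + 1 = n - 1 := by omega
      have hb1 := h.2.2.2.1 (n - 2) (by omega)
      have hne : p (n - 2) ≠ n := fun hc => by
        have := h.2.2.2.2 (n - 2) (n - 1) (by omega) (by omega) (by rw [hc, h.2.2.1]); omega
      have hlast : p (n - 2 + 1) = n := by rw [heq, h.2.2.1]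
      refine ⟨hin, ?_, ?_⟩ <;> rw [hlast] <;> omega
  rw [segDepth, hset, Finset.card_singleton]

lemma first_pair_edge (h : IsHamPath n p) (hn3 : 3 ≤ n)
    (hd2 : segDepth n p 2 = 1) : IsEdgeOf n p 1 2 := by
  have hd1 : segDepth n p 1 = 1 := depth_first h
  obtain ⟨j, hj, ht⟩ := threshold h le_rfl hd1
  obtain ⟨j', hj', ht'⟩ := threshold h (by omega) hd2
  have hj0 : j = 0 := by
    by_contra hne
    have hb := h.2.2.2.1 1 (by omega)
    have : ¬ 1 < p 1 := fun hc => by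
      have := (ht 1 (by omega)).mp hc; omega
    have hp1 : p 1 = 1 := by omega
    have := h.2.2.2.2 1 0 (by omega) (by omega) (by rw [hp1, h.2.1]); omega
  have hjj : j' = j + (2 - 1) := interval h le_rfl (by omega) (by omega) hj hj' ht ht'
  have hv1 : 1 < p 1 := (ht 1 (by omega)).mpr (by omega)
  have hv2 : ¬ 2 < p 1 := fun hc => by
    have := (ht' 1 (by omega)).mp hc; omega
  have hp12 : p 1 = 2 := by omega
  exact ⟨0, by omega, Or.inl ⟨h.2.1, by simpa using hp12⟩⟩

lemma last_pair_edge (h : IsHamPath n p) (hn3 : 3 ≤ n)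
    (hd2 : segDepth n p (n - 2) = 1) : IsEdgeOf n p (n - 1) n := by
  have hdm : segDepth n p (n - 1) = 1 := depth_last h
  obtain ⟨j, hj, ht⟩ := threshold h (by omega) hd2
  obtain ⟨j', hj', ht'⟩ := threshold h (by omega) hdm
  have hjm : j' = n - 2 := by
    by_contra hne
    have hb := h.2.2.2.1 (n - 2) (by omega)
    have h1 : n - 1 < p (n - 2) := (ht' (n - 2) (by omega)).mpr (by omega)
    have hp : p (n - 2) = n := by omega
    have := h.2.2.2.2 (n - 2) (n - 1) (by omega) (by omega) (by rw [hp, h.2.2.1]); omega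
  have heq : n - 2 + 1 = n - 1 := by omega
  have ht'' : ∀ i, i ≤ n - 1 → (n - 2 + 1 < p i ↔ j' < i) := by
    intro i hi
    rw [heq]
    exact ht' i hi
  have hjj : j' = j + (n - 2 + 1 - (n - 2)) :=
    interval h (by omega) (by omega) (by omega) hj hj' ht ht''
  have hb := h.2.2.2.1 (n - 2) (by omega)
  have hv1 : n - 2 < p (n - 2) := (ht (n - 2) (by omega)).mpr (by omega)
  have hv2 : ¬ n - 1 < p (n - 2) := fun hc => by
    have := (ht' (n - 2) (by omega)).mp hc; omega
  have hpn2 : p (n - 2) = n - 1 := by omega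
  refine ⟨n - 2, by omega, Or.inl ⟨hpn2, ?_⟩⟩
  rw [heq, h.2.2.1]



lemma countR : ∀ m : ℕ, ∀ A : Finset ℕ, A ⊆ Finset.Icc 1 m →
    (∀ a ∈ A, a + 2 ∉ A) → (∀ a ∈ A, a + 3 ∉ A) → 2 ∉ A →
    5 * A.card ≤ 2 * m + 3 := by
  intro m
  induction m using Nat.strong_induction_on with
  | _ m ih =>
    intro A hsub h2 h3 hA2
    rcases A.eq_empty_or_nonempty with rfl | hne
    · simp
    set t := A.max' hne with htdef
    have htA : t ∈ A := A.max'_mem hne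
    have htm : t ≤ m := (Finset.mem_Icc.mp (hsub htA)).2
    have ht1 : 1 ≤ t := (Finset.mem_Icc.mp (hsub htA)).1
    have hmax : ∀ a ∈ A, a ≤ t := fun a ha => A.le_max' a ha
    by_cases hp : t - 1 ∈ A
    · -- top block is a pair {t-1, t}
      have ht4 : 4 ≤ t := by
        have h0 : 1 ≤ t - 1 := (Finset.mem_Icc.mp (hsub hp)).1
        have e2 : t ≠ 2 := fun hc => hA2 (hc ▸ htA)
        have e3 : t ≠ 3 := fun hc => hA2 (by
          have : t - 1 = 2 := by omega
          exact this ▸ hp)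
        omega
      set A' := (A.erase t).erase (t - 1) with hA'def
      have hmemA : ∀ a ∈ A', a ∈ A := fun a ha =>
        Finset.mem_of_mem_erase (Finset.mem_of_mem_erase ha)
      have hsub' : A' ⊆ Finset.Icc 1 (t - 5) := by
        intro a ha
        have haA : a ∈ A := hmemA a ha
        have h1 : 1 ≤ a := (Finset.mem_Icc.mp (hsub haA)).1
        have hat : a ≤ t := hmax a haA
        have hne2 : a ≠ t - 1 := Finset.ne_of_mem_erase ha
        have hne1 : a ≠ t := Finset.ne_of_mem_erase (Finset.mem_of_mem_erase ha)
        have e2 : a ≠ t - 2 := by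
          rintro rfl
          exact h2 _ haA (by rw [show t - 2 + 2 = t by omega]; exact htA)
        have e3 : a ≠ t - 3 := by
          rintro rfl
          exact h2 _ haA (by rw [show t - 3 + 2 = t - 1 by omega]; exact hp)
        have e4 : a ≠ t - 4 := by
          rintro rfl
          exact h3 _ haA (by rw [show t - 4 + 3 = t - 1 by omega]; exact hp)
        exact Finset.mem_Icc.mpr ⟨h1, by omega⟩
      have hcard : A.card = A'.card + 2 := by
        have hm1 : t - 1 ∈ A.erase t := Finset.mem_erase.mpr ⟨by omega, hp⟩
        have c1 : (A.erase t).card = A.card - 1 := Finset.card_erase_of_mem htA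
        have c2 : A'.card = (A.erase t).card - 1 := Finset.card_erase_of_mem hm1
        have pos1 : 0 < A.card := Finset.card_pos.mpr ⟨t, htA⟩
        have pos2 : 0 < (A.erase t).card := Finset.card_pos.mpr ⟨t - 1, hm1⟩
        omega
      have ihA := ih (t - 5) (by omega) A' hsub'
        (fun a ha hc => h2 a (hmemA a ha) (hmemA _ hc))
        (fun a ha hc => h3 a (hmemA a ha) (hmemA _ hc))
        (fun hc => hA2 (hmemA _ hc))
      rcases le_or_gt 5 t with h5 | h5
      · omega
      · have hAe : A' = ∅ := by
          rw [← Finset.subset_empty]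
          intro a ha
          have := Finset.mem_Icc.mp (hsub' ha)
          omega
        rw [hAe] at hcard
        simp at hcard
        omega
    · -- top block is a single {t}
      set A' := A.erase t with hA'def
      have hmemA : ∀ a ∈ A', a ∈ A := fun a ha => Finset.mem_of_mem_erase ha
      have hsub' : A' ⊆ Finset.Icc 1 (t - 4) := by
        intro a ha
        have haA : a ∈ A := hmemA a ha
        have h1 : 1 ≤ a := (Finset.mem_Icc.mp (hsub haA)).1
        have hat : a ≤ t := hmax a haA
        have hne1 : a ≠ t := Finset.ne_of_mem_erase ha
        have e1 : a ≠ t - 1 := fun hc => hp (hc ▸ haA)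
        have e2 : a ≠ t - 2 := by
          rintro rfl
          exact h2 _ haA (by rw [show t - 2 + 2 = t by omega]; exact htA)
        have e3 : a ≠ t - 3 := by
          rintro rfl
          exact h3 _ haA (by rw [show t - 3 + 3 = t by omega]; exact htA)
        exact Finset.mem_Icc.mpr ⟨h1, by omega⟩
      have hcard : A.card = A'.card + 1 := by
        have c1 : A'.card = A.card - 1 := Finset.card_erase_of_mem htA
        have pos1 : 0 < A.card := Finset.card_pos.mpr ⟨t, htA⟩
        omega
      have ihA := ih (t - 4) (by omega) A' hsub'
        (fun a ha hc => h2 a (hmemA a ha) (hmemA _ hc))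
        (fun a ha hc => h3 a (hmemA a ha) (hmemA _ hc))
        (fun hc => hA2 (hmemA _ hc))
      rcases le_or_gt 4 t with h5 | h5
      · omega
      · have hAe : A' = ∅ := by
          rw [← Finset.subset_empty]
          intro a ha
          have := Finset.mem_Icc.mp (hsub' ha)
          omega
        rw [hAe] at hcard
        simp at hcard
        omega

lemma countP (m : ℕ) (hm : 5 ≤ m) (A : Finset ℕ) (hsub : A ⊆ Finset.Icc 1 m)
    (h2 : ∀ a ∈ A, a + 2 ∉ A) (h3 : ∀ a ∈ A, a + 3 ∉ A)
    (hA2 : 2 ∉ A) (hAm : m - 1 ∉ A) :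
    5 * A.card ≤ 2 * m := by
  rcases A.eq_empty_or_nonempty with rfl | hne
  · simp
  set t := A.max' hne with htdef
  have htA : t ∈ A := A.max'_mem hne
  have htm : t ≤ m := (Finset.mem_Icc.mp (hsub htA)).2
  have ht1 : 1 ≤ t := (Finset.mem_Icc.mp (hsub htA)).1
  have hmax : ∀ a ∈ A, a ≤ t := fun a ha => A.le_max' a ha
  have htm1 : t ≠ m - 1 := fun hc => hAm (hc ▸ htA)
  by_cases hp : t - 1 ∈ A
  · have htnm : t ≠ m := by
      rintro rfl
      exact hAm (by rwa [] at hp)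
    have ht4 : 4 ≤ t := by
      have h0 : 1 ≤ t - 1 := (Finset.mem_Icc.mp (hsub hp)).1
      have e2 : t ≠ 2 := fun hc => hA2 (hc ▸ htA)
      have e3 : t ≠ 3 := fun hc => hA2 (by
        have : t - 1 = 2 := by omega
        exact this ▸ hp)
      omega
    set A' := (A.erase t).erase (t - 1) with hA'def
    have hmemA : ∀ a ∈ A', a ∈ A := fun a ha =>
      Finset.mem_of_mem_erase (Finset.mem_of_mem_erase ha)
    have hsub' : A' ⊆ Finset.Icc 1 (t - 5) := by
      intro a ha
      have haA : a ∈ A := hmemA a ha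
      have h1 : 1 ≤ a := (Finset.mem_Icc.mp (hsub haA)).1
      have hat : a ≤ t := hmax a haA
      have hne2 : a ≠ t - 1 := Finset.ne_of_mem_erase ha
      have hne1 : a ≠ t := Finset.ne_of_mem_erase (Finset.mem_of_mem_erase ha)
      have e2 : a ≠ t - 2 := by
        rintro rfl
        exact h2 _ haA (by rw [show t - 2 + 2 = t by omega]; exact htA)
      have e3 : a ≠ t - 3 := by
        rintro rfl
        exact h2 _ haA (by rw [show t - 3 + 2 = t - 1 by omega]; exact hp)
      have e4 : a ≠ t - 4 := by
        rintro rfl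
        exact h3 _ haA (by rw [show t - 4 + 3 = t - 1 by omega]; exact hp)
      exact Finset.mem_Icc.mpr ⟨h1, by omega⟩
    have hcard : A.card = A'.card + 2 := by
      have hm1 : t - 1 ∈ A.erase t := Finset.mem_erase.mpr ⟨by omega, hp⟩
      have c1 : (A.erase t).card = A.card - 1 := Finset.card_erase_of_mem htA
      have c2 : A'.card = (A.erase t).card - 1 := Finset.card_erase_of_mem hm1
      have pos1 : 0 < A.card := Finset.card_pos.mpr ⟨t, htA⟩
      have pos2 : 0 < (A.erase t).card := Finset.card_pos.mpr ⟨t - 1, hm1⟩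
      omega
    have ihA := countR (t - 5) A' hsub'
      (fun a ha hc => h2 a (hmemA a ha) (hmemA _ hc))
      (fun a ha hc => h3 a (hmemA a ha) (hmemA _ hc))
      (fun hc => hA2 (hmemA _ hc))
    rcases le_or_gt 5 t with h5 | h5
    · omega
    · have hAe : A' = ∅ := by
        rw [← Finset.subset_empty]
        intro a ha
        have := Finset.mem_Icc.mp (hsub' ha)
        omega
      rw [hAe] at hcard
      simp at hcard
      omega
  · set A' := A.erase t with hA'def
    have hmemA : ∀ a ∈ A', a ∈ A := fun a ha => Finset.mem_of_mem_erase ha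
    have hsub' : A' ⊆ Finset.Icc 1 (t - 4) := by
      intro a ha
      have haA : a ∈ A := hmemA a ha
      have h1 : 1 ≤ a := (Finset.mem_Icc.mp (hsub haA)).1
      have hat : a ≤ t := hmax a haA
      have hne1 : a ≠ t := Finset.ne_of_mem_erase ha
      have e1 : a ≠ t - 1 := fun hc => hp (hc ▸ haA)
      have e2 : a ≠ t - 2 := by
        rintro rfl
        exact h2 _ haA (by rw [show t - 2 + 2 = t by omega]; exact htA)
      have e3 : a ≠ t - 3 := by
        rintro rfl
        exact h3 _ haA (by rw [show t - 3 + 3 = t by omega]; exact htA)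
      exact Finset.mem_Icc.mpr ⟨h1, by omega⟩
    have hcard : A.card = A'.card + 1 := by
      have c1 : A'.card = A.card - 1 := Finset.card_erase_of_mem htA
      have pos1 : 0 < A.card := Finset.card_pos.mpr ⟨t, htA⟩
      omega
    have ihA := countR (t - 4) A' hsub'
      (fun a ha hc => h2 a (hmemA a ha) (hmemA _ hc))
      (fun a ha hc => h3 a (hmemA a ha) (hmemA _ hc))
      (fun hc => hA2 (hmemA _ hc))
    rcases le_or_gt 4 t with h5 | h5
    · omega
    · have hAe : A' = ∅ := by
        rw [← Finset.subset_empty]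
        intro a ha
        have := Finset.mem_Icc.mp (hsub' ha)
        omega
      rw [hAe] at hcard
      simp at hcard
      omega

end Stmt9Aux
end

namespace Stmt9Aux

section Main
variable {n : ℕ} {p1 p2 : ℕ → ℕ}

theorem main_bound (hn : 6 ≤ n) (h1 : IsHamPath n p1) (h2 : IsHamPath n p2)
    (hd : PathsEdgeDisjoint n p1 p2) :
    16 * (n - 1) ≤ 10 * max (pathCost n p1) (pathCost n p2) := by
  classical
  set A : Finset ℕ := (Finset.Icc 1 (n - 1)).filter
    (fun s => segDepth n p1 s = 1 ∧ segDepth n p2 s = 1) with hAdef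
  have hmemA : ∀ {s : ℕ}, s ∈ A ↔
      (1 ≤ s ∧ s ≤ n - 1) ∧ segDepth n p1 s = 1 ∧ segDepth n p2 s = 1 := by
    intro s
    rw [hAdef, Finset.mem_filter, Finset.mem_Icc]
  -- A-structure conditions
  have h2A : ∀ a ∈ A, a + 2 ∉ A := by
    intro a ha hc
    rw [hmemA] at ha hc
    obtain ⟨⟨ha1, _⟩, hd1, hd2⟩ := ha
    obtain ⟨⟨_, hcm⟩, hd1', hd2'⟩ := hc
    exact no_common_edge hd (gap2_edge h1 ha1 hcm hd1 hd1')
      (gap2_edge h2 ha1 hcm hd2 hd2')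
  have h3A : ∀ a ∈ A, a + 3 ∉ A := by
    intro a ha hc
    rw [hmemA] at ha hc
    obtain ⟨⟨ha1, _⟩, hd1, hd2⟩ := ha
    obtain ⟨⟨_, hcm⟩, hd1', hd2'⟩ := hc
    obtain ⟨b1, hb11, hb12, he1⟩ := gap3_edges h1 ha1 hcm hd1 hd1'
    obtain ⟨b2, hb21, hb22, he2⟩ := gap3_edges h2 ha1 hcm hd2 hd2'
    by_cases hb : b1 = b2
    · subst hb
      by_cases hx : b1 = a + 1
      · exact no_common_edge hd (he1 (a + 2) (by omega) (by omega) (by omega))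
          (he2 (a + 2) (by omega) (by omega) (by omega))
      · exact no_common_edge hd (he1 (a + 1) (by omega) (by omega) (fun hc => hx hc.symm))
          (he2 (a + 1) (by omega) (by omega) (fun hc => hx hc.symm))
    · exact no_common_edge hd (he1 b2 hb21 hb22 (Ne.symm hb))
        (isEdgeOf_symm (he2 b1 hb11 hb12 hb))
  have hA2 : 2 ∉ A := by
    intro hc
    rw [hmemA] at hc
    obtain ⟨_, hd1, hd2⟩ := hc
    exact no_common_edge hd (first_pair_edge h1 (by omega) hd1)
      (first_pair_edge h2 (by omega) hd2)
  have hAm : n - 1 - 1 ∉ A := by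
    intro hc
    rw [hmemA] at hc
    obtain ⟨_, hd1, hd2⟩ := hc
    rw [show n - 1 - 1 = n - 2 by omega] at hd1 hd2
    exact no_common_edge hd (last_pair_edge h1 (by omega) hd1)
      (last_pair_edge h2 (by omega) hd2)
  have hcount : 5 * A.card ≤ 2 * (n - 1) :=
    countP (n - 1) (by omega) A (Finset.filter_subset _ _) h2A h3A hA2 hAm
  -- cost lower bound
  have hsum : ∑ s ∈ Finset.Icc 1 (n - 1),
      (if segDepth n p1 s = 1 ∧ segDepth n p2 s = 1 then 2 else 4)
      ≤ pathCost n p1 + pathCost n p2 := by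
    rw [pathCost_eq h1, pathCost_eq h2, ← Finset.sum_add_distrib]
    apply Finset.sum_le_sum
    intro s hs
    rw [Finset.mem_Icc] at hs
    obtain ⟨c1, hc1⟩ := depth_odd h1 hs.1 hs.2
    obtain ⟨c2, hc2⟩ := depth_odd h2 hs.1 hs.2
    by_cases hc : segDepth n p1 s = 1 ∧ segDepth n p2 s = 1
    · rw [if_pos hc]; omega
    · rw [if_neg hc]; omega
  have hsplit : ∑ s ∈ Finset.Icc 1 (n - 1),
      (if segDepth n p1 s = 1 ∧ segDepth n p2 s = 1 then 2 else 4)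
      = 2 * A.card + 4 * ((Finset.Icc 1 (n - 1)).filter
          (fun s => ¬ (segDepth n p1 s = 1 ∧ segDepth n p2 s = 1))).card := by
    rw [Finset.sum_ite, Finset.sum_const, Finset.sum_const, smul_eq_mul, smul_eq_mul,
      hAdef]
    ring
  have hcompl : A.card + ((Finset.Icc 1 (n - 1)).filter
      (fun s => ¬ (segDepth n p1 s = 1 ∧ segDepth n p2 s = 1))).card = n - 1 := by
    rw [hAdef, Finset.card_filter_add_card_filter_not, Nat.card_Icc]
    omega
  have hm1 : pathCost n p1 ≤ max (pathCost n p1) (pathCost n p2) := le_max_left _ _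
  have hm2 : pathCost n p2 ≤ max (pathCost n p1) (pathCost n p2) := le_max_right _ _
  omega

end Main
end Stmt9Aux

/-- for every `n ≥ 6`, in any pair of edge-disjoint Hamiltonian
(1,n)-paths the more expensive path has cost at least `(8/5)(n-1)`. -/
theorem stmt_9 (n : ℕ) (hn : 6 ≤ n) (p1 p2 : ℕ → ℕ)
    (h1 : IsHamPath n p1) (h2 : IsHamPath n p2)
    (hd : PathsEdgeDisjoint n p1 p2) :
    (8 : ℚ) * ((n : ℚ) - 1) / 5 ≤ ((max (pathCost n p1) (pathCost n p2) : ℕ) : ℚ) := by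
  have key := Stmt9Aux.main_bound hn h1 h2 hd
  set M := max (pathCost n p1) (pathCost n p2) with hMdef
  have hq : (16 : ℚ) * ((n : ℚ) - 1) ≤ 10 * (M : ℚ) := by
    have hc := (Nat.cast_le (α := ℚ)).mpr key
    rw [Nat.cast_mul, Nat.cast_mul, Nat.cast_sub (by omega : 1 ≤ n)] at hc
    norm_num at hc ⊢
    linarith
  rw [div_le_iff₀ (by norm_num : (0:ℚ) < 5)]
  linarith
end

section
/- Let T be a Hamiltonian cycle on the n vertices of a cycle graph C_n (vertices 0,...,n−1 arranged on a circle). Then either every segment of C_n has odd depth with respect to T, or every segment has even depth with respect to T. -/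
/-- A Hamiltonian cycle (tour) on the vertices `0,…,n-1`, given as the cyclic
sequence `q 0, q 1, …, q (n-1)` (closing back to `q 0`). -/
def IsTour (n : ℕ) (q : ℕ → ℕ) : Prop :=
  0 < n ∧ (∀ i, i < n → q i < n) ∧ (∀ i j, i < n → j < n → q i = q j → i = j)

/-- Two tours are edge-disjoint: they share no unordered edge. -/
def ToursEdgeDisjoint (n : ℕ) (q1 q2 : ℕ → ℕ) : Prop :=
  ∀ i j, i < n → j < n →
    ¬ ((q1 i = q2 j ∧ q1 ((i + 1) % n) = q2 ((j + 1) % n)) ∨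
       (q1 i = q2 ((j + 1) % n) ∧ q1 ((i + 1) % n) = q2 j))

/-- Depth of the unit segment between vertex `s` and vertex `s+1 (mod n)` with
respect to the tour `q`, where each edge `i` of the tour is realized as the
clockwise arc from `q i` to `q (i+1)` when `c i = true`, and as the opposite
arc otherwise.  The clockwise arc from `a` to `b` covers segment `s` iff
`(s - a) % n < (b - a) % n`. -/
def tourDepth (n : ℕ) (q : ℕ → ℕ) (c : ℕ → Bool) (s : ℕ) : ℕ :=
  ((Finset.range n).filter (fun i =>
    (c i = true ∧ (s + n - q i) % n < (q ((i + 1) % n) + n - q i) % n) ∨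
    (c i = false ∧ (s + n - q ((i + 1) % n)) % n < (q i + n - q ((i + 1) % n)) % n))).card

/-- Distance between points `a` and `b` among `n` evenly spaced points on a
circle of circumference `n`: the shorter arc length. -/
def arcDist (n a b : ℕ) : ℕ := min ((b + n - a) % n) ((a + n - b) % n)

/-- Cost of a tour: sum of the (shorter-arc) lengths of its edges. -/
def tourCost (n : ℕ) (q : ℕ → ℕ) : ℕ :=
  ∑ i ∈ Finset.range n, arcDist n (q i) (q ((i + 1) % n))

/-- The arc choice `c` realizes each edge of the tour `q` by a shortest arc. -/
def ShortestChoice (n : ℕ) (q : ℕ → ℕ) (c : ℕ → Bool) : Prop :=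
  ∀ i, i < n →
    (if c i then (q ((i + 1) % n) + n - q i) % n else (q i + n - q ((i + 1) % n)) % n)
      = arcDist n (q i) (q ((i + 1) % n))



lemma mod_char (n e : ℕ) (h : e < 2 * n) :
    (e % n = e ∧ e < n) ∨ (e % n = e - n ∧ n ≤ e) := by
  rcases lt_or_ge e n with h' | h'
  · exact Or.inl ⟨Nat.mod_eq_of_lt h', h'⟩
  · refine Or.inr ⟨?_, h'⟩
    rw [Nat.mod_eq_sub_mod h', Nat.mod_eq_of_lt (by omega)]

set_option maxHeartbeats 1000000 in
lemma key (n a b s1 s2 : ℕ) (ha : a < n) (hb : b < n)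
    (h1 : s1 < n) (h2 : s2 < n) :
    (((s1 + n - a) % n < (b + n - a) % n) ↔ ((s2 + n - a) % n < (b + n - a) % n)) ↔
      (((a + n - s1 - 1) % n < (s2 + n - s1) % n) ↔
        ((b + n - s1 - 1) % n < (s2 + n - s1) % n)) := by
  have c1 := mod_char n (s1 + n - a) (by omega)
  have c2 := mod_char n (s2 + n - a) (by omega)
  have c3 := mod_char n (b + n - a) (by omega)
  have c4 := mod_char n (a + n - s1 - 1) (by omega)
  have c5 := mod_char n (b + n - s1 - 1) (by omega)
  have c6 := mod_char n (s2 + n - s1) (by omega)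
  rcases c1 with ⟨e1, f1⟩ | ⟨e1, f1⟩ <;> rw [e1] <;>
  rcases c2 with ⟨e2, f2⟩ | ⟨e2, f2⟩ <;> rw [e2] <;>
  rcases c3 with ⟨e3, f3⟩ | ⟨e3, f3⟩ <;> rw [e3] <;>
  rcases c4 with ⟨e4, f4⟩ | ⟨e4, f4⟩ <;> rw [e4] <;>
  rcases c5 with ⟨e5, f5⟩ | ⟨e5, f5⟩ <;> rw [e5] <;>
  rcases c6 with ⟨e6, f6⟩ | ⟨e6, f6⟩ <;> rw [e6] <;>
  omega

lemma ite_parity {p1 p2 g1 g2 : Prop} [Decidable p1] [Decidable p2] [Decidable g1]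
    [Decidable g2] (h : (p1 ↔ p2) ↔ (g1 ↔ g2)) :
    ((if p1 then 1 else 0) + (if p2 then 1 else 0)) % 2 =
      ((if g1 then 1 else 0) + (if g2 then 1 else 0)) % 2 := by
  by_cases h1 : p1 <;> by_cases h2 : p2 <;> by_cases h3 : g1 <;> by_cases h4 : g2 <;>
    simp_all


lemma succ_pred (n a : ℕ) (ha : a < n) : ((a + 1) % n + n - 1) % n = a := by
  rcases Nat.lt_or_ge (a + 1) n with h | h
  · rw [Nat.mod_eq_of_lt h, show a + 1 + n - 1 = a + n from by omega,
      Nat.add_mod_right, Nat.mod_eq_of_lt ha]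
  · have h' : a + 1 = n := by omega
    rw [h', Nat.mod_self, show 0 + n - 1 = a from by omega, Nat.mod_eq_of_lt ha]

lemma pred_succ (n a : ℕ) (ha : a < n) : ((a + n - 1) % n + 1) % n = a := by
  rcases Nat.eq_zero_or_pos a with rfl | hpos
  · rw [show 0 + n - 1 = n - 1 from by omega,
      Nat.mod_eq_of_lt (show n - 1 < n from by omega),
      show n - 1 + 1 = n from by omega, Nat.mod_self]
  · rw [show a + n - 1 = a - 1 + n from by omega, Nat.add_mod_right,
      Nat.mod_eq_of_lt (show a - 1 < n from by omega), show a - 1 + 1 = a from by omega,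
      Nat.mod_eq_of_lt ha]

/-- for any tour and any fixed choice of realizing arcs, all
segments of the cycle have crossing numbers of the same parity. -/
theorem stmt_10 (n : ℕ) (q : ℕ → ℕ) (c : ℕ → Bool) (hq : IsTour n q)
    (s1 s2 : ℕ) (h1 : s1 < n) (h2 : s2 < n) :
    tourDepth n q c s1 % 2 = tourDepth n q c s2 % 2 := by
  obtain ⟨hn, hlt, hinj⟩ := hq
  have hdepth : ∀ s, tourDepth n q c s =
      ∑ i ∈ Finset.range n, (if ((c i = true ∧ (s + n - q i) % n < (q ((i + 1) % n) + n - q i) % n) ∨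
        (c i = false ∧ (s + n - q ((i + 1) % n)) % n < (q i + n - q ((i + 1) % n)) % n))
        then 1 else 0) := by
    intro s
    rw [tourDepth, Finset.card_filter]
  have hpoint : ∀ i ∈ Finset.range n,
      ((if ((c i = true ∧ (s1 + n - q i) % n < (q ((i + 1) % n) + n - q i) % n) ∨
        (c i = false ∧ (s1 + n - q ((i + 1) % n)) % n < (q i + n - q ((i + 1) % n)) % n)) then 1 else 0) +
       (if ((c i = true ∧ (s2 + n - q i) % n < (q ((i + 1) % n) + n - q i) % n) ∨
        (c i = false ∧ (s2 + n - q ((i + 1) % n)) % n < (q i + n - q ((i + 1) % n)) % n)) then 1 else 0)) % 2 =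
      ((if (q i + n - s1 - 1) % n < (s2 + n - s1) % n then 1 else 0) +
       (if (q ((i + 1) % n) + n - s1 - 1) % n < (s2 + n - s1) % n then 1 else 0)) % 2 := by
    intro i hi
    rw [Finset.mem_range] at hi
    have ha : q i < n := hlt i hi
    have hb : q ((i + 1) % n) < n := hlt _ (Nat.mod_lt _ hn)
    apply ite_parity
    cases hc : c i with
    | true =>
      simp only [hc, Bool.true_eq_false, false_and, or_false, true_and, and_false,
        false_or]
      exact key n (q i) (q ((i + 1) % n)) s1 s2 ha hb h1 h2
    | false =>
      simp only [hc, Bool.false_eq_true, false_and, or_false, true_and, and_false,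
        false_or, or_self]
      have hk := key n (q ((i + 1) % n)) (q i) s1 s2 hb ha h1 h2
      tauto
  have hshift : (∑ i ∈ Finset.range n,
      (if (q ((i + 1) % n) + n - s1 - 1) % n < (s2 + n - s1) % n then 1 else 0)) =
      ∑ i ∈ Finset.range n, (if (q i + n - s1 - 1) % n < (s2 + n - s1) % n then 1 else 0) := by
    apply Finset.sum_nbij' (i := fun x => (x + 1) % n) (j := fun x => (x + n - 1) % n)
    · intro a ha; exact Finset.mem_range.mpr (Nat.mod_lt _ hn)
    · intro a ha; exact Finset.mem_range.mpr (Nat.mod_lt _ hn)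
    · intro a ha
      rw [Finset.mem_range] at ha
      exact succ_pred n a ha
    · intro a ha
      rw [Finset.mem_range] at ha
      exact pred_succ n a ha
    · intro a ha; rfl
  have hsum : (tourDepth n q c s1 + tourDepth n q c s2) % 2 = 0 := by
    rw [hdepth s1, hdepth s2, ← Finset.sum_add_distrib, Finset.sum_nat_mod,
      Finset.sum_congr rfl hpoint, ← Finset.sum_nat_mod, Finset.sum_add_distrib,
      hshift]
    omega
  omega
end

section
/- Let H1 and H2 be edge-disjoint Hamiltonian paths from 1 to n on {1,...,n} with n ≥ 6. Then the depth of segment (2,3) with respect to at least one of H1 and H2 is at least 3; symmetrically, the depth of segment (n−2,n−1) w.r.t. at least one of them is at least 3. -/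
lemma flips_parity (g : ℕ → Bool) (m : ℕ) :
    ((Finset.range m).filter (fun i => g i ≠ g (i+1))).card % 2
      = (if g 0 = g m then 0 else 1) := by
  induction m with
  | zero => simp
  | succ m ih =>
    rw [Finset.range_add_one, Finset.filter_insert]
    by_cases h : g m = g (m+1)
    · rw [if_neg (by simp [h]), ih, h]
    · rw [if_pos (by simpa using h),
        Finset.card_insert_of_notMem (by simp)]
      rcases Bool.eq_false_or_eq_true (g 0) with h0 | h0 <;>
      rcases Bool.eq_false_or_eq_true (g m) with hm | hm <;>
      rcases Bool.eq_false_or_eq_true (g (m+1)) with hm1 | hm1 <;>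
      simp [h0, hm, hm1] at ih h ⊢ <;> omega

lemma flip_exists (g : ℕ → Bool) {i j : ℕ} (hij : i ≤ j) (hg : g i ≠ g j) :
    ∃ t, i ≤ t ∧ t < j ∧ g t ≠ g (t+1) := by
  induction j with
  | zero => exact absurd (congrArg g (Nat.le_zero.mp hij)) hg
  | succ j ih =>
    rcases Nat.lt_or_ge i (j+1) with h | h
    · by_cases hgj : g i = g j
      · exact ⟨j, by omega, by omega, by rw [← hgj]; exact hg⟩
      · obtain ⟨t, ht1, ht2, ht3⟩ := ih (by omega) hgj
        exact ⟨t, ht1, by omega, ht3⟩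
    · exact absurd (congrArg g (by omega : i = j+1)) hg

lemma one_flip (g : ℕ → Bool) (m : ℕ) (hne : g 0 ≠ g m)
    (hcard : ((Finset.range m).filter (fun i => g i ≠ g (i+1))).card ≤ 2) :
    ∃ t, t < m ∧ (∀ i, i ≤ t → g i = g 0) ∧ (∀ i, t < i → i ≤ m → g i = g m) := by
  have hp := flips_parity g m
  rw [if_neg hne] at hp
  have hcard1 : ((Finset.range m).filter (fun i => g i ≠ g (i+1))).card = 1 := by omega
  obtain ⟨t, ht⟩ := Finset.card_eq_one.mp hcard1
  have htmem : t ∈ (Finset.range m).filter (fun i => g i ≠ g (i+1)) := by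
    rw [ht]; exact Finset.mem_singleton_self t
  rw [Finset.mem_filter, Finset.mem_range] at htmem
  refine ⟨t, htmem.1, ?_, ?_⟩
  · intro i hi
    by_contra h
    obtain ⟨t', ht1, ht2, ht3⟩ := flip_exists g (Nat.zero_le i) (fun he => h he.symm)
    have : t' ∈ (Finset.range m).filter (fun i => g i ≠ g (i+1)) := by
      rw [Finset.mem_filter, Finset.mem_range]; exact ⟨by omega, ht3⟩
    rw [ht, Finset.mem_singleton] at this
    omega
  · intro i hti him
    by_contra h
    obtain ⟨t', ht1, ht2, ht3⟩ := flip_exists g him h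
    have : t' ∈ (Finset.range m).filter (fun i => g i ≠ g (i+1)) := by
      rw [Finset.mem_filter, Finset.mem_range]; exact ⟨by omega, ht3⟩
    rw [ht, Finset.mem_singleton] at this
    omega

lemma segDepth_eq (n : ℕ) (p : ℕ → ℕ) (s : ℕ) :
    segDepth n p s = ((Finset.range (n-1)).filter
      (fun i => (fun j => decide (p j ≤ s)) i ≠ (fun j => decide (p j ≤ s)) (i+1))).card := by
  unfold segDepth
  congr 1
  apply Finset.filter_congr
  intro i _
  simp only [ne_eq, decide_eq_decide]
  constructor
  · intro ⟨ha, hb⟩; omega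
  · intro h; omega


lemma edge_left (n : ℕ) (hn : 6 ≤ n) (p : ℕ → ℕ) (h : IsHamPath n p)
    (hdep : segDepth n p 2 < 3) : p 1 = 2 := by
  obtain ⟨-, h0, hlast, hrange, hinj⟩ := h
  rw [segDepth_eq] at hdep
  set g : ℕ → Bool := fun j => decide (p j ≤ 2) with hg
  have hg0 : g 0 = true := by simp [hg, h0]
  have hgm : g (n-1) = false := by simp [hg, hlast]; omega
  have hne : g 0 ≠ g (n-1) := by rw [hg0, hgm]; simp
  have hdep' : ((Finset.range (n-1)).filter (fun i => g i ≠ g (i+1))).card < 3 := hdep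
  obtain ⟨t, htm, hle, hgt⟩ := one_flip g (n-1) hne (by omega)
  -- surjectivity onto 2
  have hsurj := Finset.surj_on_of_inj_on_of_card_le (s := Finset.range n)
    (t := Finset.Icc 1 n) (f := fun i _ => p i)
    (fun i hi => by
      rw [Finset.mem_range] at hi
      rw [Finset.mem_Icc]; exact hrange i hi)
    (fun i j hi hj he => by
      rw [Finset.mem_range] at hi hj
      exact hinj i j hi hj he)
    (by simp)
  obtain ⟨b, hb, hpb⟩ := hsurj 2 (by rw [Finset.mem_Icc]; omega)
  rw [Finset.mem_range] at hb
  have hpb : p b = 2 := hpb.symm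
  have hble : b ≤ t := by
    by_contra hbt
    have := hgt b (by omega) (by omega)
    rw [hgm] at this
    simp [hg, hpb] at this
  have ht1 : t ≤ 1 := by
    by_contra ht2
    have e1 : p 1 ≤ 2 := by have := hle 1 (by omega); rw [hg0] at this; simpa [hg] using this
    have e2 : p 2 ≤ 2 := by have := hle 2 (by omega); rw [hg0] at this; simpa [hg] using this
    have l1 : 1 ≤ p 1 := (hrange 1 (by omega)).1
    have l2 : 1 ≤ p 2 := (hrange 2 (by omega)).1
    have d01 : p 0 ≠ p 1 := fun he => by have := hinj 0 1 (by omega) (by omega) he; omega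
    have d02 : p 0 ≠ p 2 := fun he => by have := hinj 0 2 (by omega) (by omega) he; omega
    have d12 : p 1 ≠ p 2 := fun he => by have := hinj 1 2 (by omega) (by omega) he; omega
    omega
  have hb0 : b ≠ 0 := fun he => by rw [he, h0] at hpb; omega
  have : b = 1 := by omega
  rw [← this, hpb]

lemma edge_right (n : ℕ) (hn : 6 ≤ n) (p : ℕ → ℕ) (h : IsHamPath n p)
    (hdep : segDepth n p (n-2) < 3) : p (n-2) = n-1 := by
  obtain ⟨-, h0, hlast, hrange, hinj⟩ := h
  rw [segDepth_eq] at hdep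
  set g : ℕ → Bool := fun j => decide (p j ≤ n-2) with hg
  have hg0 : g 0 = true := by simp [hg, h0]; omega
  have hgm : g (n-1) = false := by simp [hg, hlast]; omega
  have hne : g 0 ≠ g (n-1) := by rw [hg0, hgm]; simp
  have hdep' : ((Finset.range (n-1)).filter (fun i => g i ≠ g (i+1))).card < 3 := hdep
  obtain ⟨t, htm, hle, hgt⟩ := one_flip g (n-1) hne (by omega)
  have hsurj := Finset.surj_on_of_inj_on_of_card_le (s := Finset.range n)
    (t := Finset.Icc 1 n) (f := fun i _ => p i)
    (fun i hi => by
      rw [Finset.mem_range] at hi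
      rw [Finset.mem_Icc]; exact hrange i hi)
    (fun i j hi hj he => by
      rw [Finset.mem_range] at hi hj
      exact hinj i j hi hj he)
    (by simp)
  obtain ⟨b, hb, hpb⟩ := hsurj (n-1) (by rw [Finset.mem_Icc]; omega)
  rw [Finset.mem_range] at hb
  have hpb : p b = n-1 := hpb.symm
  have hbgt : t < b := by
    by_contra hbt
    have := hle b (by omega)
    rw [hg0] at this
    simp [hg, hpb] at this
    omega
  have ht1 : n-3 ≤ t := by
    by_contra ht2
    have key : ∀ i, n-3 ≤ i → i ≤ n-1 → n-1 ≤ p i := by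
      intro i hi1 hi2
      have := hgt i (by omega) (by omega)
      rw [hgm] at this
      simp [hg] at this
      omega
    have e1 := key (n-3) (by omega) (by omega)
    have e2 := key (n-2) (by omega) (by omega)
    have u1 := (hrange (n-3) (by omega)).2
    have u2 := (hrange (n-2) (by omega)).2
    have d01 : p (n-3) ≠ p (n-2) := fun he => by
      have := hinj (n-3) (n-2) (by omega) (by omega) he; omega
    have d02 : p (n-3) ≠ p (n-1) := fun he => by
      have := hinj (n-3) (n-1) (by omega) (by omega) he; omega
    have d12 : p (n-2) ≠ p (n-1) := fun he => by
      have := hinj (n-2) (n-1) (by omega) (by omega) he; omega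
    omega
  have hb0 : b ≠ n-1 := fun he => by rw [he, hlast] at hpb; omega
  have : b = n-2 := by omega
  rw [← this, hpb]

/-- for edge-disjoint Hamiltonian (1,n)-paths with `n ≥ 6`, the
segment `(2,3)` has depth at least 3 w.r.t. one of the paths, and symmetrically
for the segment `(n-2, n-1)`. -/
theorem stmt_15 (n : ℕ) (hn : 6 ≤ n) (p1 p2 : ℕ → ℕ)
    (h1 : IsHamPath n p1) (h2 : IsHamPath n p2)
    (hd : PathsEdgeDisjoint n p1 p2) :
    (3 ≤ segDepth n p1 2 ∨ 3 ≤ segDepth n p2 2) ∧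
    (3 ≤ segDepth n p1 (n - 2) ∨ 3 ≤ segDepth n p2 (n - 2)) := by
  constructor
  · by_contra h
    push_neg at h
    obtain ⟨hc1, hc2⟩ := h
    have e1 := edge_left n hn p1 h1 hc1
    have e2 := edge_left n hn p2 h2 hc2
    exact hd 0 (by omega) ⟨0, by omega, Or.inl ⟨by rw [h2.2.1, h1.2.1], by rw [e2, e1]⟩⟩
  · by_contra h
    push_neg at h
    obtain ⟨hc1, hc2⟩ := h
    have e1 := edge_right n hn p1 h1 hc1
    have e2 := edge_right n hn p2 h2 hc2
    have hnn : n - 2 + 1 = n - 1 := by omega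
    refine hd (n-2) (by omega) ⟨n-2, by omega, Or.inl ⟨by rw [e2, e1], ?_⟩⟩
    rw [hnn, h2.2.2.1, h1.2.2.1]
end

section
/- For every ε > 0, there exist a metric space on n points and a choice of endpoints s, t such that for every pair (H1, H2) of edge-disjoint Hamiltonian (s,t)-paths, max(c(H1), c(H2)) ≥ (3 − ε) · OPT, where OPT is the minimum cost of a single Hamiltonian (s,t)-path. Concretely, take points v_1,...,v_n on the real line with consecutive gaps 1 except a gap of W between v_2 and v_3, where W = (2−ε)(n−2)/ε and n ≥ 6. -/
lemma ham_surj_s16 (n : ℕ) (q : ℕ → ℕ) (h : IsHamPath n q) (v : ℕ) (hv1 : 1 ≤ v) (hvn : v ≤ n) :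
    ∃ k, k < n ∧ q k = v := by
  obtain ⟨hn2, h0, hlast, hrange, hinj⟩ := h
  by_contra hc
  push_neg at hc
  have himg : (Finset.range n).image q ⊆ Finset.Icc 1 n := by
    intro x hx
    simp only [Finset.mem_image, Finset.mem_range] at hx
    obtain ⟨i, hi, rfl⟩ := hx
    have := hrange i hi
    simp only [Finset.mem_Icc]; omega
  have hcard : ((Finset.range n).image q).card = n := by
    rw [Finset.card_image_of_injOn, Finset.card_range]
    intro i hi j hj
    exact hinj i j (Finset.mem_range.mp hi) (Finset.mem_range.mp hj)
  have heq : (Finset.range n).image q = Finset.Icc 1 n :=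
    Finset.eq_of_subset_of_card_le himg (by simp [hcard, Nat.card_Icc])
  have hv : v ∈ (Finset.range n).image q := by
    rw [heq]; simp only [Finset.mem_Icc]; omega
  simp only [Finset.mem_image, Finset.mem_range] at hv
  obtain ⟨k, hk, hkv⟩ := hv
  exact hc k hk hkv

lemma depth_ge_one (n : ℕ) (q : ℕ → ℕ) (h : IsHamPath n q) (s : ℕ) (hs1 : 1 ≤ s) (hsn : s < n) :
    1 ≤ segDepth n q s := by
  obtain ⟨hn2, h0, hlast, hrange, hinj⟩ := h
  set S := (Finset.range n).filter (fun i => q i ≤ s) with hS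
  have h0S : 0 ∈ S := by
    simp only [hS, Finset.mem_filter, Finset.mem_range, h0]
    omega
  have hne : S.Nonempty := ⟨0, h0S⟩
  set i := S.max' hne with hidef
  have hiS : i ∈ S := S.max'_mem hne
  simp only [hS, Finset.mem_filter, Finset.mem_range] at hiS
  have hin : i ≠ n - 1 := by
    intro he; rw [he, hlast] at hiS; omega
  have hi1 : i < n - 1 := by omega
  have hnext : ¬ q (i + 1) ≤ s := by
    intro hle
    have hmem : i + 1 ∈ S := by
      simp only [hS, Finset.mem_filter, Finset.mem_range]
      exact ⟨by omega, hle⟩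
    have := S.le_max' _ hmem
    omega
  rw [segDepth]
  apply Finset.card_pos.mpr
  refine ⟨i, ?_⟩
  simp only [Finset.mem_filter, Finset.mem_range]
  refine ⟨hi1, ?_, ?_⟩ <;> omega

lemma depth_ge_three (n : ℕ) (hn : 6 ≤ n) (q : ℕ → ℕ) (h : IsHamPath n q) (hq1 : q 1 ≠ 2) :
    3 ≤ segDepth n q 2 := by
  obtain ⟨k, hk, hqk⟩ := ham_surj_s16 n q h 2 (by norm_num) (by omega)
  obtain ⟨hn2, h0, hlast, hrange, hinj⟩ := h
  have hk0 : k ≠ 0 := by intro he; rw [he, h0] at hqk; omega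
  have hk1 : k ≠ 1 := by intro he; rw [he] at hqk; exact hq1 hqk
  have hkn : k ≠ n - 1 := by intro he; rw [he, hlast] at hqk; omega
  have hk2 : 2 ≤ k := by omega
  have hkn2 : k < n - 1 := by omega
  -- q 1 ≥ 3
  have hq1a := hrange 1 (by omega)
  have hq1ne1 : q 1 ≠ 1 := by
    intro he; have := hinj 1 0 (by omega) (by omega) (by rw [he, h0]); omega
  have hq13 : 3 ≤ q 1 := by omega
  -- q (k-1) ≥ 3
  have hqkm := hrange (k - 1) (by omega)
  have hqkm2 : q (k - 1) ≠ 2 := by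
    intro he
    have := hinj (k - 1) k (by omega) (by omega) (by rw [he, hqk])
    omega
  have hqkm1 : q (k - 1) ≠ 1 := by
    intro he
    have := hinj (k - 1) 0 (by omega) (by omega) (by rw [he, h0])
    omega
  have hqkm3 : 3 ≤ q (k - 1) := by omega
  -- q (k+1) ≥ 3
  have hqkp := hrange (k + 1) (by omega)
  have hqkp2 : q (k + 1) ≠ 2 := by
    intro he
    have := hinj (k + 1) k (by omega) (by omega) (by rw [he, hqk])
    omega
  have hqkp1 : q (k + 1) ≠ 1 := by
    intro he
    have := hinj (k + 1) 0 (by omega) (by omega) (by rw [he, h0])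
    omega
  have hqkp3 : 3 ≤ q (k + 1) := by omega
  have hkm1 : k - 1 + 1 = k := by omega
  have hsub : ({0, k - 1, k} : Finset ℕ) ⊆ (Finset.range (n - 1)).filter
      (fun i => min (q i) (q (i + 1)) ≤ 2 ∧ 2 < max (q i) (q (i + 1))) := by
    intro i hi
    simp only [Finset.mem_insert, Finset.mem_singleton] at hi
    simp only [Finset.mem_filter, Finset.mem_range]
    rcases hi with rfl | rfl | rfl
    · simp only [zero_add, h0]; omega
    · rw [hkm1, hqk]; omega
    · rw [hqk]; omega
  have hcard : ({0, k - 1, k} : Finset ℕ).card = 3 := by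
    rw [Finset.card_insert_of_notMem (by simp; omega),
        Finset.card_insert_of_notMem (by simp; omega), Finset.card_singleton]
  calc 3 = ({0, k - 1, k} : Finset ℕ).card := hcard.symm
    _ ≤ _ := Finset.card_le_card hsub

lemma cost_lb (n : ℕ) (hn : 6 ≤ n) (W : ℝ) (hW0 : 0 ≤ W) (f : ℕ → ℝ)
    (hf : ∀ j, f j = if j ≤ 2 then (j : ℝ) else (j : ℝ) + W - 1)
    (q : ℕ → ℕ) (h : IsHamPath n q) (hq1 : q 1 ≠ 2) :
    3 * W + ((n : ℝ) - 2) ≤ ∑ i ∈ Finset.range (n - 1), |f (q (i + 1)) - f (q i)| := by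
  have hrange := h.2.2.2.1
  set L : ℕ → ℝ := fun s => f (s + 1) - f s with hL
  have hLval : ∀ s, L s = if s = 2 then W else 1 := by
    intro s
    simp only [hL, hf]
    rcases s with _ | _ | _ | s <;> push_cast <;> norm_num
    ring
  have hL0 : ∀ s, 0 ≤ L s := by
    intro s; rw [hLval]; split
    · exact hW0
    · norm_num
  have htel : ∀ a b : ℕ, a ≤ b → f b - f a = ∑ s ∈ Finset.Ico a b, L s := by
    intro a b hab
    rw [Finset.sum_Ico_eq_sub _ hab]
    simp only [hL]
    rw [Finset.sum_range_sub (fun s => f s), Finset.sum_range_sub (fun s => f s)]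
    ring
  have habs : ∀ a b : ℕ, |f b - f a| = ∑ s ∈ Finset.Ico (min a b) (max a b), L s := by
    intro a b
    rcases le_total a b with hab | hba
    · rw [min_eq_left hab, max_eq_right hab, ← htel a b hab]
      rw [abs_of_nonneg (by rw [htel a b hab]; exact Finset.sum_nonneg fun s _ => hL0 s)]
    · rw [min_eq_right hba, max_eq_left hba, abs_sub_comm, ← htel b a hba]
      rw [abs_of_nonneg (by rw [htel b a hba]; exact Finset.sum_nonneg fun s _ => hL0 s)]
  have hstep : ∑ i ∈ Finset.range (n - 1), |f (q (i + 1)) - f (q i)|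
      = ∑ s ∈ Finset.range n, L s * (segDepth n q s : ℝ) := by
    have h1 : ∀ i ∈ Finset.range (n - 1),
        |f (q (i + 1)) - f (q i)|
        = ∑ s ∈ Finset.range n, if min (q i) (q (i + 1)) ≤ s ∧ s < max (q i) (q (i + 1)) then L s else 0 := by
      intro i hi
      rw [Finset.mem_range] at hi
      rw [habs, Finset.sum_ite, Finset.sum_const_zero, add_zero]
      apply Finset.sum_congr _ (fun _ _ => rfl)
      have ha := hrange i (by omega)
      have hb := hrange (i + 1) (by omega)
      ext s
      simp only [Finset.mem_Ico, Finset.mem_filter, Finset.mem_range]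
      omega
    rw [Finset.sum_congr rfl h1, Finset.sum_comm]
    apply Finset.sum_congr rfl
    intro s _
    rw [← Finset.sum_filter, Finset.sum_const, nsmul_eq_mul, segDepth, mul_comm]
  rw [hstep]
  have hsubset : Finset.Ico 1 n ⊆ Finset.range n := by
    intro s hs; simp only [Finset.mem_Ico] at hs; simp only [Finset.mem_range]; omega
  have hmain : ∑ s ∈ Finset.Ico 1 n, L s * (segDepth n q s : ℝ)
      ≤ ∑ s ∈ Finset.range n, L s * (segDepth n q s : ℝ) :=
    Finset.sum_le_sum_of_subset_of_nonneg hsubset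
      (fun s _ _ => mul_nonneg (hL0 s) (Nat.cast_nonneg _))
  refine le_trans ?_ hmain
  have h2mem : (2 : ℕ) ∈ Finset.Ico 1 n := by simp only [Finset.mem_Ico]; omega
  rw [← Finset.add_sum_erase _ _ h2mem]
  have hA : 3 * W ≤ L 2 * (segDepth n q 2 : ℝ) := by
    rw [hLval 2, if_pos rfl]
    have hd3 : 3 ≤ segDepth n q 2 := depth_ge_three n hn q h hq1
    have : (3 : ℝ) ≤ (segDepth n q 2 : ℝ) := by exact_mod_cast hd3
    nlinarith
  have hB : ((n : ℝ) - 2) ≤ ∑ s ∈ (Finset.Ico 1 n).erase 2, L s * (segDepth n q s : ℝ) := by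
    have hone : ∀ s ∈ (Finset.Ico 1 n).erase 2, (1 : ℝ) ≤ L s * (segDepth n q s : ℝ) := by
      intro s hs
      simp only [Finset.mem_erase, Finset.mem_Ico] at hs
      rw [hLval s, if_neg hs.1, one_mul]
      exact_mod_cast depth_ge_one n q h s hs.2.1 hs.2.2
    have hcard : ((Finset.Ico 1 n).erase 2).card = n - 2 := by
      rw [Finset.card_erase_of_mem h2mem, Nat.card_Ico]; omega
    calc ((n : ℝ) - 2) = (((Finset.Ico 1 n).erase 2).card : ℝ) := by
          rw [hcard]; push_cast [Nat.cast_sub (by omega : 2 ≤ n)]; ring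
      _ ≤ ∑ s ∈ (Finset.Ico 1 n).erase 2, L s * (segDepth n q s : ℝ) := by
          calc (((Finset.Ico 1 n).erase 2).card : ℝ)
              = ∑ _s ∈ (Finset.Ico 1 n).erase 2, (1 : ℝ) := by rw [Finset.sum_const, nsmul_eq_mul, mul_one]
            _ ≤ _ := Finset.sum_le_sum hone
  linarith

/-- lower bound of `3 - ε` on the price of diversity of
edge-disjoint Hamiltonian (s,t)-path pairs, witnessed by `n` points on the real
line with unit gaps except a gap `W = (2-ε)(n-2)/ε` between the second and
third points.  Here `OPT = W + (n-2)`. -/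
theorem stmt_16 (ε : ℝ) (hε : 0 < ε) (n : ℕ) (hn : 6 ≤ n) (W : ℝ)
    (hW : W = (2 - ε) * ((n : ℝ) - 2) / ε)
    (f : ℕ → ℝ) (hf : ∀ j, f j = if j ≤ 2 then (j : ℝ) else (j : ℝ) + W - 1)
    (p1 p2 : ℕ → ℕ)
    (h1 : IsHamPath n p1) (h2 : IsHamPath n p2)
    (hd : PathsEdgeDisjoint n p1 p2) :
    (3 - ε) * (W + ((n : ℝ) - 2)) ≤
      max (∑ i ∈ Finset.range (n - 1), |f (p1 (i + 1)) - f (p1 i)|)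
          (∑ i ∈ Finset.range (n - 1), |f (p2 (i + 1)) - f (p2 i)|) := by
  have hnR : (6 : ℝ) ≤ (n : ℝ) := by exact_mod_cast hn
  rcases le_or_gt ε 2 with hε2 | hε2
  · have hW0 : 0 ≤ W := by
      rw [hW]
      apply div_nonneg _ (le_of_lt hε)
      nlinarith
    have key : (3 - ε) * (W + ((n : ℝ) - 2)) = 3 * W + ((n : ℝ) - 2) := by
      have hεW : ε * W = (2 - ε) * ((n : ℝ) - 2) := by
        rw [hW]; field_simp
      linear_combination -hεW
    rw [key]
    by_cases hq : p1 1 = 2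
    · have hq2 : p2 1 ≠ 2 := by
        intro h2e
        apply hd 0 (by omega)
        exact ⟨0, by omega, Or.inl ⟨by rw [h2.2.1, h1.2.1], by rw [h2e, hq]⟩⟩
      exact le_trans (cost_lb n hn W hW0 f hf p2 h2 hq2) (le_max_right _ _)
    · exact le_trans (cost_lb n hn W hW0 f hf p1 h1 hq) (le_max_left _ _)
  · have hWn : W + ((n : ℝ) - 2) = 2 * ((n : ℝ) - 2) / ε := by
      rw [hW]; field_simp; ring
    have hpos : 0 ≤ W + ((n : ℝ) - 2) := by
      rw [hWn]; apply div_nonneg _ (le_of_lt hε); nlinarith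
    have hcost : W + ((n : ℝ) - 2) ≤ ∑ i ∈ Finset.range (n - 1), |f (p1 (i + 1)) - f (p1 i)| := by
      have htel := Finset.sum_range_sub (fun i => f (p1 i)) (n - 1)
      have hle : ∑ i ∈ Finset.range (n - 1), (f (p1 (i + 1)) - f (p1 i))
          ≤ ∑ i ∈ Finset.range (n - 1), |f (p1 (i + 1)) - f (p1 i)| :=
        Finset.sum_le_sum fun i _ => le_abs_self _
      rw [htel] at hle
      simp only [h1.2.2.1, h1.2.1] at hle
      rw [hf n, hf 1, if_neg (by omega), if_pos (by norm_num)] at hle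
      push_cast at hle
      linarith
    calc (3 - ε) * (W + ((n : ℝ) - 2)) ≤ 1 * (W + ((n : ℝ) - 2)) := by nlinarith
      _ = W + ((n : ℝ) - 2) := one_mul _
      _ ≤ ∑ i ∈ Finset.range (n - 1), |f (p1 (i + 1)) - f (p1 i)| := hcost
      _ ≤ _ := le_max_left _ _
end

section
/- Let T1, T2 be edge-disjoint Hamiltonian cycles on a cycle of points in S^1 such that both are odd-depth tours. Then any maximal run of consecutive segments each having depth exactly 1 with respect to both T1 and T2 (a 1-section) has length at most 2. -/
private abbrev arcA (n : ℕ) (q : ℕ → ℕ) (c : ℕ → Bool) (i : ℕ) : ℕ :=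
  if c i then q i else q ((i + 1) % n)

private abbrev arcB (n : ℕ) (q : ℕ → ℕ) (c : ℕ → Bool) (i : ℕ) : ℕ :=
  if c i then q ((i + 1) % n) else q i

private abbrev covP (n : ℕ) (q : ℕ → ℕ) (c : ℕ → Bool) (i t : ℕ) : Prop :=
  (t + n - arcA n q c i) % n < (arcB n q c i + n - arcA n q c i) % n

private lemma depth_eq (n : ℕ) (q : ℕ → ℕ) (c : ℕ → Bool) (t : ℕ) :
    tourDepth n q c t = ((Finset.range n).filter (fun i => covP n q c i t)).card := by
  unfold tourDepth
  congr 1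
  apply Finset.filter_congr
  intro i _
  unfold covP arcA arcB
  cases hc : c i <;> simp [hc]

private lemma mval {n a t : ℕ} (hn : 0 < n) (ha : a < n) (ht : t < n) :
    (t + n - a) % n = if a ≤ t then t - a else t + n - a := by
  split_ifs with h
  · have e : t + n - a = (t - a) + n := by omega
    rw [e, Nat.add_mod_right, Nat.mod_eq_of_lt (by omega)]
  · exact Nat.mod_eq_of_lt (by omega)

private lemma endAt {n a b s : ℕ} (hn : 2 ≤ n) (ha : a < n) (hb : b < n) (hs : s < n)
    (hab : a ≠ b)
    (h1 : (s + n - a) % n < (b + n - a) % n)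
    (h2 : ¬ ((s + 1) % n + n - a) % n < (b + n - a) % n) :
    b = (s + 1) % n := by
  rcases Nat.lt_or_ge (s + 1) n with h | h
  · have hv : (s + 1) % n = s + 1 := Nat.mod_eq_of_lt h
    rw [hv]
    rw [hv] at h2
    rw [mval (by omega) ha hs, mval (by omega) ha hb] at h1
    rw [mval (by omega) ha (by omega : s + 1 < n), mval (by omega) ha hb] at h2
    split_ifs at h1 h2 <;> omega
  · have hv : (s + 1) % n = 0 := by
      have e : s + 1 = n := by omega
      rw [e, Nat.mod_self]
    rw [hv]
    rw [hv] at h2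
    rw [mval (by omega) ha hs, mval (by omega) ha hb] at h1
    rw [mval (by omega) ha (by omega : 0 < n), mval (by omega) ha hb] at h2
    split_ifs at h1 h2 <;> omega

private lemma startAt {n a b s : ℕ} (hn : 2 ≤ n) (ha : a < n) (hb : b < n) (hs : s < n)
    (hab : a ≠ b)
    (h1 : ¬ (s + n - a) % n < (b + n - a) % n)
    (h2 : ((s + 1) % n + n - a) % n < (b + n - a) % n) :
    a = (s + 1) % n := by
  rcases Nat.lt_or_ge (s + 1) n with h | h
  · have hv : (s + 1) % n = s + 1 := Nat.mod_eq_of_lt h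
    rw [hv]
    rw [hv] at h2
    rw [mval (by omega) ha hs, mval (by omega) ha hb] at h1
    rw [mval (by omega) ha (by omega : s + 1 < n), mval (by omega) ha hb] at h2
    split_ifs at h1 h2 <;> omega
  · have hv : (s + 1) % n = 0 := by
      have e : s + 1 = n := by omega
      rw [e, Nat.mod_self]
    rw [hv]
    rw [hv] at h2
    rw [mval (by omega) ha hs, mval (by omega) ha hb] at h1
    rw [mval (by omega) ha (by omega : 0 < n), mval (by omega) ha hb] at h2
    split_ifs at h1 h2 <;> omega

private lemma covSelf {n a b : ℕ} (hn : 0 < n) (ha : a < n) (hb : b < n) (hab : a ≠ b) :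
    (a + n - a) % n < (b + n - a) % n := by
  have e : a + n - a = n := by omega
  rw [e, Nat.mod_self, mval hn ha hb]
  split_ifs <;> omega

private lemma covPrev {n a s : ℕ} (hn : 2 ≤ n) (ha : a < n) (hs : s < n)
    (hav : a ≠ (s + 1) % n) :
    (s + n - a) % n < ((s + 1) % n + n - a) % n := by
  rcases Nat.lt_or_ge (s + 1) n with h | h
  · have hv : (s + 1) % n = s + 1 := Nat.mod_eq_of_lt h
    rw [hv] at hav ⊢
    rw [mval (by omega) ha hs, mval (by omega) ha (by omega : s + 1 < n)]
    split_ifs <;> omega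
  · have hv : (s + 1) % n = 0 := by
      have e : s + 1 = n := by omega
      rw [e, Nat.mod_self]
    rw [hv] at hav ⊢
    rw [mval (by omega) ha hs, mval (by omega) ha (by omega : 0 < n)]
    split_ifs <;> omega

private lemma notCovPrev {n b s : ℕ} (hn : 0 < n) (hb : b < n) (hs : s < n) :
    ¬ (s + n - (s + 1) % n) % n < (b + n - (s + 1) % n) % n := by
  have hR : (b + n - (s + 1) % n) % n < n := Nat.mod_lt _ hn
  have hL : (s + n - (s + 1) % n) % n = n - 1 := by
    rcases Nat.lt_or_ge (s + 1) n with h | h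
    · rw [Nat.mod_eq_of_lt h]
      have e : s + n - (s + 1) = n - 1 := by omega
      rw [e, Nat.mod_eq_of_lt (by omega)]
    · have e : s + 1 = n := by omega
      rw [e, Nat.mod_self]
      have e2 : s + n - 0 = s + n := by omega
      rw [e2, Nat.add_mod_right, Nat.mod_eq_of_lt hs]
      omega
  omega

private lemma tour_surj {n : ℕ} {q : ℕ → ℕ} (hq : IsTour n q) {v : ℕ} (hv : v < n) :
    ∃ k, k < n ∧ q k = v := by
  obtain ⟨hn, hlt, hinj⟩ := hq
  have := Finset.surj_on_of_inj_on_of_card_le (s := Finset.range n) (t := Finset.range n)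
    (f := fun i _ => q i)
    (fun a ha => Finset.mem_range.mpr (hlt a (Finset.mem_range.mp ha)))
    (fun a₁ a₂ ha₁ ha₂ h => hinj a₁ a₂ (Finset.mem_range.mp ha₁) (Finset.mem_range.mp ha₂) h)
    le_rfl v (Finset.mem_range.mpr hv)
  obtain ⟨k, hk, he⟩ := this
  exact ⟨k, Finset.mem_range.mp hk, he.symm⟩

private lemma step {n : ℕ} (hn : 2 ≤ n) {q : ℕ → ℕ} {c : ℕ → Bool} (hq : IsTour n q)
    {s : ℕ} (hs : s < n)
    (d0 : tourDepth n q c s = 1) (d1 : tourDepth n q c ((s + 1) % n) = 1) :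
    (∃ j, j < n ∧ covP n q c j ((s + 1) % n) ∧ arcA n q c j = (s + 1) % n) ∧
    (∃ i, i < n ∧ covP n q c i s ∧ arcB n q c i = (s + 1) % n) := by
  have hn0 : 0 < n := by omega
  have hv : (s + 1) % n < n := Nat.mod_lt _ hn0
  have hA : ∀ i, i < n → arcA n q c i < n := by
    intro i hi
    unfold arcA
    split
    · exact hq.2.1 _ hi
    · exact hq.2.1 _ (Nat.mod_lt _ hn0)
  have hB : ∀ i, i < n → arcB n q c i < n := by
    intro i hi
    unfold arcB
    split
    · exact hq.2.1 _ (Nat.mod_lt _ hn0)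
    · exact hq.2.1 _ hi
  have hne : ∀ i, i < n → i ≠ (i + 1) % n := by
    intro i hi
    rcases Nat.lt_or_ge (i + 1) n with h | h
    · rw [Nat.mod_eq_of_lt h]; omega
    · have e : i + 1 = n := by omega
      rw [e, Nat.mod_self]; omega
  have hAB : ∀ i, i < n → arcA n q c i ≠ arcB n q c i := by
    intro i hi
    have hqne : q i ≠ q ((i + 1) % n) := fun h =>
      hne i hi (hq.2.2 i ((i + 1) % n) hi (Nat.mod_lt _ hn0) h)
    unfold arcA arcB
    split
    · exact hqne
    · exact fun h => hqne h.symm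
  -- unique cover of s
  have hc0 : ((Finset.range n).filter (fun i => covP n q c i s)).card = 1 := by
    rw [← depth_eq]; exact d0
  obtain ⟨x0, hx0⟩ := Finset.card_eq_one.mp hc0
  have x0mem : x0 ∈ (Finset.range n).filter (fun i => covP n q c i s) := by
    rw [hx0]; exact Finset.mem_singleton_self x0
  have hx0n : x0 < n := Finset.mem_range.mp (Finset.mem_filter.mp x0mem).1
  have hx0c : covP n q c x0 s := (Finset.mem_filter.mp x0mem).2
  have uniq0 : ∀ i, i < n → covP n q c i s → i = x0 := by
    intro i hi hci
    have : i ∈ (Finset.range n).filter (fun i => covP n q c i s) :=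
      Finset.mem_filter.mpr ⟨Finset.mem_range.mpr hi, hci⟩
    rwa [hx0, Finset.mem_singleton] at this
  -- unique cover of (s+1)%n
  have hc1 : ((Finset.range n).filter (fun i => covP n q c i ((s + 1) % n))).card = 1 := by
    rw [← depth_eq]; exact d1
  obtain ⟨x1, hx1⟩ := Finset.card_eq_one.mp hc1
  have x1mem : x1 ∈ (Finset.range n).filter (fun i => covP n q c i ((s + 1) % n)) := by
    rw [hx1]; exact Finset.mem_singleton_self x1
  have hx1n : x1 < n := Finset.mem_range.mp (Finset.mem_filter.mp x1mem).1
  have hx1c : covP n q c x1 ((s + 1) % n) := (Finset.mem_filter.mp x1mem).2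
  have uniq1 : ∀ i, i < n → covP n q c i ((s + 1) % n) → i = x1 := by
    intro i hi hci
    have : i ∈ (Finset.range n).filter (fun i => covP n q c i ((s + 1) % n)) :=
      Finset.mem_filter.mpr ⟨Finset.mem_range.mpr hi, hci⟩
    rwa [hx1, Finset.mem_singleton] at this
  obtain ⟨k, hkn, hqk⟩ := tour_surj ⟨hn0, hq.2.1, hq.2.2⟩ hv
  have hk_cases : arcA n q c k = (s + 1) % n ∨ arcB n q c k = (s + 1) % n := by
    unfold arcA arcB
    cases hck : c k
    · exact Or.inr (by simp [hqk])
    · exact Or.inl (by simp [hqk])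
  constructor
  · rcases hk_cases with h | h
    · refine ⟨k, hkn, ?_, h⟩
      unfold covP
      rw [h]
      exact covSelf hn0 hv (hB k hkn) (h ▸ (hAB k hkn)).symm.symm
    · have hcovks : covP n q c k s := by
        unfold covP
        rw [h]
        exact covPrev hn (hA k hkn) hs (fun e => hAB k hkn (e.trans h.symm))
      have hnotkv : ¬ covP n q c k ((s + 1) % n) := by
        unfold covP
        rw [h]
        exact lt_irrefl _
      have hx1s : ¬ covP n q c x1 s := by
        intro hc
        have e1 : x1 = x0 := uniq0 x1 hx1n hc
        have e2 : k = x0 := uniq0 k hkn hcovks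
        have e : x1 = k := e1.trans e2.symm
        exact hnotkv (e ▸ hx1c)
      have hAx1 : arcA n q c x1 = (s + 1) % n :=
        startAt hn (hA x1 hx1n) (hB x1 hx1n) hs (hAB x1 hx1n) hx1s hx1c
      exact ⟨x1, hx1n, hx1c, hAx1⟩
  · rcases hk_cases with h | h
    · have hcovkv : covP n q c k ((s + 1) % n) := by
        unfold covP
        rw [h]
        exact covSelf hn0 hv (hB k hkn) (h ▸ (hAB k hkn)).symm.symm
      have hknots : ¬ covP n q c k s := by
        unfold covP
        rw [h]
        exact notCovPrev hn0 (hB k hkn) hs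
      have hx0v : ¬ covP n q c x0 ((s + 1) % n) := by
        intro hc
        have e1 : x0 = x1 := uniq1 x0 hx0n hc
        have e2 : k = x1 := uniq1 k hkn hcovkv
        have e : x0 = k := e1.trans e2.symm
        exact hknots (e ▸ hx0c)
      have hBx0 : arcB n q c x0 = (s + 1) % n :=
        endAt hn (hA x0 hx0n) (hB x0 hx0n) hs (hAB x0 hx0n) hx0c hx0v
      exact ⟨x0, hx0n, hx0c, hBx0⟩
    · refine ⟨k, hkn, ?_, h⟩
      unfold covP
      rw [h]
      exact covPrev hn (hA k hkn) hs (fun e => hAB k hkn (e.trans h.symm))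

private lemma key_s17 {n : ℕ} (hn : 2 ≤ n) {q : ℕ → ℕ} {c : ℕ → Bool} (hq : IsTour n q)
    {s : ℕ} (hs : s < n)
    (d0 : tourDepth n q c s = 1) (d1 : tourDepth n q c ((s + 1) % n) = 1)
    (d2 : tourDepth n q c ((s + 2) % n) = 1) :
    ∃ j, j < n ∧ ((q j = (s + 1) % n ∧ q ((j + 1) % n) = (s + 2) % n) ∨
      (q j = (s + 2) % n ∧ q ((j + 1) % n) = (s + 1) % n)) := by
  have hn0 : 0 < n := by omega
  have hv : (s + 1) % n < n := Nat.mod_lt _ hn0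
  have hvv : ((s + 1) % n + 1) % n = (s + 2) % n := by
    have e : s + 1 + 1 = s + 2 := by omega
    rw [Nat.mod_add_mod, e]
  obtain ⟨⟨j, hjn, hjcov, hjA⟩, _⟩ := step hn hq hs d0 d1
  have d2' : tourDepth n q c (((s + 1) % n + 1) % n) = 1 := by rw [hvv]; exact d2
  obtain ⟨_, ⟨i, hin, hicov, hiB⟩⟩ := step hn hq hv d1 d2'
  rw [hvv] at hiB
  -- uniqueness of the cover of (s+1)%n gives i = j
  have hc1 : ((Finset.range n).filter (fun i => covP n q c i ((s + 1) % n))).card = 1 := by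
    rw [← depth_eq]; exact d1
  obtain ⟨x, hx⟩ := Finset.card_eq_one.mp hc1
  have uj : j = x := by
    have : j ∈ (Finset.range n).filter (fun i => covP n q c i ((s + 1) % n)) :=
      Finset.mem_filter.mpr ⟨Finset.mem_range.mpr hjn, hjcov⟩
    rwa [hx, Finset.mem_singleton] at this
  have ui : i = x := by
    have : i ∈ (Finset.range n).filter (fun i => covP n q c i ((s + 1) % n)) :=
      Finset.mem_filter.mpr ⟨Finset.mem_range.mpr hin, hicov⟩
    rwa [hx, Finset.mem_singleton] at this
  have hij : i = j := ui.trans uj.symm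
  rw [hij] at hiB
  refine ⟨j, hjn, ?_⟩
  unfold arcA at hjA
  unfold arcB at hiB
  cases hck : c j
  · rw [hck] at hjA hiB
    simp at hjA hiB
    exact Or.inr ⟨hiB, hjA⟩
  · rw [hck] at hjA hiB
    simp at hjA hiB
    exact Or.inl ⟨hjA, hiB⟩

/-- for edge-disjoint odd-depth tours, any run of consecutive
segments of depth 1 w.r.t. both tours (a 1-section) has length at most 2,
i.e. there are no three consecutive such segments. -/
theorem stmt_17 (n : ℕ) (q1 q2 : ℕ → ℕ) (c1 c2 : ℕ → Bool)
    (h1 : IsTour n q1) (h2 : IsTour n q2)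
    (hd : ToursEdgeDisjoint n q1 q2)
    (hodd1 : ∀ s, s < n → Odd (tourDepth n q1 c1 s))
    (hodd2 : ∀ s, s < n → Odd (tourDepth n q2 c2 s)) :
    ∀ s, s < n →
      ¬ (tourDepth n q1 c1 s = 1 ∧ tourDepth n q2 c2 s = 1 ∧
         tourDepth n q1 c1 ((s + 1) % n) = 1 ∧ tourDepth n q2 c2 ((s + 1) % n) = 1 ∧
         tourDepth n q1 c1 ((s + 2) % n) = 1 ∧ tourDepth n q2 c2 ((s + 2) % n) = 1) := by
  intro s hs hcon
  obtain ⟨h1s, h2s, h1t, h2t, h1u, h2u⟩ := hcon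
  rcases Nat.lt_or_ge n 2 with hn | hn
  · have hn1 : n = 1 := by omega
    subst hn1
    simp [tourDepth, Nat.mod_one] at h1s
  · obtain ⟨j1, hj1, ho1⟩ := key_s17 hn h1 hs h1s h1t h1u
    obtain ⟨j2, hj2, ho2⟩ := key_s17 hn h2 hs h2s h2t h2u
    refine hd j1 j2 hj1 hj2 ?_
    rcases ho1 with ⟨e1, e2⟩ | ⟨e1, e2⟩ <;> rcases ho2 with ⟨f1, f2⟩ | ⟨f1, f2⟩ <;>
      first
        | exact Or.inl ⟨e1.trans f1.symm, e2.trans f2.symm⟩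
        | exact Or.inr ⟨e1.trans f2.symm, e2.trans f1.symm⟩
end
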